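/- arXiv:1810.11678 — 14 statements merged into one kernel-verified Lean document; each statement's English description precedes it below -/
import Mathlib

section
/- Let A be a 2×2 complex matrix whose eigenvalues, counted with multiplicity, are a and b (equivalently, tr(A) = a + b and det(A) = ab). Set p = sqrt(tr(AᴴA) − |a|² − |b|²) (this quantity under the square root is nonnegative). Then the numerical range of A equals the closed elliptical disk with foci a and b and minor axis of length p; explicitly, W(A) = { z ∈ ℂ : |z − a| + |z − b| ≤ sqrt(|a − b|² + p²) }. -/
open Complex in

lemma sqrt_add_sqrt_le (P1 P2 M : ℝ) (h1 : 0 ≤ P1) (h2 : 0 ≤ P2)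
    (hG : P1 + P2 ≤ M) (hP : 4*(P1*P2) ≤ (M - P1 - P2)^2) :
    Real.sqrt P1 + Real.sqrt P2 ≤ Real.sqrt M := by
  apply Real.le_sqrt_of_sq_le
  have r1 := Real.sq_sqrt h1
  have r2 := Real.sq_sqrt h2
  have hm : Real.sqrt P1 * Real.sqrt P2 ≤ (M - P1 - P2)/2 := by
    rw [← Real.sqrt_mul h1]
    have hle : P1 * P2 ≤ ((M-P1-P2)/2)^2 := by nlinarith
    calc Real.sqrt (P1*P2) ≤ Real.sqrt (((M-P1-P2)/2)^2) := Real.sqrt_le_sqrt hle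
      _ = (M-P1-P2)/2 := Real.sqrt_sq (by linarith)
  nlinarith [hm, r1, r2]

lemma fwd_real (D1 D2 W1 W2 t nc : ℝ) (ht : 0 ≤ t) (hs : t ≤ 1) (hnc : 0 ≤ nc)
    (hW : W1^2 + W2^2 = nc*t*(1-t)) :
    Real.sqrt ((D1*(1-t)+W1)^2 + (D2*(1-t)+W2)^2) + Real.sqrt ((D1*t-W1)^2+(D2*t-W2)^2)
      ≤ Real.sqrt (D1^2 + D2^2 + nc) := by
  have e1 : (D2*W1-D1*W2)^2 = (D1^2+D2^2)*(W1^2+W2^2) - (D1*W1+D2*W2)^2 := by ring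
  rw [hW] at e1
  have hQge : 0 ≤ 2*((D1^2+D2^2)*(t*(1-t)) - nc*t*(1-t) + (2*t-1)*(D1*W1+D2*W2)) + nc := by
    rcases eq_or_lt_of_le hnc with h0 | hpos
    · obtain rfl := h0.symm
      have hW1 : W1 = 0 := by nlinarith [sq_nonneg W1, sq_nonneg W2]
      have hW2 : W2 = 0 := by nlinarith [sq_nonneg W1, sq_nonneg W2]
      subst hW1; subst hW2
      nlinarith [mul_nonneg (add_nonneg (sq_nonneg D1) (sq_nonneg D2))
        (mul_nonneg ht (by linarith : (0:ℝ) ≤ 1-t))]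
    · nlinarith [sq_nonneg (2*(D1*W1+D2*W2) + nc*(2*t-1)), e1, sq_nonneg (D2*W1-D1*W2),
        mul_pos hpos hpos]
  apply sqrt_add_sqrt_le _ _ _ (by positivity) (by positivity)
  · nlinarith [hQge, hW]
  · have key1 : 4*(D2*W1-D1*W2)^2 ≤
        4*nc*((D1^2+D2^2)*(t*(1-t)) - nc*t*(1-t) + (2*t-1)*(D1*W1+D2*W2)) + nc^2 := by
      nlinarith [sq_nonneg (2*(D1*W1+D2*W2)+nc*(2*t-1)), e1]
    have hGQ : (D1^2+D2^2+nc) - ((D1*(1-t)+W1)^2 + (D2*(1-t)+W2)^2) - ((D1*t-W1)^2+(D2*t-W2)^2)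
        = 2*((D1^2+D2^2)*(t*(1-t)) - nc*t*(1-t) + (2*t-1)*(D1*W1+D2*W2)) + nc := by
      linear_combination (-2 : ℝ)*hW
    have hQid : ((D1*(1-t)+W1)^2 + (D2*(1-t)+W2)^2) * ((D1*t-W1)^2+(D2*t-W2)^2)
        = ((D1^2+D2^2)*(t*(1-t)) - (W1^2+W2^2) + (2*t-1)*(D1*W1+D2*W2))^2
          + (D2*W1-D1*W2)^2 := by ring
    rw [hGQ, hQid, hW]
    set Q : ℝ := (D1^2+D2^2)*(t*(1-t)) - nc*t*(1-t) + (2*t-1)*(D1*W1+D2*W2) with hQdef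
    set J : ℝ := D2*W1-D1*W2 with hJdef
    clear_value Q J
    clear hQdef hJdef hGQ hQid e1 hW hQge
    nlinarith [key1]


lemma abs_eq_sqrt (ξ : ℂ) : ‖ξ‖ = Real.sqrt (ξ.re^2 + ξ.im^2) := by
  rw [Complex.norm_def, Complex.normSq_apply]; ring_nf

lemma scalar_forward (a b c α β : ℂ)
    (h : ‖α‖ ^ 2 + ‖β‖ ^ 2 = 1) :
    ‖(a*(α*(starRingEnd ℂ) α) + c*(β*(starRingEnd ℂ) α) + b*(β*(starRingEnd ℂ) β)) - a‖
      + ‖(a*(α*(starRingEnd ℂ) α) + c*(β*(starRingEnd ℂ) α) + b*(β*(starRingEnd ℂ) β)) - b‖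
      ≤ Real.sqrt (‖a-b‖^2 + ‖c‖ ^ 2) := by
  have hts : Complex.normSq α + Complex.normSq β = 1 := by
    rw [← Complex.sq_norm, ← Complex.sq_norm]; exact h
  set z := a*(α*(starRingEnd ℂ) α) + c*(β*(starRingEnd ℂ) α) + b*(β*(starRingEnd ℂ) β) with hz
  set t := Complex.normSq α with ht'
  set s := Complex.normSq β with hs'
  have hc : (t:ℂ) + (s:ℂ) = 1 := by exact_mod_cast hts
  set W := c*(β*(starRingEnd ℂ) α) with hW'
  set D := b - a with hD'
  have hza : z - a = D*(s:ℂ) + W := by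
    rw [hz, hW', hD', Complex.mul_conj, Complex.mul_conj]
    linear_combination a * hc
  have hzb : b - z = D*(t:ℂ) - W := by
    rw [hz, hW', hD', Complex.mul_conj, Complex.mul_conj]
    linear_combination (-b) * hc
  have h1 : ‖z - a‖ = Real.sqrt ((D.re*s + W.re)^2 + (D.im*s + W.im)^2) := by
    rw [hza, abs_eq_sqrt]; simp
  have h2 : ‖z - b‖ = Real.sqrt ((D.re*t - W.re)^2 + (D.im*t - W.im)^2) := by
    rw [norm_sub_rev, hzb, abs_eq_sqrt]; simp
  have h3 : Real.sqrt (‖a-b‖^2 + ‖c‖ ^2)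
      = Real.sqrt (D.re^2 + D.im^2 + Complex.normSq c) := by
    rw [norm_sub_rev a b, ← hD', Complex.sq_norm, Complex.sq_norm, Complex.normSq_apply]
    ring_nf
  have hWn : W.re^2 + W.im^2 = Complex.normSq c * t * (1 - t) := by
    have : Complex.normSq W = Complex.normSq c * (s * t) := by
      rw [hW', Complex.normSq_mul, Complex.normSq_mul, Complex.normSq_conj, ← ht', ← hs']
    have h4 : W.re^2 + W.im^2 = Complex.normSq W := by rw [Complex.normSq_apply]; ring
    have h5 : s = 1 - t := by linarith
    rw [h4, this, h5]; ring
  have hs1 : s = 1 - t := by linarith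
  rw [h1, h2, h3, hs1]
  exact fwd_real D.re D.im W.re W.im t (Complex.normSq c) (Complex.normSq_nonneg α)
    (by nlinarith [Complex.normSq_nonneg β]) (Complex.normSq_nonneg c) hWn

lemma scalar_backward_aux (a b c z : ℂ) (nc d2 K t : ℝ)
    (hnc' : nc = Complex.normSq c) (hd2' : d2 = Complex.normSq (a-b))
    (hK' : K = (z-b).re*(a-b).re + (z-b).im*(a-b).im)
    (ht0 : 0 ≤ t) (ht1 : t ≤ 1)
    (hφt : Complex.normSq (z-b) - (2*K+nc)*t + (d2+nc)*t^2 = 0) :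
    ∃ α β : ℂ, ‖α‖ ^ 2 + ‖β‖ ^ 2 = 1 ∧
      z = a*(α*(starRingEnd ℂ) α) + c*(β*(starRingEnd ℂ) α) + b*(β*(starRingEnd ℂ) β) := by
  set w := z - (a*(t:ℂ) + b*(1-(t:ℂ))) with hw'
  have hwn : Complex.normSq w = nc*t*(1-t) := by
    have hid2 : Complex.normSq w = Complex.normSq (z-b) - 2*K*t + d2*t^2 := by
      rw [hw', hd2', hK']
      simp only [Complex.normSq_apply, Complex.sub_re, Complex.sub_im, Complex.add_re,
        Complex.add_im, Complex.mul_re, Complex.mul_im, Complex.ofReal_re, Complex.ofReal_im,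
        Complex.one_re, Complex.one_im]
      ring
    nlinarith [hid2, hφt]
  set α : ℂ := ((Real.sqrt t : ℝ) : ℂ) with hα'
  have hαα : α * (starRingEnd ℂ) α = (t:ℂ) := by
    rw [hα', Complex.conj_ofReal, ← Complex.ofReal_mul, Real.mul_self_sqrt ht0]
  have hαabs : ‖α‖ ^ 2 = t := by
    rw [hα', Complex.sq_norm, Complex.normSq_ofReal, Real.mul_self_sqrt ht0]
  by_cases hw0 : w = 0
  · refine ⟨α, ((Real.sqrt (1-t) : ℝ) : ℂ), ?_, ?_⟩
    · rw [hαabs, Complex.sq_norm, Complex.normSq_ofReal, Real.mul_self_sqrt (by linarith)]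
      ring
    · have hβ0 : c*(((Real.sqrt (1-t) : ℝ) : ℂ)*(starRingEnd ℂ) α) = 0 := by
        apply Complex.normSq_eq_zero.mp
        rw [Complex.normSq_mul, Complex.normSq_mul, Complex.normSq_conj]
        rw [hα', Complex.normSq_ofReal, Complex.normSq_ofReal]
        rw [Real.mul_self_sqrt (by linarith), Real.mul_self_sqrt ht0]
        have h8 : Complex.normSq w = 0 := by rw [hw0]; simp
        rw [← hnc'] at *
        nlinarith [hwn, h8]
      rw [hβ0]
      have hw0' : z - (a*(t:ℂ) + b*(1-(t:ℂ))) = 0 := by rw [← hw']; exact hw0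
      rw [hαα]
      have hββ : (((Real.sqrt (1-t) : ℝ) : ℂ))*(starRingEnd ℂ) (((Real.sqrt (1-t) : ℝ) : ℂ)) = ((1-t : ℝ) : ℂ) := by
        rw [Complex.conj_ofReal, ← Complex.ofReal_mul, Real.mul_self_sqrt (by linarith)]
      rw [hββ]
      push_cast
      linear_combination hw0'
  · have hwpos : 0 < Complex.normSq w := by
      rcases eq_or_lt_of_le (Complex.normSq_nonneg w) with h0 | h0
      · exact absurd (Complex.normSq_eq_zero.mp h0.symm) hw0
      · exact h0
    have hncn : 0 ≤ nc := by rw [hnc']; exact Complex.normSq_nonneg c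
    have hncpos : 0 < nc := by nlinarith [hwn, hwpos, mul_nonneg ht0 (by linarith : (0:ℝ) ≤ 1-t)]
    have htpos : 0 < t := by nlinarith [hwn, hwpos, mul_nonneg ht0 (by linarith : (0:ℝ) ≤ 1-t)]
    have hcne : c ≠ 0 := by
      intro hc
      rw [hc] at hnc'; simp at hnc'
      rw [hnc'] at hncpos; exact lt_irrefl 0 hncpos
    have hsqtpos : 0 < Real.sqrt t := Real.sqrt_pos.mpr htpos
    have hsqtne : ((Real.sqrt t : ℝ) : ℂ) ≠ 0 := by
      simp only [ne_eq, Complex.ofReal_eq_zero]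
      exact ne_of_gt hsqtpos
    have hnsd : Complex.normSq (w / (c * ((Real.sqrt t : ℝ) : ℂ))) = 1 - t := by
      rw [Complex.normSq_div, Complex.normSq_mul, Complex.normSq_ofReal,
        Real.mul_self_sqrt ht0, hwn, ← hnc']
      rw [div_eq_iff (by positivity)]
      ring
    refine ⟨α, w / (c * ((Real.sqrt t : ℝ) : ℂ)), ?_, ?_⟩
    · rw [hαabs, Complex.sq_norm, hnsd]; ring
    · have hβ : c*((w / (c * ((Real.sqrt t : ℝ) : ℂ)))*(starRingEnd ℂ) α) = w := by
        rw [hα', Complex.conj_ofReal]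
        field_simp
      have hββ : (w / (c * ((Real.sqrt t : ℝ) : ℂ)))*(starRingEnd ℂ) (w / (c * ((Real.sqrt t : ℝ) : ℂ))) = ((1-t : ℝ):ℂ) := by
        rw [Complex.mul_conj, hnsd]
      rw [hαα, hβ, hββ]
      have hwdef : z - (a*(t:ℂ) + b*(1-(t:ℂ))) = w := rfl
      push_cast
      linear_combination hwdef

lemma scalar_backward (a b c z : ℂ)
    (h : ‖z-a‖ + ‖z-b‖ ≤ Real.sqrt (‖a-b‖^2 + ‖c‖ ^2)) :
    ∃ α β : ℂ, ‖α‖ ^ 2 + ‖β‖ ^ 2 = 1 ∧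
      z = a*(α*(starRingEnd ℂ) α) + c*(β*(starRingEnd ℂ) α) + b*(β*(starRingEnd ℂ) β) := by
  set nc := Complex.normSq c with hnc'
  set d2 := Complex.normSq (a-b) with hd2'
  have hncn : 0 ≤ nc := Complex.normSq_nonneg _
  have hd2n : 0 ≤ d2 := Complex.normSq_nonneg _
  rw [Complex.sq_norm, Complex.sq_norm] at h
  rcases eq_or_lt_of_le (by positivity : (0:ℝ) ≤ d2 + nc) with hL0 | hLpos
  · -- degenerate
    have hd20 : d2 = 0 := by linarith
    have hnc0 : nc = 0 := by linarith
    have hab : a = b := by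
      have h9 : Complex.normSq (a-b) = 0 := by rw [← hd2']; exact hd20
      exact sub_eq_zero.mp (Complex.normSq_eq_zero.mp h9)
    have hc0 : c = 0 := Complex.normSq_eq_zero.mp (by rw [← hnc']; exact hnc0)
    have hza : z = a := by
      have h0 : Real.sqrt (d2 + nc) = 0 := by rw [← hL0]; exact Real.sqrt_zero
      have := norm_nonneg (z-a)
      have := norm_nonneg (z-b)
      have hza0 : ‖z-a‖ = 0 := by linarith [h]
      have := norm_eq_zero.mp hza0
      linear_combination this
    refine ⟨1, 0, by simp, by simp [hza, hc0]⟩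
  · -- main case
    set K := (z-b).re*(a-b).re + (z-b).im*(a-b).im with hK'
    set L := Real.sqrt (d2 + nc) with hL'
    have hLsq : L^2 = d2 + nc := Real.sq_sqrt (by positivity)
    have hLn : 0 < L := Real.sqrt_pos.mpr hLpos
    have hida : Complex.normSq (z-a) = Complex.normSq (z-b) + d2 - 2*K := by
      rw [hd2', hK']
      simp only [Complex.normSq_apply, Complex.sub_re, Complex.sub_im]
      ring
    have hyn : (0:ℝ) ≤ ‖z-b‖ := norm_nonneg _
    have hxn : (0:ℝ) ≤ ‖z-a‖ := norm_nonneg _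
    have hx2 : ‖z-a‖^2 = Complex.normSq (z-a) := Complex.sq_norm _
    have hy2 : ‖z-b‖^2 = Complex.normSq (z-b) := Complex.sq_norm _
    have h1 : 2*L*‖z-b‖ ≤ nc + 2*K := by
      have hle : ‖z-a‖ ≤ L - ‖z-b‖ := by linarith
      have := mul_self_le_mul_self hxn hle
      nlinarith [this, hida, hLsq, hx2, hy2]
    have h2 : 2*K ≤ 2*d2 + nc := by
      have hle : ‖z-b‖ ≤ L - ‖z-a‖ := by linarith
      have := mul_self_le_mul_self hyn hle
      nlinarith [this, hida, hLsq, hx2, hy2, mul_nonneg (mul_nonneg (by norm_num : (0:ℝ)≤2) hLn.le) hxn]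
    have hK0 : 0 ≤ nc + 2*K := le_trans (by positivity) h1
    set t0 := (2*K + nc)/(2*(d2+nc)) with ht0'
    have ht00 : 0 ≤ t0 := by
      apply div_nonneg (by linarith) (by linarith)
    have ht01 : t0 ≤ 1 := by
      rw [ht0', div_le_one (by linarith)]; linarith
    set φ : ℝ → ℝ := fun t => Complex.normSq (z-b) - (2*K+nc)*t + (d2+nc)*t^2 with hφ'
    have hsq1 : 4*(d2+nc)*Complex.normSq (z-b) ≤ (nc+2*K)^2 := by
      have := mul_self_le_mul_self (by positivity : (0:ℝ) ≤ 2*L*‖z-b‖) h1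
      nlinarith [this, hLsq, hy2]
    have hφt0 : φ t0 ≤ 0 := by
      rw [hφ']
      have heq : Complex.normSq (z-b) - (2*K+nc)*t0 + (d2+nc)*t0^2
          = (4*(d2+nc)*Complex.normSq (z-b) - (nc+2*K)^2)/(4*(d2+nc)) := by
        rw [ht0']; field_simp; ring
      simp only []
      rw [heq]
      apply div_nonpos_of_nonpos_of_nonneg (by linarith) (by linarith)
    have hφ0 : 0 ≤ φ 0 := by
      rw [hφ']; simp [Complex.normSq_nonneg]
    have hcont : ContinuousOn φ (Set.Icc 0 t0) := by fun_prop
    have hmem : (0:ℝ) ∈ Set.Icc (φ t0) (φ 0) := ⟨hφt0, hφ0⟩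
    obtain ⟨t, htmem, hφt⟩ := intermediate_value_Icc' ht00 hcont hmem
    obtain ⟨ht0, htt0⟩ := htmem
    have ht1 : t ≤ 1 := le_trans htt0 ht01
    have hφt' : Complex.normSq (z-b) - (2*K+nc)*t + (d2+nc)*t^2 = 0 := hφt
    exact scalar_backward_aux a b c z nc d2 K t hnc' hd2' hK' ht0 (le_trans htt0 ht01) hφt'


lemma frob_identity (A : Matrix (Fin 2) (Fin 2) ℂ) (a b c v0 v1 : ℂ)
    (hn : v0 * (starRingEnd ℂ) v0 + v1 * (starRingEnd ℂ) v1 = 1)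
    (E00 : A 0 0 = a*v0*(starRingEnd ℂ) v0 - c*v0*v1 + b*((starRingEnd ℂ) v1)*v1)
    (E10 : A 1 0 = a*v1*(starRingEnd ℂ) v0 - c*v1*v1 - b*((starRingEnd ℂ) v0)*v1)
    (E01 : A 0 1 = a*v0*(starRingEnd ℂ) v1 + c*v0*v0 - b*((starRingEnd ℂ) v1)*v0)
    (E11 : A 1 1 = a*v1*(starRingEnd ℂ) v1 + c*v1*v0 + b*((starRingEnd ℂ) v0)*v0) :
    (starRingEnd ℂ) (A 0 0) * A 0 0 + (starRingEnd ℂ) (A 1 0) * A 1 0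
      + (starRingEnd ℂ) (A 0 1) * A 0 1 + (starRingEnd ℂ) (A 1 1) * A 1 1
      = a * (starRingEnd ℂ) a + b * (starRingEnd ℂ) b + c * (starRingEnd ℂ) c := by
  have cE00 := congrArg (starRingEnd ℂ) E00
  have cE10 := congrArg (starRingEnd ℂ) E10
  have cE01 := congrArg (starRingEnd ℂ) E01
  have cE11 := congrArg (starRingEnd ℂ) E11
  simp only [map_add, map_sub, _root_.map_mul, map_neg, Complex.conj_conj] at cE00 cE10 cE01 cE11
  linear_combination ((starRingEnd ℂ) (A 0 0))*E00 + ((starRingEnd ℂ) (A 1 0))*E10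
    + ((starRingEnd ℂ) (A 0 1))*E01 + ((starRingEnd ℂ) (A 1 1))*E11
    + (a*v0*(starRingEnd ℂ) v0 - c*v0*v1 + b*((starRingEnd ℂ) v1)*v1)*cE00
    + (a*v1*(starRingEnd ℂ) v0 - c*v1*v1 - b*((starRingEnd ℂ) v0)*v1)*cE10
    + (a*v0*(starRingEnd ℂ) v1 + c*v0*v0 - b*((starRingEnd ℂ) v1)*v0)*cE01
    + (a*v1*(starRingEnd ℂ) v1 + c*v1*v0 + b*((starRingEnd ℂ) v0)*v0)*cE11
    + ((v0*(starRingEnd ℂ) v0 + v1*(starRingEnd ℂ) v1)+1)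
        *(a*(starRingEnd ℂ) a + b*(starRingEnd ℂ) b + c*(starRingEnd ℂ) c)*hn


lemma value_forward (A : Matrix (Fin 2) (Fin 2) ℂ) (a b c v0 v1 x0 x1 : ℂ)
    (hn : v0 * (starRingEnd ℂ) v0 + v1 * (starRingEnd ℂ) v1 = 1)
    (hxc : x0 * (starRingEnd ℂ) x0 + x1 * (starRingEnd ℂ) x1 = 1)
    (E00 : A 0 0 = a*v0*(starRingEnd ℂ) v0 - c*v0*v1 + b*((starRingEnd ℂ) v1)*v1)
    (E10 : A 1 0 = a*v1*(starRingEnd ℂ) v0 - c*v1*v1 - b*((starRingEnd ℂ) v0)*v1)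
    (E01 : A 0 1 = a*v0*(starRingEnd ℂ) v1 + c*v0*v0 - b*((starRingEnd ℂ) v1)*v0)
    (E11 : A 1 1 = a*v1*(starRingEnd ℂ) v1 + c*v1*v0 + b*((starRingEnd ℂ) v0)*v0) :
    ∃ α β : ℂ, (α * (starRingEnd ℂ) α + β * (starRingEnd ℂ) β = 1) ∧
      (A 0 0 * x0 + A 0 1 * x1) * (starRingEnd ℂ) x0 + (A 1 0 * x0 + A 1 1 * x1) * (starRingEnd ℂ) x1
        = a*(α*(starRingEnd ℂ) α) + c*(β*(starRingEnd ℂ) α) + b*(β*(starRingEnd ℂ) β) := by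
  refine ⟨x0 * (starRingEnd ℂ) v0 + x1 * (starRingEnd ℂ) v1, -(x0 * v1) + x1 * v0, ?_, ?_⟩
  · simp only [map_add, _root_.map_mul, map_neg, Complex.conj_conj]
    linear_combination (v0*(starRingEnd ℂ) v0 + v1*(starRingEnd ℂ) v1)*hxc + hn
  · simp only [map_add, _root_.map_mul, map_neg, Complex.conj_conj]
    rw [E00, E01, E10, E11]
    ring


lemma value_backward (A : Matrix (Fin 2) (Fin 2) ℂ) (a b c v0 v1 α β z : ℂ)
    (hn : v0 * (starRingEnd ℂ) v0 + v1 * (starRingEnd ℂ) v1 = 1)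
    (hαβ : α * (starRingEnd ℂ) α + β * (starRingEnd ℂ) β = 1)
    (hsb : z = a*(α*(starRingEnd ℂ) α) + c*(β*(starRingEnd ℂ) α) + b*(β*(starRingEnd ℂ) β))
    (E00 : A 0 0 = a*v0*(starRingEnd ℂ) v0 - c*v0*v1 + b*((starRingEnd ℂ) v1)*v1)
    (E10 : A 1 0 = a*v1*(starRingEnd ℂ) v0 - c*v1*v1 - b*((starRingEnd ℂ) v0)*v1)
    (E01 : A 0 1 = a*v0*(starRingEnd ℂ) v1 + c*v0*v0 - b*((starRingEnd ℂ) v1)*v0)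
    (E11 : A 1 1 = a*v1*(starRingEnd ℂ) v1 + c*v1*v0 + b*((starRingEnd ℂ) v0)*v0) :
    ∃ x0 x1 : ℂ, (x0 * (starRingEnd ℂ) x0 + x1 * (starRingEnd ℂ) x1 = 1) ∧
      z = (A 0 0 * x0 + A 0 1 * x1) * (starRingEnd ℂ) x0
          + (A 1 0 * x0 + A 1 1 * x1) * (starRingEnd ℂ) x1 := by
  refine ⟨α*v0 - β*(starRingEnd ℂ) v1, α*v1 + β*(starRingEnd ℂ) v0, ?_, ?_⟩
  · simp only [map_add, map_sub, _root_.map_mul, Complex.conj_conj]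
    linear_combination (v0*(starRingEnd ℂ) v0 + v1*(starRingEnd ℂ) v1)*hαβ + hn
  · simp only [map_add, map_sub, _root_.map_mul, Complex.conj_conj]
    rw [E00, E01, E10, E11]
    linear_combination hsb - ((v0*(starRingEnd ℂ) v0 + v1*(starRingEnd ℂ) v1)+1)
      *(a*(α*(starRingEnd ℂ) α) + c*(β*(starRingEnd ℂ) α) + b*(β*(starRingEnd ℂ) β))*hn


open Matrix

/-- The numerical range of a 2×2 complex matrix: the set of values ⟨Ax, x⟩
(standard Hermitian inner product, conjugate on the second slot) over unit vectors x. -/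
noncomputable def numericalRange (A : Matrix (Fin 2) (Fin 2) ℂ) : Set ℂ :=
  {z : ℂ | ∃ x : Fin 2 → ℂ, (∑ i, ‖x i‖ ^ 2) = 1 ∧
    z = ∑ i, A.mulVec x i * (starRingEnd ℂ) (x i)}

theorem elliptical_range_theorem (A : Matrix (Fin 2) (Fin 2) ℂ) (a b : ℂ)
    (htr : A.trace = a + b) (hdet : A.det = a * b) :
    numericalRange A =
      {z : ℂ | ‖z - a‖ + ‖z - b‖ ≤
        Real.sqrt (‖a - b‖ ^ 2 +
          Real.sqrt ((Aᴴ * A).trace.re - ‖a‖ ^ 2 - ‖b‖ ^ 2) ^ 2)} := by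
  have htr' : A 0 0 + A 1 1 = a + b := by rw [Matrix.trace_fin_two] at htr; exact htr
  have hdet' : A 0 0 * A 1 1 - A 0 1 * A 1 0 = a * b := by
    rw [Matrix.det_fin_two] at hdet; exact hdet
  -- obtain a unit eigenvector for the eigenvalue a
  obtain ⟨v, hvne, hvv⟩ : ∃ v : Fin 2 → ℂ, v ≠ 0 ∧ (A - a • 1).mulVec v = 0 := by
    have h := (Matrix.exists_mulVec_eq_zero_iff (M := A - a • 1)).mpr ?_
    · obtain ⟨v, h1, h2⟩ := h; exact ⟨v, h1, h2⟩
    · rw [Matrix.det_fin_two]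
      simp [Matrix.one_apply]
      linear_combination hdet' - a * htr'
  obtain ⟨v0, v1, hn, hv0, hv1⟩ : ∃ v0 v1 : ℂ,
      (v0 * (starRingEnd ℂ) v0 + v1 * (starRingEnd ℂ) v1 = 1)
      ∧ A 0 0 * v0 + A 0 1 * v1 = a * v0 ∧ A 1 0 * v0 + A 1 1 * v1 = a * v1 := by
    have h0 := congrFun hvv 0
    have h1 := congrFun hvv 1
    simp [Matrix.mulVec, dotProduct, Fin.sum_univ_two, Matrix.one_apply, sub_mul] at h0 h1
    have hnz : Complex.normSq (v 0) + Complex.normSq (v 1) ≠ 0 := by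
      intro hc
      apply hvne
      have h00 : Complex.normSq (v 0) = 0 := by
        nlinarith [Complex.normSq_nonneg (v 0), Complex.normSq_nonneg (v 1)]
      have h11 : Complex.normSq (v 1) = 0 := by
        nlinarith [Complex.normSq_nonneg (v 0), Complex.normSq_nonneg (v 1)]
      funext i; fin_cases i
      · simpa using Complex.normSq_eq_zero.mp h00
      · simpa using Complex.normSq_eq_zero.mp h11
    set r : ℝ := Real.sqrt (Complex.normSq (v 0) + Complex.normSq (v 1)) with hr
    have hnn : (0:ℝ) ≤ Complex.normSq (v 0) + Complex.normSq (v 1) :=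
      add_nonneg (Complex.normSq_nonneg _) (Complex.normSq_nonneg _)
    have hrpos : 0 < r := Real.sqrt_pos.mpr (lt_of_le_of_ne hnn (Ne.symm hnz))
    have hrr : (r:ℝ) * r = Complex.normSq (v 0) + Complex.normSq (v 1) := Real.mul_self_sqrt hnn
    have hrne : (r:ℂ) ≠ 0 := by exact_mod_cast ne_of_gt hrpos
    refine ⟨v 0 / r, v 1 / r, ?_, by field_simp; linear_combination h0,
      by field_simp; linear_combination h1⟩
    have hsum : v 0 / r * (starRingEnd ℂ) (v 0 / r) + v 1 / r * (starRingEnd ℂ) (v 1 / r)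
        = (v 0 * (starRingEnd ℂ) (v 0) + v 1 * (starRingEnd ℂ) (v 1)) / ((r:ℂ) * r) := by
      rw [map_div₀, map_div₀, Complex.conj_ofReal]; field_simp
    rw [hsum, div_eq_one_iff_eq (mul_ne_zero hrne hrne), Complex.mul_conj, Complex.mul_conj,
      ← Complex.ofReal_add]
    exact_mod_cast hrr.symm
  -- the triangular form data
  set c : ℂ := (-(A 0 0) * (starRingEnd ℂ) v1 + A 0 1 * (starRingEnd ℂ) v0) * (starRingEnd ℂ) v0
      + (-(A 1 0) * (starRingEnd ℂ) v1 + A 1 1 * (starRingEnd ℂ) v0) * (starRingEnd ℂ) v1 with hc'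
  set b' : ℂ := (-(A 0 0) * (starRingEnd ℂ) v1 + A 0 1 * (starRingEnd ℂ) v0) * (-v1)
      + (-(A 1 0) * (starRingEnd ℂ) v1 + A 1 1 * (starRingEnd ℂ) v0) * v0 with hb''
  have hb : b' = b := by
    rw [hb'']
    linear_combination (-((starRingEnd ℂ) v0))*hv0 + (-((starRingEnd ℂ) v1))*hv1
      + (A 0 0 + A 1 1 - a)*hn + htr'
  have hAw0 : -(A 0 0) * (starRingEnd ℂ) v1 + A 0 1 * (starRingEnd ℂ) v0
      = c*v0 + b'*(-((starRingEnd ℂ) v1)) := by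
    rw [hc', hb'']
    linear_combination (-(-(A 0 0) * (starRingEnd ℂ) v1 + A 0 1 * (starRingEnd ℂ) v0))*hn
  have hAw1 : -(A 1 0) * (starRingEnd ℂ) v1 + A 1 1 * (starRingEnd ℂ) v0
      = c*v1 + b'*((starRingEnd ℂ) v0) := by
    rw [hc', hb'']
    linear_combination (-(-(A 1 0) * (starRingEnd ℂ) v1 + A 1 1 * (starRingEnd ℂ) v0))*hn
  rw [hb] at hAw0 hAw1
  have E00 : A 0 0 = a*v0*(starRingEnd ℂ) v0 - c*v0*v1 + b*((starRingEnd ℂ) v1)*v1 := by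
    linear_combination ((starRingEnd ℂ) v0)*hv0 - v1*hAw0 - (A 0 0)*hn
  have E10 : A 1 0 = a*v1*(starRingEnd ℂ) v0 - c*v1*v1 - b*((starRingEnd ℂ) v0)*v1 := by
    linear_combination ((starRingEnd ℂ) v0)*hv1 - v1*hAw1 - (A 1 0)*hn
  have E01 : A 0 1 = a*v0*(starRingEnd ℂ) v1 + c*v0*v0 - b*((starRingEnd ℂ) v1)*v0 := by
    linear_combination ((starRingEnd ℂ) v1)*hv0 + v0*hAw0 - (A 0 1)*hn
  have E11 : A 1 1 = a*v1*(starRingEnd ℂ) v1 + c*v1*v0 + b*((starRingEnd ℂ) v0)*v0 := by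
    linear_combination ((starRingEnd ℂ) v1)*hv1 + v0*hAw1 - (A 1 1)*hn
  -- trace of AᴴA
  have htrace_expand : (Aᴴ * A).trace = (starRingEnd ℂ) (A 0 0) * A 0 0
      + (starRingEnd ℂ) (A 1 0) * A 1 0 + (starRingEnd ℂ) (A 0 1) * A 0 1
      + (starRingEnd ℂ) (A 1 1) * A 1 1 := by
    simp [Matrix.trace_fin_two, Matrix.mul_apply, Matrix.conjTranspose_apply, Fin.sum_univ_two]
    ring
  have hfrob := frob_identity A a b c v0 v1 hn E00 E10 E01 E11
  have h9 : (Aᴴ * A).trace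
      = ((‖a‖^2 + ‖b‖^2 + ‖c‖^2 : ℝ) : ℂ) := by
    rw [htrace_expand, hfrob, Complex.mul_conj, Complex.mul_conj, Complex.mul_conj]
    rw [← Complex.sq_norm, ← Complex.sq_norm, ← Complex.sq_norm]
    push_cast
    ring
  have hre : (Aᴴ * A).trace.re = ‖a‖^2 + ‖b‖^2 + ‖c‖^2 := by
    rw [h9, Complex.ofReal_re]
  have hinner : ∀ z : ℂ, (‖z - a‖ + ‖z - b‖ ≤
        Real.sqrt (‖a - b‖ ^ 2 +
          Real.sqrt ((Aᴴ * A).trace.re - ‖a‖ ^ 2 - ‖b‖ ^ 2) ^ 2))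
      ↔ (‖z - a‖ + ‖z - b‖ ≤
        Real.sqrt (‖a - b‖ ^ 2 + ‖c‖ ^ 2)) := by
    intro z
    rw [show (Aᴴ * A).trace.re - ‖a‖ ^ 2 - ‖b‖ ^ 2 = ‖c‖ ^ 2 by
      rw [hre]; ring]
    rw [Real.sqrt_sq (norm_nonneg c)]
  ext z
  simp only [numericalRange, Set.mem_setOf_eq]
  rw [hinner z]
  constructor
  · rintro ⟨x, hx1, hzv⟩
    simp only [Matrix.mulVec, dotProduct, Fin.sum_univ_two] at hzv
    rw [Fin.sum_univ_two] at hx1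
    have hxc : x 0 * (starRingEnd ℂ) (x 0) + x 1 * (starRingEnd ℂ) (x 1) = 1 := by
      rw [Complex.mul_conj, Complex.mul_conj, ← Complex.ofReal_add]
      rw [← Complex.sq_norm, ← Complex.sq_norm, hx1]
      norm_num
    obtain ⟨α, β, hαβc, hval⟩ := value_forward A a b c v0 v1 (x 0) (x 1) hn hxc E00 E10 E01 E11
    have habs : ‖α‖ ^ 2 + ‖β‖ ^ 2 = 1 := by
      have h' := hαβc
      rw [Complex.mul_conj, Complex.mul_conj, ← Complex.ofReal_add] at h'
      rw [Complex.sq_norm, Complex.sq_norm]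
      exact_mod_cast h'
    have hz2 : z = a*(α*(starRingEnd ℂ) α) + c*(β*(starRingEnd ℂ) α)
        + b*(β*(starRingEnd ℂ) β) := by rw [hzv, hval]
    rw [hz2]
    exact scalar_forward a b c α β habs
  · intro hz
    obtain ⟨α, β, hαβ, hsb⟩ := scalar_backward a b c z hz
    have hαβc : α * (starRingEnd ℂ) α + β * (starRingEnd ℂ) β = 1 := by
      rw [Complex.mul_conj, Complex.mul_conj, ← Complex.ofReal_add]
      rw [← Complex.sq_norm, ← Complex.sq_norm, hαβ]
      norm_num
    obtain ⟨x0, x1, hxc, hzval⟩ := value_backward A a b c v0 v1 α β z hn hαβc hsb E00 E10 E01 E11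
    refine ⟨![x0, x1], ?_, ?_⟩
    · rw [Fin.sum_univ_two]
      have h' := hxc
      rw [Complex.mul_conj, Complex.mul_conj, ← Complex.ofReal_add] at h'
      have h'' : ‖x0‖ ^ 2 + ‖x1‖ ^ 2 = 1 := by
        rw [Complex.sq_norm, Complex.sq_norm]
        exact_mod_cast h'
      simpa using h''
    · simp only [Matrix.mulVec, dotProduct, Fin.sum_univ_two]
      simpa using hzval
end

section
/- Fix m ≥ 0 and let T′ be the 2×2 complex matrix with rows (0, m) and (0, 1). Then the numerical range of T′ is the union of a family of circles: W(T′) = ⋃_{t ∈ [0,1]} C_t, where C_t = { z ∈ ℂ : |z − (1 − t²)| = m·t·sqrt(1 − t²) }. -/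
open Matrix

private lemma quadForm_eq (m : ℝ) (x : Fin 2 → ℂ) :
    ∑ i, (!![(0:ℂ), (m:ℂ); 0, 1].mulVec x) i * (starRingEnd ℂ) (x i)
      = (m : ℂ) * x 1 * (starRingEnd ℂ) (x 0) + x 1 * (starRingEnd ℂ) (x 1) := by
  simp [Matrix.mulVec, dotProduct, Fin.sum_univ_two]

theorem numericalRange_Tprime_union_circles (m : ℝ) (hm : 0 ≤ m) :
    numericalRange !![(0 : ℂ), (m : ℂ); 0, 1] =
      ⋃ t ∈ Set.Icc (0 : ℝ) 1,
        {z : ℂ | ‖z - ((1 - t ^ 2 : ℝ) : ℂ)‖ = m * t * Real.sqrt (1 - t ^ 2)} := by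
  ext z
  simp only [numericalRange, Set.mem_setOf_eq, Set.mem_iUnion, Set.mem_Icc, exists_prop]
  constructor
  · rintro ⟨x, hx, hz⟩
    rw [quadForm_eq] at hz
    have habs : ‖x 0‖ ^ 2 + ‖x 1‖ ^ 2 = 1 := by
      simpa [Fin.sum_univ_two] using hx
    set t := ‖x 0‖ with ht
    have ht0 : 0 ≤ t := norm_nonneg _
    have ht1 : t ≤ 1 := by nlinarith [norm_nonneg (x 1), sq_nonneg ‖x 1‖]
    refine ⟨t, ⟨ht0, ht1⟩, ?_⟩
    have h1 : ((1 - t ^ 2 : ℝ) : ℂ) = x 1 * (starRingEnd ℂ) (x 1) := by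
      rw [Complex.mul_conj]
      norm_cast
      rw [Complex.normSq_eq_norm_sq]
      linarith
    have hsq : Real.sqrt (1 - t ^ 2) = ‖x 1‖ := by
      have : 1 - t ^ 2 = ‖x 1‖ ^ 2 := by linarith
      rw [this, Real.sqrt_sq (norm_nonneg _)]
    rw [hz, h1]
    rw [hsq]
    rw [show (m : ℂ) * x 1 * (starRingEnd ℂ) (x 0) + x 1 * (starRingEnd ℂ) (x 1)
        - x 1 * (starRingEnd ℂ) (x 1) = (m : ℂ) * x 1 * (starRingEnd ℂ) (x 0) by ring]
    rw [norm_mul, norm_mul, Complex.norm_real, Real.norm_eq_abs, Complex.norm_conj]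
    rw [abs_of_nonneg hm]
    ring
  · rintro ⟨t, ⟨ht0, ht1⟩, hz⟩
    have hts : 1 - t ^ 2 ≥ 0 := by nlinarith
    have hsq : Real.sqrt (1 - t ^ 2) ^ 2 = 1 - t ^ 2 := Real.sq_sqrt hts
    by_cases hc : m * t * Real.sqrt (1 - t ^ 2) = 0
    · -- degenerate circle: z = 1 - t²
      have hzval : z = ((1 - t ^ 2 : ℝ) : ℂ) := by
        rw [hc] at hz
        exact sub_eq_zero.mp (norm_eq_zero.mp hz)
      refine ⟨![(t : ℂ), (Real.sqrt (1 - t ^ 2) : ℂ)], ?_, ?_⟩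
      · simp [Fin.sum_univ_two, Complex.norm_real, Real.norm_eq_abs, abs_of_nonneg ht0,
          abs_of_nonneg (Real.sqrt_nonneg (1 - t ^ 2)), hsq]
      · rw [quadForm_eq]
        simp only [Matrix.cons_val_zero, Matrix.cons_val_one, Matrix.head_cons]
        rw [hzval, Complex.conj_ofReal, Complex.conj_ofReal]
        have h0 : (m : ℂ) * (Real.sqrt (1 - t ^ 2) : ℂ) * (t : ℂ) = 0 := by
          norm_cast
          rw [show m * Real.sqrt (1 - t ^ 2) * t = m * t * Real.sqrt (1 - t ^ 2) by ring, hc]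
        rw [h0]
        norm_cast
        rw [zero_add, ← Real.sqrt_mul_self (Real.sqrt_nonneg (1 - t ^ 2))] at *
        nlinarith [hsq]
    · -- nondegenerate: m, t, sqrt all nonzero
      have hm0 : m ≠ 0 := fun h => hc (by simp [h])
      have htn : t ≠ 0 := fun h => hc (by simp [h])
      have hmt : (m : ℂ) * (t : ℂ) ≠ 0 := by simp [hm0, htn]
      have habs1 : ‖(z - ((1 - t ^ 2 : ℝ) : ℂ)) / ((m : ℂ) * (t : ℂ))‖
          = Real.sqrt (1 - t ^ 2) := by
        rw [norm_div, hz, ← Complex.ofReal_mul, Complex.norm_real, Real.norm_eq_abs,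
          abs_of_nonneg (mul_nonneg hm ht0)]
        field_simp
      refine ⟨![(t : ℂ), (z - ((1 - t ^ 2 : ℝ) : ℂ)) / ((m : ℂ) * (t : ℂ))], ?_, ?_⟩
      · simp only [Fin.sum_univ_two, Matrix.cons_val_zero, Matrix.cons_val_one, Matrix.head_cons]
        rw [habs1, Complex.norm_real, Real.norm_eq_abs, abs_of_nonneg ht0, hsq]
        ring
      · rw [quadForm_eq]
        simp only [Matrix.cons_val_zero, Matrix.cons_val_one, Matrix.head_cons]
        set w := (z - ((1 - t ^ 2 : ℝ) : ℂ)) / ((m : ℂ) * (t : ℂ)) with hw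
        have hconj : (starRingEnd ℂ) ((t : ℂ)) = (t : ℂ) := Complex.conj_ofReal t
        have hww : w * (starRingEnd ℂ) w = ((1 - t ^ 2 : ℝ) : ℂ) := by
          rw [Complex.mul_conj]
          norm_cast
          rw [Complex.normSq_eq_norm_sq, habs1, hsq]
        have hmw : (m : ℂ) * w * (t : ℂ) = z - ((1 - t ^ 2 : ℝ) : ℂ) := by
          rw [hw]
          rw [mul_right_comm, mul_comm, div_mul_cancel₀ _ hmt]
        rw [hconj, hmw, hww]
        ring
end

section
/- Fix m > 0 and define F : ℝ² × ℝ → ℝ by F(x, y, t) = (x − (1 − t²))² + y² − m²t²(1 − t²). Then the discriminant envelope of the family { F(·,·,t) = 0 : t ∈ [0,1] } equals the ellipse ∂E together with the single point (1, 0); that is, E₃ = { (x, y) ∈ ℝ² : (x − 1/2)²/(1 + m²) + y²/m² = 1/4 } ∪ { (1, 0) }. -/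
lemma env_deriv (x y m t : ℝ) :
    deriv (fun s : ℝ => (x - (1 - s ^ 2)) ^ 2 + y ^ 2 - m ^ 2 * s ^ 2 * (1 - s ^ 2)) t
      = 2 * t * (2 * (x - 1) - m ^ 2 + 2 * (1 + m ^ 2) * t ^ 2) := by
  have h1 : HasDerivAt (fun s : ℝ => s ^ 2) (2 * t) t := by
    simpa using hasDerivAt_pow 2 t
  have h2 : HasDerivAt (fun s : ℝ => x - (1 - s ^ 2)) (2 * t) t := by
    simpa using ((h1.const_sub 1).const_sub x)
  have h3 : HasDerivAt (fun s : ℝ => (x - (1 - s ^ 2)) ^ 2)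
      (2 * (x - (1 - t ^ 2)) * (2 * t)) t := by
    simpa [mul_comm] using h2.fun_pow 2
  have h4 : HasDerivAt (fun s : ℝ => m ^ 2 * s ^ 2 * (1 - s ^ 2))
      (m ^ 2 * (2 * t) * (1 - t ^ 2) + m ^ 2 * t ^ 2 * (-(2 * t))) t := by
    exact (h1.const_mul (m ^ 2)).mul (h1.const_sub 1)
  have h5 := (h3.add_const (y ^ 2)).fun_sub h4
  rw [h5.deriv]
  ring

theorem discriminant_envelope_of_circle_family (m : ℝ) (hm : 0 < m) :
    {p : ℝ × ℝ | ∃ t ∈ Set.Icc (0 : ℝ) 1,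
        (p.1 - (1 - t ^ 2)) ^ 2 + p.2 ^ 2 - m ^ 2 * t ^ 2 * (1 - t ^ 2) = 0 ∧
        deriv (fun s : ℝ =>
          (p.1 - (1 - s ^ 2)) ^ 2 + p.2 ^ 2 - m ^ 2 * s ^ 2 * (1 - s ^ 2)) t = 0} =
      {p : ℝ × ℝ | (p.1 - 1 / 2) ^ 2 / (1 + m ^ 2) + p.2 ^ 2 / m ^ 2 = 1 / 4} ∪
        {((1 : ℝ), (0 : ℝ))} := by
  have hm2 : (0:ℝ) < m ^ 2 := by positivity
  have h1m : (0:ℝ) < 1 + m ^ 2 := by positivity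
  ext ⟨x, y⟩
  simp only [Set.mem_setOf_eq, Set.mem_union, Set.mem_singleton_iff, Prod.mk.injEq,
    env_deriv]
  constructor
  · rintro ⟨t, ⟨ht0, ht1⟩, hF, hD⟩
    rcases mul_eq_zero.1 hD with h | hB
    · rcases mul_eq_zero.1 h with h2 | ht
      · norm_num at h2
      · right
        subst ht
        constructor <;> nlinarith [sq_nonneg (x - 1), sq_nonneg y, sq_nonneg (x - 1 + y), sq_nonneg (x - 1 - y)]
    · left
      rw [div_add_div _ _ (ne_of_gt h1m) (ne_of_gt hm2), div_eq_iff (by positivity)]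
      nlinarith [hF, hB, sq_nonneg t, sq_nonneg (t^2)]
  · rintro (hE | ⟨hx, hy⟩)
    · set u : ℝ := (m ^ 2 + 2 - 2 * x) / (2 * (1 + m ^ 2)) with hu
      have hxb : (x - 1/2) ^ 2 ≤ (1 + m ^ 2) / 4 := by
        rw [div_add_div _ _ (ne_of_gt h1m) (ne_of_gt hm2), div_eq_iff (by positivity)] at hE
        nlinarith [sq_nonneg y]
      have hu0 : 0 ≤ u := by
        apply div_nonneg _ (by positivity)
        nlinarith [sq_nonneg (x - 1/2)]
      have hu1 : u ≤ 1 := by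
        rw [div_le_one (by positivity)]
        nlinarith [sq_nonneg (x - 1/2)]
      refine ⟨Real.sqrt u, ⟨Real.sqrt_nonneg u, by simpa using Real.sqrt_le_sqrt hu1⟩, ?_, ?_⟩
      · rw [Real.sq_sqrt hu0, hu]
        rw [div_add_div _ _ (ne_of_gt h1m) (ne_of_gt hm2), div_eq_iff (by positivity)] at hE
        field_simp
        linear_combination 4 * (1 + m ^ 2) * hE
      · rw [Real.sq_sqrt hu0, hu]
        field_simp
        ring
    · subst hx; subst hy
      exact ⟨0, ⟨le_refl 0, zero_le_one⟩, by norm_num, by ring⟩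
end

section
/- Fix m > 0. For every t ∈ [0,1], the circle C_t = { (x, y) ∈ ℝ² : (x − (1 − t²))² + y² = m²t²(1 − t²) } is contained in the closed elliptical disk { (x, y) ∈ ℝ² : (x − 1/2)²/(1 + m²) + y²/m² ≤ 1/4 }. -/
theorem circles_subset_elliptical_disk (m : ℝ) (hm : 0 < m) :
    ∀ t ∈ Set.Icc (0 : ℝ) 1,
      {p : ℝ × ℝ | (p.1 - (1 - t ^ 2)) ^ 2 + p.2 ^ 2 = m ^ 2 * t ^ 2 * (1 - t ^ 2)} ⊆
        {p : ℝ × ℝ | (p.1 - 1 / 2) ^ 2 / (1 + m ^ 2) + p.2 ^ 2 / m ^ 2 ≤ 1 / 4} := by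
  intro t ht p hp
  simp only [Set.mem_setOf_eq] at hp ⊢
  have hm2 : (0:ℝ) < m ^ 2 := by positivity
  have h1 : (0:ℝ) < 1 + m ^ 2 := by positivity
  have key : (p.1 - 1 / 2) ^ 2 * m ^ 2 + p.2 ^ 2 * (1 + m ^ 2) ≤ 1 / 4 * (m ^ 2 * (1 + m ^ 2)) := by
    nlinarith [sq_nonneg (m ^ 2 * (1 - t ^ 2 - 1 / 2) - (p.1 - (1 - t ^ 2))), sq_nonneg p.2, sq_nonneg m, sq_nonneg (p.1 - (1 - t^2))]
  calc (p.1 - 1 / 2) ^ 2 / (1 + m ^ 2) + p.2 ^ 2 / m ^ 2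
      = ((p.1 - 1 / 2) ^ 2 * m ^ 2 + p.2 ^ 2 * (1 + m ^ 2)) / (m ^ 2 * (1 + m ^ 2)) := by
        field_simp
    _ ≤ 1 / 4 * (m ^ 2 * (1 + m ^ 2)) / (m ^ 2 * (1 + m ^ 2)) := by gcongr
    _ = 1 / 4 := by field_simp
end

section
/- Fix m > 0. The closed elliptical disk { (x, y) ∈ ℝ² : (x − 1/2)²/(1 + m²) + y²/m² ≤ 1/4 } is contained in the union ⋃_{t ∈ [0,1]} C_t, where C_t = { (x, y) ∈ ℝ² : (x − (1 − t²))² + y² = m²t²(1 − t²) }. -/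
theorem elliptical_disk_subset_union_circles (m : ℝ) (hm : 0 < m) :
    {p : ℝ × ℝ | (p.1 - 1 / 2) ^ 2 / (1 + m ^ 2) + p.2 ^ 2 / m ^ 2 ≤ 1 / 4} ⊆
      ⋃ t ∈ Set.Icc (0 : ℝ) 1,
        {p : ℝ × ℝ | (p.1 - (1 - t ^ 2)) ^ 2 + p.2 ^ 2 = m ^ 2 * t ^ 2 * (1 - t ^ 2)} := by
  rintro ⟨x, y⟩ h
  simp only [Set.mem_setOf_eq] at h
  have hA : (0:ℝ) < 1 + m ^ 2 := by positivity
  have hM : (0:ℝ) < m ^ 2 := by positivity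
  rw [div_add_div _ _ hA.ne' hM.ne', div_le_iff₀ (mul_pos hA hM)] at h
  -- h : (x-1/2)^2 * m^2 + y^2 * (1+m^2) ≤ 1/4 * ((1+m^2)*m^2)
  have hex : ∃ u : ℝ, 0 ≤ u ∧ u ≤ 1 ∧
      (1 + m^2) * u^2 + (2*(x-1) - m^2) * u + ((x-1)^2 + y^2) = 0 := by
    have hD : 0 ≤ (m^2 - 2*(x-1))^2 - 4*(1+m^2)*((x-1)^2 + y^2) := by nlinarith [h]
    have habd : 4*(x-1)^2 + 4*(x-1) ≤ m^2 := by nlinarith [h, sq_nonneg y]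
    have hma : 0 ≤ m^2 - 2*(x-1) := by
      rcases le_or_gt (x-1) 0 with hle | hlt
      · nlinarith
      · nlinarith
    have hs0 : 0 ≤ Real.sqrt ((m^2 - 2*(x-1))^2 - 4*(1+m^2)*((x-1)^2 + y^2)) :=
      Real.sqrt_nonneg _
    have hs2 : Real.sqrt ((m^2 - 2*(x-1))^2 - 4*(1+m^2)*((x-1)^2 + y^2)) ^ 2 =
        (m^2 - 2*(x-1))^2 - 4*(1+m^2)*((x-1)^2 + y^2) := Real.sq_sqrt hD
    have hsle : Real.sqrt ((m^2 - 2*(x-1))^2 - 4*(1+m^2)*((x-1)^2 + y^2)) ≤ m^2 - 2*(x-1) := by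
      have hle := Real.sqrt_le_sqrt (show (m^2 - 2*(x-1))^2 - 4*(1+m^2)*((x-1)^2 + y^2) ≤
        (m^2 - 2*(x-1))^2 by nlinarith [sq_nonneg (x-1), sq_nonneg y, hA])
      rwa [Real.sqrt_sq hma] at hle
    have h2a : 0 ≤ m^2 + 2 + 2*(x-1) := by
      rcases le_or_gt (-1) (x-1) with hge | hlt
      · nlinarith
      · nlinarith [mul_pos (by linarith : (0:ℝ) < -(2*(x-1)+1)) (by linarith : (0:ℝ) < -((x-1)+1))]
    refine ⟨(m^2 - 2*(x-1) - Real.sqrt ((m^2 - 2*(x-1))^2 - 4*(1+m^2)*((x-1)^2 + y^2))) /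
      (2*(1+m^2)), div_nonneg (by linarith) (by linarith), ?_, ?_⟩
    · rw [div_le_one (by linarith)]
      linarith
    · generalize Real.sqrt ((m^2 - 2*(x-1))^2 - 4*(1+m^2)*((x-1)^2 + y^2)) = s at hs2 ⊢
      field_simp
      linear_combination hs2
  obtain ⟨u, hu0, hu1, hroot⟩ := hex
  refine Set.mem_iUnion₂.mpr ⟨Real.sqrt u,
    Set.mem_Icc.mpr ⟨Real.sqrt_nonneg u, Real.sqrt_le_one.mpr hu1⟩, ?_⟩
  simp only [Set.mem_setOf_eq]
  rw [Real.sq_sqrt hu0]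
  linear_combination hroot
end

section
/- Let s₁ < s₂ and let x_c, y_c, r : ℝ → ℝ be twice continuously differentiable on [s₁, s₂], with r(t) > 0 and r′(t)² < x_c′(t)² + y_c′(t)² for all t ∈ (s₁, s₂). Define F(x, y, t) = (x − x_c(t))² + (y − y_c(t))² − r(t)², let C_t = { (x,y) : F(x,y,t) = 0 }, D_t = { (x,y) : (x − x_c(t))² + (y − y_c(t))² < r(t)² }, and Ω = ⋃_{t ∈ [s₁, s₂]} D_t. Then the topological boundary of Ω satisfies ∂Ω ⊆ E₂ ∪ C_{s₁} ∪ C_{s₂}, where E₂ is the limiting-position envelope of the family { C_t : t ∈ [s₁, s₂] }. -/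
open Filter Set Topology

private lemma slope_limit (f : ℝ → ℝ) (t₀ l : ℝ) (h : HasDerivAt f l t₀) :
    Tendsto (fun δ => (f (t₀ + δ) - f t₀) / δ) (𝓝[>] (0:ℝ)) (𝓝 l) := by
  have h1 := hasDerivAt_iff_tendsto_slope.1 h
  have hm : Tendsto (fun δ : ℝ => t₀ + δ) (𝓝[>] (0:ℝ)) (𝓝[≠] t₀) := by
    rw [tendsto_nhdsWithin_iff]
    constructor
    · have : Tendsto (fun δ : ℝ => t₀ + δ) (𝓝 0) (𝓝 (t₀ + 0)) :=
        (continuous_const.add continuous_id).tendsto 0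
      simpa using this.mono_left nhdsWithin_le_nhds
    · filter_upwards [self_mem_nhdsWithin] with δ (hδ : 0 < δ)
      simp only [mem_compl_iff, mem_singleton_iff]
      intro hc; nlinarith [hc]
  have := h1.comp hm
  convert this using 1
  funext δ
  simp [slope_def_field]

private lemma aux_div (D R₀ R₂ δ : ℝ) (hD : D ≠ 0) (hδ : δ ≠ 0) :
    D / 2 + ((R₀ - R₂) / δ) / (2 * (D / δ)) = (D ^ 2 + R₀ - R₂) / (2 * D) := by
  field_simp
  ring

set_option maxHeartbeats 1000000 in
theorem boundary_subset_limiting_position_envelope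
    (s₁ s₂ : ℝ) (hs : s₁ < s₂) (xc yc r : ℝ → ℝ)
    (hxc : ContDiffOn ℝ 2 xc (Set.Icc s₁ s₂))
    (hyc : ContDiffOn ℝ 2 yc (Set.Icc s₁ s₂))
    (hr : ContDiffOn ℝ 2 r (Set.Icc s₁ s₂))
    (hrpos : ∀ t ∈ Set.Ioo s₁ s₂, 0 < r t)
    (hderiv : ∀ t ∈ Set.Ioo s₁ s₂,
      (deriv r t) ^ 2 < (deriv xc t) ^ 2 + (deriv yc t) ^ 2) :
    frontier (⋃ t ∈ Set.Icc s₁ s₂,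
        {p : ℝ × ℝ | (p.1 - xc t) ^ 2 + (p.2 - yc t) ^ 2 < (r t) ^ 2}) ⊆
      {p : ℝ × ℝ | ∃ (t : ℝ) (tn tn' : ℕ → ℝ) (pn : ℕ → ℝ × ℝ),
          t ∈ Set.Icc s₁ s₂ ∧
          (∀ n, tn n ∈ Set.Icc s₁ s₂) ∧ (∀ n, tn' n ∈ Set.Icc s₁ s₂) ∧
          (∀ n, tn n ≠ tn' n) ∧
          Filter.Tendsto tn Filter.atTop (nhds t) ∧
          Filter.Tendsto tn' Filter.atTop (nhds t) ∧
          (∀ n, ((pn n).1 - xc (tn n)) ^ 2 + ((pn n).2 - yc (tn n)) ^ 2 - (r (tn n)) ^ 2 = 0 ∧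
                ((pn n).1 - xc (tn' n)) ^ 2 + ((pn n).2 - yc (tn' n)) ^ 2 - (r (tn' n)) ^ 2 = 0) ∧
          Filter.Tendsto pn Filter.atTop (nhds p)} ∪
        {p : ℝ × ℝ | (p.1 - xc s₁) ^ 2 + (p.2 - yc s₁) ^ 2 - (r s₁) ^ 2 = 0} ∪
        {p : ℝ × ℝ | (p.1 - xc s₂) ^ 2 + (p.2 - yc s₂) ^ 2 - (r s₂) ^ 2 = 0} := by
  intro p hp
  set Ω := ⋃ t ∈ Set.Icc s₁ s₂,
      {p : ℝ × ℝ | (p.1 - xc t) ^ 2 + (p.2 - yc t) ^ 2 < (r t) ^ 2} with hΩ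
  have hopen : IsOpen Ω := by
    apply isOpen_biUnion
    intro t _
    have : Continuous fun p : ℝ × ℝ => (p.1 - xc t) ^ 2 + (p.2 - yc t) ^ 2 := by fun_prop
    exact isOpen_lt this continuous_const
  have hpc : p ∈ closure Ω := hp.1
  have hpn : p ∉ Ω := by
    intro hmem
    exact hp.2 (by rwa [hopen.interior_eq])
  have hge : ∀ t ∈ Set.Icc s₁ s₂, 0 ≤ (p.1 - xc t) ^ 2 + (p.2 - yc t) ^ 2 - (r t) ^ 2 := by
    intro t ht
    by_contra hlt
    push_neg at hlt
    exact hpn (Set.mem_biUnion ht (by simpa [Set.mem_setOf_eq] using by linarith))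
  obtain ⟨q, hqΩ, hq⟩ := mem_closure_iff_seq_limit.1 hpc
  have hqτ : ∀ n, ∃ t ∈ Set.Icc s₁ s₂,
      ((q n).1 - xc t) ^ 2 + ((q n).2 - yc t) ^ 2 < (r t) ^ 2 := by
    intro n
    have := hqΩ n
    simp only [hΩ, Set.mem_iUnion, Set.mem_setOf_eq] at this
    obtain ⟨t, ht, h⟩ := this
    exact ⟨t, ht, h⟩
  choose τ hτmem hτlt using hqτ
  obtain ⟨t₀, ht₀, φ, hφmono, hφtend⟩ :=
    (isCompact_Icc (a := s₁) (b := s₂)).tendsto_subseq hτmem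
  have hcont : ∀ g : ℝ → ℝ, ContDiffOn ℝ 2 g (Set.Icc s₁ s₂) →
      Tendsto (fun n => g (τ (φ n))) atTop (𝓝 (g t₀)) := by
    intro g hg
    have hc : ContinuousWithinAt g (Set.Icc s₁ s₂) t₀ :=
      (hg.continuousOn) t₀ ht₀
    refine hc.tendsto.comp ?_
    rw [tendsto_nhdsWithin_iff]
    exact ⟨hφtend, Filter.Eventually.of_forall fun n => hτmem (φ n)⟩
  have hxτ := hcont xc hxc
  have hyτ := hcont yc hyc
  have hrτ := hcont r hr
  have hq1 : Tendsto (fun n => (q (φ n)).1) atTop (𝓝 p.1) :=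
    (continuous_fst.tendsto p).comp (hq.comp hφmono.tendsto_atTop)
  have hq2 : Tendsto (fun n => (q (φ n)).2) atTop (𝓝 p.2) :=
    (continuous_snd.tendsto p).comp (hq.comp hφmono.tendsto_atTop)
  have hFt : Tendsto (fun n => ((q (φ n)).1 - xc (τ (φ n))) ^ 2 +
      ((q (φ n)).2 - yc (τ (φ n))) ^ 2 - (r (τ (φ n))) ^ 2) atTop
      (𝓝 ((p.1 - xc t₀) ^ 2 + (p.2 - yc t₀) ^ 2 - (r t₀) ^ 2)) :=
    (((hq1.sub hxτ).pow 2).add ((hq2.sub hyτ).pow 2)).sub (hrτ.pow 2)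
  have hFle : (p.1 - xc t₀) ^ 2 + (p.2 - yc t₀) ^ 2 - (r t₀) ^ 2 ≤ 0 := by
    refine le_of_tendsto hFt ?_
    filter_upwards with n
    have := hτlt (φ n)
    linarith
  have hE1 : (p.1 - xc t₀) ^ 2 + (p.2 - yc t₀) ^ 2 - (r t₀) ^ 2 = 0 :=
    le_antisymm hFle (hge t₀ ht₀)
  rcases eq_or_lt_of_le ht₀.1 with h1 | h1
  · exact Or.inl (Or.inr (by simp only [Set.mem_setOf_eq]; rw [h1]; exact hE1))
  rcases eq_or_lt_of_le ht₀.2 with h2 | h2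
  · exact Or.inr (by simp only [Set.mem_setOf_eq]; rw [← h2]; exact hE1)
  have ht₀o : t₀ ∈ Set.Ioo s₁ s₂ := ⟨h1, h2⟩
  left; left
  -- derivative setup
  have hder := hderiv t₀ ht₀o
  have hmem : Set.Icc s₁ s₂ ∈ 𝓝 t₀ := Icc_mem_nhds h1 h2
  have hdx : HasDerivAt xc (deriv xc t₀) t₀ :=
    ((hxc.differentiableOn (by norm_num)).differentiableAt hmem).hasDerivAt
  have hdy : HasDerivAt yc (deriv yc t₀) t₀ :=
    ((hyc.differentiableOn (by norm_num)).differentiableAt hmem).hasDerivAt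
  have hdr : HasDerivAt r (deriv r t₀) t₀ :=
    ((hr.differentiableOn (by norm_num)).differentiableAt hmem).hasDerivAt
  set x' := deriv xc t₀ with hx'def
  set y' := deriv yc t₀ with hy'def
  set r' := deriv r t₀ with hr'def
  set X := p.1 - xc t₀ with hXdef
  set Y := p.2 - yc t₀ with hYdef
  set r₀ := r t₀ with hr₀def
  have hr₀ : 0 < r₀ := hrpos t₀ ht₀o
  have hf : HasDerivAt (fun t => (p.1 - xc t) ^ 2 + (p.2 - yc t) ^ 2 - (r t) ^ 2)
      (2 * X * (0 - x') + 2 * Y * (0 - y') - 2 * r₀ * r') t₀ := by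
    have h1' := (((hasDerivAt_const t₀ p.1).sub hdx).pow 2)
    have h2' := (((hasDerivAt_const t₀ p.2).sub hdy).pow 2)
    have h3' := hdr.pow 2
    have := (h1'.add h2').sub h3'
    refine this.congr_deriv ?_
    simp only [Pi.sub_apply, hXdef, hYdef, hr₀def]
    push_cast
    ring
  have hmin : IsLocalMin (fun t => (p.1 - xc t) ^ 2 + (p.2 - yc t) ^ 2 - (r t) ^ 2) t₀ := by
    filter_upwards [hmem] with t ht
    show (p.1 - xc t₀) ^ 2 + (p.2 - yc t₀) ^ 2 - (r t₀) ^ 2 ≤ _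
    rw [hE1]
    exact hge t ht
  have hdzero := hmin.hasDerivAt_eq_zero hf
  have hE2 : X * x' + Y * y' + r₀ * r' = 0 := by linarith
  have hE1' : X ^ 2 + Y ^ 2 = r₀ ^ 2 := by linarith
  -- geometric quantities
  have hL2 : (0:ℝ) < x' ^ 2 + y' ^ 2 := lt_of_le_of_lt (sq_nonneg r') hder
  set L := Real.sqrt (x' ^ 2 + y' ^ 2) with hLdef
  have hL : 0 < L := Real.sqrt_pos.2 hL2
  have hLsq : L ^ 2 = x' ^ 2 + y' ^ 2 := Real.sq_sqrt hL2.le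
  set ux := x' / L with huxdef
  set uy := y' / L with huydef
  have hunit : ux ^ 2 + uy ^ 2 = 1 := by
    rw [huxdef, huydef, div_pow, div_pow, ← add_div, ← hLsq]
    exact div_self (by positivity)
  set A := X * ux + Y * uy with hAdef
  set β := Y * ux - X * uy with hβdef
  have hAval : A = -(r₀ * r') / L := by
    rw [hAdef, huxdef, huydef]
    field_simp
    linear_combination hE2
  have hβ2 : β ^ 2 = r₀ ^ 2 - A ^ 2 := by
    rw [hAdef, hβdef]
    linear_combination (X^2 + Y^2) * hunit + hE1'
  have hA2 : A ^ 2 < r₀ ^ 2 := by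
    rw [hAval, div_pow, div_lt_iff₀ (by positivity), hLsq]
    nlinarith [mul_lt_mul_of_pos_left hder (pow_pos hr₀ 2)]
  set H := Real.sqrt (r₀ ^ 2 - A ^ 2) with hHdef
  set σ := if 0 ≤ β then (1:ℝ) else -1 with hσdef
  have hσ2 : σ ^ 2 = 1 := by
    rw [hσdef]; split <;> norm_num
  have hσH : σ * H = β := by
    have hHb : H = |β| := by rw [hHdef, ← hβ2, Real.sqrt_sq_eq_abs]
    rw [hHb, hσdef]
    rcases le_or_gt 0 β with hb | hb
    · rw [if_pos hb, abs_of_nonneg hb, one_mul]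
    · rw [if_neg (not_le.2 hb), abs_of_neg hb]; ring
  clear_value X Y r₀ x' y' r' L ux uy A β σ H
  clear hf hmin hdzero hFt hFle hq1 hq2 hxτ hyτ hrτ hcont hq hpc hpn
  clear hopen hqΩ hτmem hτlt hφmono hφtend
  clear_value Ω
  clear hp hΩ Ω q τ φ
  -- functions of δ
  set Δx : ℝ → ℝ := fun δ => xc (t₀ + δ) - xc t₀ with hΔxdef
  set Δy : ℝ → ℝ := fun δ => yc (t₀ + δ) - yc t₀ with hΔydef
  clear_value Δx Δy
  set d : ℝ → ℝ := fun δ => Real.sqrt (Δx δ ^ 2 + Δy δ ^ 2) with hddef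
  clear_value d
  set a : ℝ → ℝ := fun δ => (d δ ^ 2 + r₀ ^ 2 - (r (t₀ + δ)) ^ 2) / (2 * d δ) with hadef
  clear_value a
  set hh : ℝ → ℝ := fun δ => Real.sqrt (r₀ ^ 2 - a δ ^ 2) with hhhdef
  clear_value hh
  set P : ℝ → ℝ × ℝ := fun δ =>
    (xc t₀ + a δ * (Δx δ / d δ) - σ * hh δ * (Δy δ / d δ),
     yc t₀ + a δ * (Δy δ / d δ) + σ * hh δ * (Δx δ / d δ)) with hPdef
  clear_value P
  -- limits
  have T1 : Tendsto (fun δ => Δx δ / δ) (𝓝[>] (0:ℝ)) (𝓝 x') := by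
    simp only [hΔxdef]
    exact slope_limit xc t₀ x' hdx
  have T2 : Tendsto (fun δ => Δy δ / δ) (𝓝[>] (0:ℝ)) (𝓝 y') := by
    simp only [hΔydef]
    exact slope_limit yc t₀ y' hdy
  have T3 : Tendsto (fun δ => (r₀ ^ 2 - (r (t₀ + δ)) ^ 2) / δ) (𝓝[>] (0:ℝ))
      (𝓝 (-(2 * r₀ * r'))) := by
    have hd2 : HasDerivAt (fun t => (r t) ^ 2) (((2:ℕ):ℝ) * r t₀ ^ (2-1) * r') t₀ := hdr.pow 2
    have := (slope_limit (fun t => (r t) ^ 2) t₀ _ hd2).neg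
    convert this using 1
    · funext δ; rw [hr₀def]; ring
    · rw [hr₀def]; push_cast; ring
  have Td : Tendsto (fun δ => d δ / δ) (𝓝[>] (0:ℝ)) (𝓝 L) := by
    have hcomp : Tendsto (fun δ => Real.sqrt ((Δx δ / δ) ^ 2 + (Δy δ / δ) ^ 2))
        (𝓝[>] (0:ℝ)) (𝓝 L) := by
      rw [hLdef]
      exact (Real.continuous_sqrt.tendsto _).comp ((T1.pow 2).add (T2.pow 2))
    refine hcomp.congr' ?_
    filter_upwards [self_mem_nhdsWithin] with δ (hδ : 0 < δ)
    rw [hddef]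
    simp only
    rw [show (Δx δ / δ) ^ 2 + (Δy δ / δ) ^ 2 = (Δx δ ^ 2 + Δy δ ^ 2) / δ ^ 2 by ring,
      Real.sqrt_div (by positivity) (δ ^ 2), Real.sqrt_sq hδ.le]
  have Td0 : Tendsto d (𝓝[>] (0:ℝ)) (𝓝 0) := by
    have hmt : Tendsto (fun δ => (d δ / δ) * δ) (𝓝[>] (0:ℝ)) (𝓝 (L * 0)) :=
      Td.mul (tendsto_id.mono_left nhdsWithin_le_nhds)
    rw [mul_zero] at hmt
    refine hmt.congr' ?_
    filter_upwards [self_mem_nhdsWithin] with δ (hδ : 0 < δ)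
    exact div_mul_cancel₀ _ hδ.ne'
  have Evd : ∀ᶠ δ in 𝓝[>] (0:ℝ), 0 < d δ := by
    have h1' : ∀ᶠ δ in 𝓝[>] (0:ℝ), L / 2 < d δ / δ :=
      Td.eventually_const_lt (by linarith)
    filter_upwards [h1', self_mem_nhdsWithin] with δ hLd (hδ : 0 < δ)
    have hpos : 0 < d δ / δ := lt_trans (by positivity) hLd
    exact (div_pos_iff.mp hpos).resolve_right
      (fun ⟨_, hneg⟩ => absurd hδ (not_lt.2 hneg.le)) |>.1
  have Tux : Tendsto (fun δ => Δx δ / d δ) (𝓝[>] (0:ℝ)) (𝓝 ux) := by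
    rw [huxdef]
    refine (T1.div Td hL.ne').congr' ?_
    filter_upwards [self_mem_nhdsWithin] with δ (hδ : 0 < δ)
    exact div_div_div_cancel_right₀ hδ.ne' _ _
  have Tuy : Tendsto (fun δ => Δy δ / d δ) (𝓝[>] (0:ℝ)) (𝓝 uy) := by
    rw [huydef]
    refine (T2.div Td hL.ne').congr' ?_
    filter_upwards [self_mem_nhdsWithin] with δ (hδ : 0 < δ)
    exact div_div_div_cancel_right₀ hδ.ne' _ _
  have Ta : Tendsto a (𝓝[>] (0:ℝ)) (𝓝 A) := by
    have hlim : Tendsto (fun δ => d δ / 2 + ((r₀ ^ 2 - (r (t₀ + δ)) ^ 2) / δ) / (2 * (d δ / δ)))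
        (𝓝[>] (0:ℝ)) (𝓝 (0 / 2 + (-(2 * r₀ * r')) / (2 * L))) :=
      (Td0.div_const 2).add (T3.div (Td.const_mul 2) (by positivity))
    have hval : (0:ℝ) / 2 + (-(2 * r₀ * r')) / (2 * L) = A := by
      rw [hAval, zero_div, zero_add,
        div_eq_div_iff (mul_ne_zero two_ne_zero hL.ne') hL.ne']
      ring
    rw [hval] at hlim
    refine hlim.congr' ?_
    filter_upwards [self_mem_nhdsWithin, Evd] with δ (hδ : 0 < δ) hd
    simp only [hadef]
    exact aux_div (d δ) (r₀ ^ 2) ((r (t₀ + δ)) ^ 2) δ hd.ne' hδ.ne'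
  have Eva : ∀ᶠ δ in 𝓝[>] (0:ℝ), a δ ^ 2 < r₀ ^ 2 :=
    (Ta.pow 2).eventually_lt_const hA2
  have Th : Tendsto hh (𝓝[>] (0:ℝ)) (𝓝 H) := by
    rw [hHdef, hhhdef]
    exact (Real.continuous_sqrt.tendsto _).comp (tendsto_const_nhds.sub (Ta.pow 2))
  have TP : Tendsto P (𝓝[>] (0:ℝ)) (𝓝 p) := by
    have hfst : Tendsto (fun δ => xc t₀ + a δ * (Δx δ / d δ) - σ * hh δ * (Δy δ / d δ))
        (𝓝[>] (0:ℝ)) (𝓝 (xc t₀ + A * ux - σ * H * uy)) :=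
      (tendsto_const_nhds.add (Ta.mul Tux)).sub ((tendsto_const_nhds.mul Th).mul Tuy)
    have hsnd : Tendsto (fun δ => yc t₀ + a δ * (Δy δ / d δ) + σ * hh δ * (Δx δ / d δ))
        (𝓝[>] (0:ℝ)) (𝓝 (yc t₀ + A * uy + σ * H * ux)) :=
      (tendsto_const_nhds.add (Ta.mul Tuy)).add ((tendsto_const_nhds.mul Th).mul Tux)
    have hp1 : xc t₀ + A * ux - σ * H * uy = p.1 := by
      rw [hσH, hAdef, hβdef]
      rw [show p.1 = xc t₀ + X by rw [hXdef]; ring]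
      linear_combination X * hunit
    have hp2 : yc t₀ + A * uy + σ * H * ux = p.2 := by
      rw [hσH, hAdef, hβdef]
      rw [show p.2 = yc t₀ + Y by rw [hYdef]; ring]
      linear_combination Y * hunit
    have hprod := hfst.prodMk_nhds hsnd
    rw [hp1, hp2] at hprod
    have hPP : P = fun δ => (xc t₀ + a δ * (Δx δ / d δ) - σ * hh δ * (Δy δ / d δ),
        yc t₀ + a δ * (Δy δ / d δ) + σ * hh δ * (Δx δ / d δ)) := hPdef
    rw [hPP]
    simpa using hprod
  -- eventual properties
  have Ev : ∀ᶠ δ in 𝓝[>] (0:ℝ), (0 < δ ∧ t₀ + δ ∈ Set.Icc s₁ s₂) ∧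
      (((P δ).1 - xc t₀) ^ 2 + ((P δ).2 - yc t₀) ^ 2 - r₀ ^ 2 = 0 ∧
       ((P δ).1 - xc (t₀ + δ)) ^ 2 + ((P δ).2 - yc (t₀ + δ)) ^ 2 - (r (t₀ + δ)) ^ 2 = 0) := by
    have hIoo : Set.Ioo (0:ℝ) (s₂ - t₀) ∈ 𝓝[>] (0:ℝ) :=
      Ioo_mem_nhdsGT_of_mem ⟨le_refl 0, by linarith⟩
    filter_upwards [hIoo, Evd, Eva] with δ hδI hd ha2
    obtain ⟨hδ, hδs⟩ := hδI
    have hIcc : t₀ + δ ∈ Set.Icc s₁ s₂ := ⟨by linarith [ht₀.1], by linarith⟩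
    have hdsq : d δ ^ 2 = Δx δ ^ 2 + Δy δ ^ 2 := by
      rw [hddef]; exact Real.sq_sqrt (by positivity)
    have hhsq : hh δ ^ 2 = r₀ ^ 2 - a δ ^ 2 := by
      rw [hhhdef]; exact Real.sq_sqrt (by linarith)
    have had : a δ * (2 * d δ) = d δ ^ 2 + r₀ ^ 2 - (r (t₀ + δ)) ^ 2 := by
      rw [hadef]; exact div_mul_cancel₀ _ (mul_ne_zero two_ne_zero hd.ne')
    have hP1 : (P δ).1 = xc t₀ + a δ * (Δx δ / d δ) - σ * hh δ * (Δy δ / d δ) := by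
      rw [hPdef]
    have hP2 : (P δ).2 = yc t₀ + a δ * (Δy δ / d δ) + σ * hh δ * (Δx δ / d δ) := by
      rw [hPdef]
    rw [hP1, hP2]
    set u := Δx δ / d δ with hudef
    set v := Δy δ / d δ with hvdef
    have huv : u ^ 2 + v ^ 2 = 1 := by
      rw [hudef, hvdef, div_pow, div_pow, ← add_div, ← hdsq]
      exact div_self (pow_ne_zero 2 hd.ne')
    have hdu : d δ * u = Δx δ := by
      rw [hudef, mul_comm]; exact div_mul_cancel₀ _ hd.ne'
    have hdv : d δ * v = Δy δ := by
      rw [hvdef, mul_comm]; exact div_mul_cancel₀ _ hd.ne'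
    clear_value u v
    have hxeq : xc (t₀ + δ) = xc t₀ + d δ * u := by
      rw [hdu]; simp only [hΔxdef]; ring
    have hyeq : yc (t₀ + δ) = yc t₀ + d δ * v := by
      rw [hdv]; simp only [hΔydef]; ring
    constructor
    · exact ⟨hδ, hIcc⟩
    constructor
    · linear_combination (a δ ^ 2 + σ ^ 2 * hh δ ^ 2) * huv + hh δ ^ 2 * hσ2 + hhsq
    · rw [hxeq, hyeq]
      linear_combination ((a δ - d δ) ^ 2 + σ ^ 2 * hh δ ^ 2) * huv + hh δ ^ 2 * hσ2 + hhsq - had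
  -- extract ε and build sequences
  obtain ⟨s, hsmem, hsub⟩ := Ev.exists_mem
  obtain ⟨ε, (hε : 0 < ε), hIooSub⟩ := mem_nhdsGT_iff_exists_Ioo_subset.1 hsmem
  set δn : ℕ → ℝ := fun n => ε / ((n:ℝ) + 2) with hδndef
  have hδpos : ∀ n, 0 < δn n := fun n => by rw [hδndef]; positivity
  have hδlt : ∀ n, δn n < ε := by
    intro n
    rw [hδndef]
    calc ε / ((n:ℝ) + 2) < ε / 1 := by
          apply div_lt_div_of_pos_left hε one_pos
          have h0 : (0:ℝ) ≤ (n:ℝ) := Nat.cast_nonneg n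
          linarith
      _ = ε := div_one ε
  have hQ : ∀ n, (0 < δn n ∧ t₀ + δn n ∈ Set.Icc s₁ s₂) ∧
      (((P (δn n)).1 - xc t₀) ^ 2 + ((P (δn n)).2 - yc t₀) ^ 2 - r₀ ^ 2 = 0 ∧
       ((P (δn n)).1 - xc (t₀ + δn n)) ^ 2 + ((P (δn n)).2 - yc (t₀ + δn n)) ^ 2
         - (r (t₀ + δn n)) ^ 2 = 0) :=
    fun n => hsub _ (hIooSub ⟨hδpos n, hδlt n⟩)
  have hδ0 : Tendsto δn atTop (𝓝 0) := by
    rw [hδndef]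
    exact Tendsto.div_atTop tendsto_const_nhds
      (tendsto_atTop_add_const_right atTop 2 tendsto_natCast_atTop_atTop)
  refine ⟨t₀, fun _ => t₀, fun n => t₀ + δn n, fun n => P (δn n), ht₀,
    fun _ => ht₀, fun n => (hQ n).1.2, fun n => show t₀ ≠ t₀ + δn n from ne_of_lt (lt_add_of_pos_right t₀ (hδpos n)), ?_, ?_, ?_, ?_⟩
  · exact tendsto_const_nhds
  · have hadd := hδ0.const_add t₀
    simpa using hadd
  · intro n
    refine ⟨?_, (hQ n).2.2⟩
    have := (hQ n).2.1
    rw [hr₀def] at this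
    exact this
  · refine TP.comp ?_
    rw [tendsto_nhdsWithin_iff]
    exact ⟨hδ0, Filter.Eventually.of_forall fun n => hδpos n⟩
end

section
/- Let s₁ < s₂ and let x_c, y_c, r : ℝ → ℝ be twice continuously differentiable on [s₁, s₂], with r(t) > 0 and r′(t)² < x_c′(t)² + y_c′(t)² for all t ∈ (s₁, s₂). Define F(x, y, t) = (x − x_c(t))² + (y − y_c(t))² − r(t)², let C_t = { (x,y) : F(x,y,t) = 0 }, D_t = { (x,y) : (x − x_c(t))² + (y − y_c(t))² < r(t)² }, and Ω = ⋃_{t ∈ [s₁, s₂]} D_t. Then the topological boundary of Ω satisfies ∂Ω ⊆ E₃ ∪ C_{s₁} ∪ C_{s₂}, where E₃ = { (x, y) ∈ ℝ² : there exists t ∈ [s₁, s₂] with F(x, y, t) = 0 and ∂F/∂t(x, y, t) = 0 } is the discriminant envelope of the family. -/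
theorem boundary_subset_discriminant_envelope
    (s₁ s₂ : ℝ) (hs : s₁ < s₂) (xc yc r : ℝ → ℝ)
    (hxc : ContDiffOn ℝ 2 xc (Set.Icc s₁ s₂))
    (hyc : ContDiffOn ℝ 2 yc (Set.Icc s₁ s₂))
    (hr : ContDiffOn ℝ 2 r (Set.Icc s₁ s₂))
    (hrpos : ∀ t ∈ Set.Ioo s₁ s₂, 0 < r t)
    (hderiv : ∀ t ∈ Set.Ioo s₁ s₂,
      (deriv r t) ^ 2 < (deriv xc t) ^ 2 + (deriv yc t) ^ 2) :
    frontier (⋃ t ∈ Set.Icc s₁ s₂,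
        {p : ℝ × ℝ | (p.1 - xc t) ^ 2 + (p.2 - yc t) ^ 2 < (r t) ^ 2}) ⊆
      {p : ℝ × ℝ | ∃ t ∈ Set.Icc s₁ s₂,
          (p.1 - xc t) ^ 2 + (p.2 - yc t) ^ 2 - (r t) ^ 2 = 0 ∧
          deriv (fun s : ℝ => (p.1 - xc s) ^ 2 + (p.2 - yc s) ^ 2 - (r s) ^ 2) t = 0} ∪
        {p : ℝ × ℝ | (p.1 - xc s₁) ^ 2 + (p.2 - yc s₁) ^ 2 - (r s₁) ^ 2 = 0} ∪
        {p : ℝ × ℝ | (p.1 - xc s₂) ^ 2 + (p.2 - yc s₂) ^ 2 - (r s₂) ^ 2 = 0} := by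
  intro p hp
  set Ω := ⋃ t ∈ Set.Icc s₁ s₂,
      {p : ℝ × ℝ | (p.1 - xc t) ^ 2 + (p.2 - yc t) ^ 2 < (r t) ^ 2} with hΩdef
  have hopen : IsOpen Ω := by
    apply isOpen_biUnion
    intro t _
    exact isOpen_lt (by fun_prop) continuous_const
  have hpcl : p ∈ closure Ω := hp.1
  have hpnot : p ∉ Ω := fun h => hp.2 (by rw [hopen.interior_eq]; exact h)
  set g : ℝ → ℝ := fun t => (p.1 - xc t) ^ 2 + (p.2 - yc t) ^ 2 - (r t) ^ 2 with hgdef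
  have hg0 : ∀ t ∈ Set.Icc s₁ s₂, 0 ≤ g t := by
    intro t ht
    by_contra hlt
    push_neg at hlt
    apply hpnot
    refine Set.mem_biUnion ht ?_
    simp only [Set.mem_setOf_eq]
    have hlt' : (p.1 - xc t) ^ 2 + (p.2 - yc t) ^ 2 - (r t) ^ 2 < 0 := hlt
    linarith
  have hgcont : ContinuousOn g (Set.Icc s₁ s₂) := by
    apply ContinuousOn.sub
    · exact ((continuousOn_const.sub hxc.continuousOn).pow 2).add
        ((continuousOn_const.sub hyc.continuousOn).pow 2)
    · exact hr.continuousOn.pow 2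
  obtain ⟨t₀, ht₀, hmin⟩ := isCompact_Icc.exists_isMinOn
    ⟨s₁, Set.left_mem_Icc.mpr hs.le⟩ hgcont
  by_cases hm : g t₀ = 0
  · -- minimum is zero
    rcases eq_or_lt_of_le ht₀.1 with h1 | h1
    · left; right; simpa [hgdef, ← h1] using hm
    rcases eq_or_lt_of_le ht₀.2 with h2 | h2
    · right; simpa [hgdef, h2] using hm
    -- interior case
    have hnhds : Set.Icc s₁ s₂ ∈ nhds t₀ := Icc_mem_nhds h1 h2
    have hxd : DifferentiableAt ℝ xc t₀ :=
      ((hxc.differentiableOn (by norm_num)) t₀ ht₀).differentiableAt hnhds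
    have hyd : DifferentiableAt ℝ yc t₀ :=
      ((hyc.differentiableOn (by norm_num)) t₀ ht₀).differentiableAt hnhds
    have hrd : DifferentiableAt ℝ r t₀ :=
      ((hr.differentiableOn (by norm_num)) t₀ ht₀).differentiableAt hnhds
    have hgd : DifferentiableAt ℝ g t₀ := by
      apply DifferentiableAt.sub
      · exact (((differentiableAt_const _).sub hxd).pow 2).add
          (((differentiableAt_const _).sub hyd).pow 2)
      · exact hrd.pow 2
    have hloc : IsLocalMin g t₀ := hmin.isLocalMin hnhds
    have hd0 : deriv g t₀ = 0 := hloc.deriv_eq_zero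
    left; left
    exact ⟨t₀, ht₀, hm, hd0⟩
  · -- minimum positive: contradiction with closure
    exfalso
    have hmpos : 0 < g t₀ := lt_of_le_of_ne (hg0 t₀ ht₀) (Ne.symm hm)
    have hall : ∀ t ∈ Set.Icc s₁ s₂, 0 < g t := fun t ht => lt_of_lt_of_le hmpos (hmin ht)
    -- extend xc, yc, r continuously
    set c : ℝ → ℝ := fun t => max s₁ (min t s₂) with hcdef
    have hcmem : ∀ t, c t ∈ Set.Icc s₁ s₂ :=
      fun t => ⟨le_max_left _ _, max_le hs.le (min_le_right _ _)⟩
    have hceq : ∀ t ∈ Set.Icc s₁ s₂, c t = t := by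
      intro t ht
      simp [hcdef, min_eq_left ht.2, max_eq_right ht.1]
    have hccont : Continuous c := continuous_const.max (continuous_id.min continuous_const)
    set G : (ℝ × ℝ) × ℝ → ℝ := fun z =>
      (z.1.1 - xc (c z.2)) ^ 2 + (z.1.2 - yc (c z.2)) ^ 2 - (r (c z.2)) ^ 2 with hGdef
    have hGcont : Continuous G := by
      have hx : Continuous (fun z : (ℝ × ℝ) × ℝ => xc (c z.2)) :=
        hxc.continuousOn.comp_continuous (hccont.comp continuous_snd) (fun z => hcmem _)
      have hy : Continuous (fun z : (ℝ × ℝ) × ℝ => yc (c z.2)) :=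
        hyc.continuousOn.comp_continuous (hccont.comp continuous_snd) (fun z => hcmem _)
      have hrr : Continuous (fun z : (ℝ × ℝ) × ℝ => r (c z.2)) :=
        hr.continuousOn.comp_continuous (hccont.comp continuous_snd) (fun z => hcmem _)
      apply Continuous.sub
      · exact (((continuous_fst.comp continuous_fst).sub hx).pow 2).add
          (((continuous_snd.comp continuous_fst).sub hy).pow 2)
      · exact hrr.pow 2
    have hSopen : IsOpen {z : (ℝ × ℝ) × ℝ | 0 < G z} := isOpen_lt continuous_const hGcont
    have hsub : ({p} : Set (ℝ × ℝ)) ×ˢ Set.Icc s₁ s₂ ⊆ {z | 0 < G z} := by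
      rintro ⟨q, t⟩ ⟨hq, ht⟩
      simp only [Set.mem_singleton_iff] at hq
      subst hq
      simp only [Set.mem_setOf_eq, hGdef, hceq t ht]
      exact hall t ht
    obtain ⟨u, v, hu, hv, hpu, hIv, huv⟩ :=
      generalized_tube_lemma isCompact_singleton isCompact_Icc hSopen hsub
    obtain ⟨q, hqu, hqΩ⟩ := mem_closure_iff.mp hpcl u hu (hpu rfl)
    obtain ⟨t, ht, hqlt⟩ := Set.mem_iUnion₂.mp hqΩ
    have hGqt : 0 < G (q, t) := huv ⟨hqu, hIv ht⟩
    simp only [hGdef, hceq t ht] at hGqt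
    simp only [Set.mem_setOf_eq] at hqlt
    linarith
end

section
/- Let s₁ ≤ s₂ and let x_c, y_c, r : ℝ → ℝ be continuous on [s₁, s₂]. Let D_t = { (x,y) ∈ ℝ² : (x − x_c(t))² + (y − y_c(t))² < r(t)² }, C_t = { (x,y) ∈ ℝ² : (x − x_c(t))² + (y − y_c(t))² = r(t)² }, and Ω = ⋃_{t ∈ [s₁, s₂]} D_t. Then every point of the topological boundary ∂Ω lies on some circle of the family: ∂Ω ⊆ ⋃_{t ∈ [s₁, s₂]} C_t. -/
theorem boundary_subset_union_of_circles
    (s₁ s₂ : ℝ) (hs : s₁ ≤ s₂) (xc yc r : ℝ → ℝ)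
    (hxc : ContinuousOn xc (Set.Icc s₁ s₂))
    (hyc : ContinuousOn yc (Set.Icc s₁ s₂))
    (hr : ContinuousOn r (Set.Icc s₁ s₂)) :
    frontier (⋃ t ∈ Set.Icc s₁ s₂,
        {p : ℝ × ℝ | (p.1 - xc t) ^ 2 + (p.2 - yc t) ^ 2 < (r t) ^ 2}) ⊆
      ⋃ t ∈ Set.Icc s₁ s₂,
        {p : ℝ × ℝ | (p.1 - xc t) ^ 2 + (p.2 - yc t) ^ 2 = (r t) ^ 2} := by
  set Ω : Set (ℝ × ℝ) := ⋃ t ∈ Set.Icc s₁ s₂,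
    {p : ℝ × ℝ | (p.1 - xc t) ^ 2 + (p.2 - yc t) ^ 2 < (r t) ^ 2} with hΩ
  have hopen : IsOpen Ω := by
    apply isOpen_biUnion
    intro t _
    exact isOpen_lt (by continuity) continuous_const
  -- continuity of the defining function jointly
  set g : ℝ × (ℝ × ℝ) → ℝ :=
    fun q => (q.2.1 - xc q.1) ^ 2 + (q.2.2 - yc q.1) ^ 2 - (r q.1) ^ 2 with hg
  have hgc : ContinuousOn g (Set.Icc s₁ s₂ ×ˢ (Set.univ : Set (ℝ × ℝ))) := by
    have h1 : ContinuousOn (fun q : ℝ × (ℝ × ℝ) => xc q.1)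
        (Set.Icc s₁ s₂ ×ˢ (Set.univ : Set (ℝ × ℝ))) :=
      hxc.comp continuous_fst.continuousOn (fun q hq => hq.1)
    have h2 : ContinuousOn (fun q : ℝ × (ℝ × ℝ) => yc q.1)
        (Set.Icc s₁ s₂ ×ˢ (Set.univ : Set (ℝ × ℝ))) :=
      hyc.comp continuous_fst.continuousOn (fun q hq => hq.1)
    have h3 : ContinuousOn (fun q : ℝ × (ℝ × ℝ) => r q.1)
        (Set.Icc s₁ s₂ ×ˢ (Set.univ : Set (ℝ × ℝ))) :=
      hr.comp continuous_fst.continuousOn (fun q hq => hq.1)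
    apply ContinuousOn.sub
    · exact (((continuous_fst.comp continuous_snd).continuousOn.sub h1).pow 2).add
        (((continuous_snd.comp continuous_snd).continuousOn.sub h2).pow 2)
    · exact h3.pow 2
  intro p hp
  rw [hopen.frontier_eq] at hp
  obtain ⟨hpc, hpn⟩ := hp
  -- p not in Ω: for all t in Icc, g (t, p) ≥ 0
  have hge : ∀ t ∈ Set.Icc s₁ s₂, 0 ≤ g (t, p) := by
    intro t ht
    by_contra h
    push_neg at h
    exact hpn (Set.mem_biUnion ht (by simpa [hg, sub_neg] using h))
  -- p in closure: sequence
  obtain ⟨u, hu, hul⟩ := mem_closure_iff_seq_limit.1 hpc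
  have hchoice : ∀ n, ∃ t ∈ Set.Icc s₁ s₂, g (t, u n) < 0 := by
    intro n
    obtain ⟨t, ht, htt⟩ := Set.mem_iUnion₂.1 (hu n)
    exact ⟨t, ht, by simpa [hg, sub_neg] using htt⟩
  choose τ hτmem hτlt using hchoice
  obtain ⟨a, ha, φ, hφ, hτa⟩ := isCompact_Icc.tendsto_subseq hτmem
  refine Set.mem_biUnion ha ?_
  have hpair : Filter.Tendsto (fun n => (τ (φ n), u (φ n))) Filter.atTop
      (nhdsWithin (a, p) (Set.Icc s₁ s₂ ×ˢ (Set.univ : Set (ℝ × ℝ)))) := by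
    rw [tendsto_nhdsWithin_iff]
    constructor
    · exact hτa.prodMk_nhds (hul.comp hφ.tendsto_atTop)
    · exact Filter.Eventually.of_forall (fun n => ⟨hτmem (φ n), trivial⟩)
  have hgt : Filter.Tendsto (fun n => g (τ (φ n), u (φ n))) Filter.atTop
      (nhds (g (a, p))) := (hgc (a, p) ⟨ha, trivial⟩).tendsto.comp hpair
  have hle : g (a, p) ≤ 0 :=
    le_of_tendsto hgt (Filter.Eventually.of_forall fun n => (hτlt (φ n)).le)
  have : g (a, p) = 0 := le_antisymm hle (hge a ha)
  simpa [hg, sub_eq_zero] using this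
end

section
/- Let s₁ < s₂ and let x_c, y_c, r : ℝ → ℝ be twice continuously differentiable on [s₁, s₂], with r(t) > 0 and r′(t)² < x_c′(t)² + y_c′(t)² for all t ∈ (s₁, s₂). Let D_t = { (x,y) : (x − x_c(t))² + (y − y_c(t))² < r(t)² }, C_t its boundary circle, and Ω = ⋃_{t ∈ [s₁, s₂]} D_t. Then for each t ∈ (s₁, s₂), the circle C_t contributes at most two points to ∂Ω; namely ∂Ω ∩ C_t ⊆ { P₁(t), P₂(t) }, where for j = 1, 2: P_j(t) = (x_j(t), y_j(t)) with x_j(t) = x_c(t) + (r(t)/(x_c′(t)² + y_c′(t)²))·(−x_c′(t)·r′(t) + (−1)^{j+1}·y_c′(t)·sqrt(x_c′(t)² + y_c′(t)² − r′(t)²)) and y_j(t) = y_c(t) + (r(t)/(x_c′(t)² + y_c′(t)²))·(−y_c′(t)·r′(t) + (−1)^{j}·x_c′(t)·sqrt(x_c′(t)² + y_c′(t)² − r′(t)²)). -/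
theorem circle_contributes_at_most_two_points
    (s₁ s₂ : ℝ) (hs : s₁ < s₂) (xc yc r : ℝ → ℝ)
    (hxc : ContDiffOn ℝ 2 xc (Set.Icc s₁ s₂))
    (hyc : ContDiffOn ℝ 2 yc (Set.Icc s₁ s₂))
    (hr : ContDiffOn ℝ 2 r (Set.Icc s₁ s₂))
    (hrpos : ∀ t ∈ Set.Ioo s₁ s₂, 0 < r t)
    (hderiv : ∀ t ∈ Set.Ioo s₁ s₂,
      (deriv r t) ^ 2 < (deriv xc t) ^ 2 + (deriv yc t) ^ 2) :
    ∀ t ∈ Set.Ioo s₁ s₂,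
      frontier (⋃ s ∈ Set.Icc s₁ s₂,
          {p : ℝ × ℝ | (p.1 - xc s) ^ 2 + (p.2 - yc s) ^ 2 < (r s) ^ 2}) ∩
        {p : ℝ × ℝ | (p.1 - xc t) ^ 2 + (p.2 - yc t) ^ 2 = (r t) ^ 2} ⊆
      {(xc t + r t / ((deriv xc t) ^ 2 + (deriv yc t) ^ 2) *
          (-(deriv xc t) * deriv r t +
            deriv yc t *
              Real.sqrt ((deriv xc t) ^ 2 + (deriv yc t) ^ 2 - (deriv r t) ^ 2)),
        yc t + r t / ((deriv xc t) ^ 2 + (deriv yc t) ^ 2) *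
          (-(deriv yc t) * deriv r t -
            deriv xc t *
              Real.sqrt ((deriv xc t) ^ 2 + (deriv yc t) ^ 2 - (deriv r t) ^ 2))),
       (xc t + r t / ((deriv xc t) ^ 2 + (deriv yc t) ^ 2) *
          (-(deriv xc t) * deriv r t -
            deriv yc t *
              Real.sqrt ((deriv xc t) ^ 2 + (deriv yc t) ^ 2 - (deriv r t) ^ 2)),
        yc t + r t / ((deriv xc t) ^ 2 + (deriv yc t) ^ 2) *
          (-(deriv yc t) * deriv r t +
            deriv xc t *
              Real.sqrt ((deriv xc t) ^ 2 + (deriv yc t) ^ 2 - (deriv r t) ^ 2)))} := by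
  intro t ht p hp
  obtain ⟨hpf, hpc⟩ := hp
  simp only [Set.mem_setOf_eq] at hpc
  set a := deriv xc t with ha
  set b := deriv yc t with hb
  set ρ := deriv r t with hρ
  have hA : ρ ^ 2 < a ^ 2 + b ^ 2 := hderiv t ht
  have hApos : 0 < a ^ 2 + b ^ 2 := lt_of_le_of_lt (sq_nonneg ρ) hA
  have hmem : Set.Icc s₁ s₂ ∈ nhds t := Icc_mem_nhds ht.1 ht.2
  have hxd : DifferentiableAt ℝ xc t :=
    (hxc.differentiableOn two_ne_zero).differentiableAt hmem
  have hyd : DifferentiableAt ℝ yc t :=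
    (hyc.differentiableOn two_ne_zero).differentiableAt hmem
  have hrd : DifferentiableAt ℝ r t :=
    (hr.differentiableOn two_ne_zero).differentiableAt hmem
  -- the union is open
  have hopen : IsOpen (⋃ s ∈ Set.Icc s₁ s₂,
      {p : ℝ × ℝ | (p.1 - xc s) ^ 2 + (p.2 - yc s) ^ 2 < (r s) ^ 2}) := by
    refine isOpen_biUnion fun s _ => ?_
    exact isOpen_lt (by fun_prop) continuous_const
  have hnot : p ∉ (⋃ s ∈ Set.Icc s₁ s₂,
      {p : ℝ × ℝ | (p.1 - xc s) ^ 2 + (p.2 - yc s) ^ 2 < (r s) ^ 2}) := by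
    rw [hopen.frontier_eq] at hpf
    exact hpf.2
  -- distance function
  set f : ℝ → ℝ := fun s => (p.1 - xc s) ^ 2 + (p.2 - yc s) ^ 2 - (r s) ^ 2 with hf
  have hge : ∀ s ∈ Set.Icc s₁ s₂, 0 ≤ f s := by
    intro s hsm
    by_contra h
    push_neg at h
    have h2 : (p.1 - xc s) ^ 2 + (p.2 - yc s) ^ 2 - (r s) ^ 2 < 0 := h
    exact hnot (Set.mem_biUnion hsm (by simp only [Set.mem_setOf_eq]; linarith))
  have hft : f t = 0 := by simp only [hf]; linarith
  have hloc : IsLocalMin f t := by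
    refine Filter.eventually_of_mem hmem fun s hsm => ?_
    rw [hft]; exact hge s hsm
  have hfd : HasDerivAt f
      ((2:ℕ) * (p.1 - xc t) ^ 1 * (0 - a) + (2:ℕ) * (p.2 - yc t) ^ 1 * (0 - b)
        - (2:ℕ) * (r t) ^ 1 * ρ) t := by
    exact ((((hasDerivAt_const t p.1).sub hxd.hasDerivAt).pow 2).add
      (((hasDerivAt_const t p.2).sub hyd.hasDerivAt).pow 2)).sub (hrd.hasDerivAt.pow 2)
  have h0 := hloc.hasDerivAt_eq_zero hfd
  set u := p.1 - xc t with hu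
  set v := p.2 - yc t with hv
  have heq : u * a + v * b = -(r t * ρ) := by
    push_cast at h0
    nlinarith [h0]
  set w := Real.sqrt (a ^ 2 + b ^ 2 - ρ ^ 2) with hww
  have hw2 : w ^ 2 = a ^ 2 + b ^ 2 - ρ ^ 2 := Real.sq_sqrt (by linarith)
  have hq2 : (b * u - a * v) ^ 2 = (r t * w) ^ 2 := by
    linear_combination (a ^ 2 + b ^ 2) * hpc - (u * a + v * b - r t * ρ) * heq
      - (r t) ^ 2 * hw2
  have hfac : (b * u - a * v - r t * w) * (b * u - a * v + r t * w) = 0 := by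
    linear_combination hq2
  have hAne : a ^ 2 + b ^ 2 ≠ 0 := ne_of_gt hApos
  simp only [Set.mem_insert_iff, Set.mem_singleton_iff, Prod.ext_iff]
  rcases mul_eq_zero.mp hfac with hq | hq
  · left
    have hq' : b * u - a * v = r t * w := by linarith
    have hu' : u = r t / (a ^ 2 + b ^ 2) * (-a * ρ + b * w) := by
      field_simp
      linear_combination a * heq + b * hq'
    have hv' : v = r t / (a ^ 2 + b ^ 2) * (-b * ρ - a * w) := by
      field_simp
      linear_combination b * heq - a * hq'
    exact ⟨by linarith [hu', hu], by linarith [hv', hv]⟩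
  · right
    have hq' : b * u - a * v = -(r t * w) := by linarith
    have hu' : u = r t / (a ^ 2 + b ^ 2) * (-a * ρ - b * w) := by
      field_simp
      linear_combination a * heq + b * hq'
    have hv' : v = r t / (a ^ 2 + b ^ 2) * (-b * ρ + a * w) := by
      field_simp
      linear_combination b * heq - a * hq'
    exact ⟨by linarith [hu', hu], by linarith [hv', hv]⟩
end

section
/- Let s₁ < s₂ and let x_c, y_c, r : ℝ → ℝ be twice continuously differentiable on [s₁, s₂], with r(t) > 0 and r′(t)² < x_c′(t)² + y_c′(t)² for all t ∈ (s₁, s₂). Let C_t = { (x,y) : (x − x_c(t))² + (y − y_c(t))² = r(t)² }. Then for each t₀ ∈ (s₁, s₂) there exists δ > 0 such that for all t ∈ [s₁, s₂] with 0 < |t − t₀| < δ, the circles C_t and C_{t₀} intersect in exactly two distinct points. -/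
lemma circles_inter_pair (x₁ y₁ r₁ x₂ y₂ r₂ : ℝ)
    (hD : 0 < (x₂-x₁)^2 + (y₂-y₁)^2)
    (h₁ : (r₁-r₂)^2 < (x₂-x₁)^2 + (y₂-y₁)^2)
    (h₂ : (x₂-x₁)^2 + (y₂-y₁)^2 < (r₁+r₂)^2) :
    ∃ p q : ℝ × ℝ, p ≠ q ∧
      {x : ℝ × ℝ | (x.1 - x₁)^2 + (x.2 - y₁)^2 = r₁^2} ∩
      {x : ℝ × ℝ | (x.1 - x₂)^2 + (x.2 - y₂)^2 = r₂^2} = {p, q} := by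
  set a := x₂ - x₁ with ha
  set b := y₂ - y₁ with hb
  set D := (x₂-x₁)^2 + (y₂-y₁)^2 with hDdef
  set K := D + r₁^2 - r₂^2 with hK
  have hΔ : 0 < 4*D*r₁^2 - K^2 := by nlinarith
  set E := Real.sqrt (4*D*r₁^2 - K^2) with hE
  have hE2 : E^2 = 4*D*r₁^2 - K^2 := Real.sq_sqrt hΔ.le
  have hEpos : 0 < E := Real.sqrt_pos.mpr hΔ
  have hDab : D = a^2 + b^2 := by rw [hDdef, ha, hb]
  refine ⟨(x₁ + (a*K - b*E)/(2*D), y₁ + (b*K + a*E)/(2*D)),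
          (x₁ + (a*K + b*E)/(2*D), y₁ + (b*K - a*E)/(2*D)), ?_, ?_⟩
  · intro h
    rw [Prod.ext_iff] at h
    obtain ⟨h1, h2⟩ := h
    simp only at h1 h2
    have hb0 : b * E = 0 := by
      field_simp at h1
      linarith
    have ha0 : a * E = 0 := by
      field_simp at h2
      linarith
    have : a = 0 := by
      rcases mul_eq_zero.mp ha0 with h | h
      · exact h
      · exact absurd h hEpos.ne'
    have : b = 0 := by
      rcases mul_eq_zero.mp hb0 with h | h
      · exact h
      · exact absurd h hEpos.ne'
    nlinarith [hD]
  · ext ⟨x, y⟩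
    simp only [Set.mem_inter_iff, Set.mem_setOf_eq, Set.mem_insert_iff,
      Set.mem_singleton_iff, Prod.mk.injEq]
    constructor
    · rintro ⟨h1, h2⟩
      have hKeq : 2*a*(x - x₁) + 2*b*(y - y₁) = K := by
        rw [hK, hDdef, ha, hb]; linear_combination h1 - h2
      have hV2 : (-2*b*(x - x₁) + 2*a*(y - y₁))^2 = E^2 := by
        rw [hE2]
        linear_combination 4*D*h1 - (2*a*(x-x₁)+2*b*(y-y₁)+K)*hKeq - 4*((x-x₁)^2+(y-y₁)^2)*hDab
      have hfac : ((-2*b*(x - x₁) + 2*a*(y - y₁)) - E) * ((-2*b*(x - x₁) + 2*a*(y - y₁)) + E) = 0 := by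
        linear_combination hV2
      rcases mul_eq_zero.mp hfac with hV | hV
      · left
        have hVE : -2*b*(x - x₁) + 2*a*(y - y₁) = E := by linarith
        constructor
        · field_simp
          linear_combination a * hKeq - b * hVE - (2:ℝ) * hDab * x + 2 * hDab * x₁
        · field_simp
          linear_combination b * hKeq + a * hVE - (2:ℝ) * hDab * y + 2 * hDab * y₁
      · right
        have hVE : -2*b*(x - x₁) + 2*a*(y - y₁) = -E := by linarith
        constructor
        · field_simp
          linear_combination a * hKeq - b * hVE - (2:ℝ) * hDab * x + 2 * hDab * x₁
        · field_simp
          linear_combination b * hKeq + a * hVE - (2:ℝ) * hDab * y + 2 * hDab * y₁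
    · have hx2 : x₂ = x₁ + a := by rw [ha]; ring
      have hy2 : y₂ = y₁ + b := by rw [hb]; ring
      rintro (⟨hx, hy⟩ | ⟨hx, hy⟩) <;> subst hx <;> subst hy <;>
        refine ⟨?_, ?_⟩ <;> field_simp <;> (try simp only [hx2, hy2]) <;>
        first
        | linear_combination (a^2+b^2)*hE2 - 4*D*r₁^2*hDab
        | linear_combination (a^2+b^2)*hE2 - (4*D^2-4*D*K+4*D*r₁^2)*hDab - 4*D^2*hK

lemma cs_aux (p q a b : ℝ) : (p*a + q*b)^2 ≤ (p^2+q^2)*(a^2+b^2) := by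
  nlinarith [sq_nonneg (p*b - q*a)]

lemma sq_lt_sq_aux {x y : ℝ} (hx : 0 ≤ x) (hxy : x < y) : x^2 < y^2 := by
  nlinarith

lemma mvt_aux {f : ℝ → ℝ} {S : Set ℝ} (hS : Convex ℝ S) {ε c : ℝ}
    (hf : ∀ s ∈ S, HasDerivAt f (deriv f s) s)
    (hb : ∀ s ∈ S, |deriv f s - c| ≤ ε)
    {t₀ t : ℝ} (h₀ : t₀ ∈ S) (ht : t ∈ S) :
    |f t - f t₀ - c * (t - t₀)| ≤ ε * |t - t₀| := by
  have hder : ∀ s ∈ S, HasDerivWithinAt (fun x => f x - c * x) (deriv f s - c) S s := by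
    intro s hs
    have h1 : HasDerivAt (fun x : ℝ => c * x) c s := by
      simpa using (hasDerivAt_id s).const_mul c
    exact ((hf s hs).sub h1).hasDerivWithinAt
  have hbound : ∀ s ∈ S, ‖deriv f s - c‖ ≤ ε := by
    intro s hs; simpa [Real.norm_eq_abs] using hb s hs
  have H := hS.norm_image_sub_le_of_norm_hasDerivWithin_le hder hbound h₀ ht
  simp only [Real.norm_eq_abs] at H
  calc |f t - f t₀ - c * (t - t₀)| = |(f t - c * t) - (f t₀ - c * t₀)| := by
        congr 1; ring
    _ ≤ ε * |t - t₀| := H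

theorem nearby_circles_intersect_in_two_points
    (s₁ s₂ : ℝ) (hs : s₁ < s₂) (xc yc r : ℝ → ℝ)
    (hxc : ContDiffOn ℝ 2 xc (Set.Icc s₁ s₂))
    (hyc : ContDiffOn ℝ 2 yc (Set.Icc s₁ s₂))
    (hr : ContDiffOn ℝ 2 r (Set.Icc s₁ s₂))
    (hrpos : ∀ t ∈ Set.Ioo s₁ s₂, 0 < r t)
    (hderiv : ∀ t ∈ Set.Ioo s₁ s₂,
      (deriv r t) ^ 2 < (deriv xc t) ^ 2 + (deriv yc t) ^ 2) :
    ∀ t₀ ∈ Set.Ioo s₁ s₂, ∃ δ > 0, ∀ t ∈ Set.Icc s₁ s₂,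
      0 < |t - t₀| → |t - t₀| < δ →
      ∃ p q : ℝ × ℝ, p ≠ q ∧
        {x : ℝ × ℝ | (x.1 - xc t) ^ 2 + (x.2 - yc t) ^ 2 = (r t) ^ 2} ∩
          {x : ℝ × ℝ | (x.1 - xc t₀) ^ 2 + (x.2 - yc t₀) ^ 2 = (r t₀) ^ 2} = {p, q} := by
  intro t₀ ht₀
  have hI : IsOpen (Set.Ioo s₁ s₂) := isOpen_Ioo
  have hsub : Set.Ioo s₁ s₂ ⊆ Set.Icc s₁ s₂ := Set.Ioo_subset_Icc_self
  -- derivatives exist and are continuous on the open interval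
  have hder : ∀ f : ℝ → ℝ, ContDiffOn ℝ 2 f (Set.Icc s₁ s₂) →
      (∀ s ∈ Set.Ioo s₁ s₂, HasDerivAt f (deriv f s) s) ∧
      ContinuousOn (deriv f) (Set.Ioo s₁ s₂) := by
    intro f hf
    have hfI : ContDiffOn ℝ 2 f (Set.Ioo s₁ s₂) := hf.mono hsub
    constructor
    · intro s hs
      exact ((hfI.differentiableOn (by norm_num)).differentiableAt
        (hI.mem_nhds hs)).hasDerivAt
    · exact hfI.continuousOn_deriv_of_isOpen hI (by norm_num)
  obtain ⟨hdx, hcx⟩ := hder xc hxc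
  obtain ⟨hdy, hcy⟩ := hder yc hyc
  obtain ⟨hdr, hcr⟩ := hder r hr
  set x' := deriv xc t₀ with hx'
  set y' := deriv yc t₀ with hy'
  have hAB : (deriv r t₀)^2 < x'^2 + y'^2 := hderiv t₀ ht₀
  set A := Real.sqrt (x'^2 + y'^2) with hAdef
  have hA2 : A^2 = x'^2 + y'^2 := Real.sq_sqrt (by positivity)
  have hApos : 0 < A := Real.sqrt_pos.mpr (lt_of_le_of_lt (sq_nonneg _) hAB)
  set B := |deriv r t₀| with hBdef
  have hBnn : 0 ≤ B := abs_nonneg _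
  have hB2 : B^2 = (deriv r t₀)^2 := sq_abs _
  have hBA : B < A := by nlinarith
  set ε := (A - B)/8 with hεdef
  have hεpos : 0 < ε := by rw [hεdef]; linarith
  have hA2ε : 0 < A - 2*ε := by rw [hεdef]; linarith
  have hxA : |x'| ≤ A := by nlinarith [sq_abs x', abs_nonneg x', sq_nonneg y']
  have hyA : |y'| ≤ A := by nlinarith [sq_abs y', abs_nonneg y', sq_nonneg x']
  clear_value A B ε
  -- find η > 0 controlling the derivatives
  have hcts : ∀ f : ℝ → ℝ, ContinuousOn (deriv f) (Set.Ioo s₁ s₂) →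
      ∃ η > 0, ∀ s : ℝ, |s - t₀| < η → |deriv f s - deriv f t₀| < ε := by
    intro f hf
    have := (hf.continuousAt (hI.mem_nhds ht₀)).tendsto
    rw [Metric.tendsto_nhds_nhds] at this
    obtain ⟨η, hη, hball⟩ := this ε hεpos
    exact ⟨η, hη, fun s hs => by
      simpa [Real.dist_eq] using hball (by simpa [Real.dist_eq] using hs)⟩
  obtain ⟨η₁, hη₁, hb₁⟩ := hcts xc hcx
  obtain ⟨η₂, hη₂, hb₂⟩ := hcts yc hcy
  obtain ⟨η₃, hη₃, hb₃⟩ := hcts r hcr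
  have hrt₀ : 0 < r t₀ := hrpos t₀ ht₀
  set η₀ := min (t₀ - s₁) (s₂ - t₀) with hη₀def
  have hη₀ : 0 < η₀ := lt_min (by linarith [ht₀.1]) (by linarith [ht₀.2])
  set η := min (min η₁ η₂) (min η₃ η₀) with hηdef
  have hηpos : 0 < η := lt_min (lt_min hη₁ hη₂) (lt_min hη₃ hη₀)
  set S := Set.Icc (t₀ - η/2) (t₀ + η/2) with hSdef
  have hSmem : ∀ s ∈ S, |s - t₀| ≤ η/2 := by
    intro s hs
    rw [abs_le]; constructor <;> [linarith [hs.1]; linarith [hs.2]]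
  have hSsub : S ⊆ Set.Ioo s₁ s₂ := by
    intro s hs
    rw [hSdef, Set.mem_Icc] at hs
    have hη₀₁ : η ≤ η₀ := le_trans (min_le_right _ _) (min_le_right _ _)
    have h3 : η₀ ≤ t₀ - s₁ := min_le_left _ _
    have h4 : η₀ ≤ s₂ - t₀ := min_le_right _ _
    exact Set.mem_Ioo.mpr ⟨by linarith [hs.1], by linarith [hs.2]⟩
  have ht₀S : t₀ ∈ S := by
    rw [hSdef]; exact Set.mem_Icc.mpr ⟨by linarith, by linarith⟩
  set δ := min (η/2) (r t₀ / (2*(A+ε))) with hδdef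
  have hδpos : 0 < δ := lt_min (by linarith)
    (div_pos hrt₀ (by linarith))
  refine ⟨δ, hδpos, ?_⟩
  intro t htIcc hdtpos hdtδ
  have htS : t ∈ S := by
    have h1 : |t - t₀| ≤ η/2 := le_of_lt (lt_of_lt_of_le hdtδ (min_le_left _ _))
    rw [abs_le] at h1
    rw [hSdef]; exact Set.mem_Icc.mpr ⟨by linarith [h1.1], by linarith [h1.2]⟩
  have htI : t ∈ Set.Ioo s₁ s₂ := hSsub htS
  have hrt : 0 < r t := hrpos t htI
  -- MVT bounds
  have hmb : ∀ f : ℝ → ℝ, (∀ s ∈ Set.Ioo s₁ s₂, HasDerivAt f (deriv f s) s) →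
      (∀ s : ℝ, |s - t₀| < η → |deriv f s - deriv f t₀| < ε) →
      |f t - f t₀ - (deriv f t₀) * (t - t₀)| ≤ ε * |t - t₀| := by
    intro f hdf hbf
    refine mvt_aux (convex_Icc _ _) (fun s hs => hdf s (hSsub hs)) ?_ ht₀S htS
    intro s hs
    exact le_of_lt (hbf s (lt_of_le_of_lt (hSmem s hs) (by linarith)))
  have hη1 : η ≤ η₁ := le_trans (min_le_left _ _) (min_le_left _ _)
  have hη2 : η ≤ η₂ := le_trans (min_le_left _ _) (min_le_right _ _)
  have hη3 : η ≤ η₃ := le_trans (min_le_right _ _) (min_le_left _ _)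
  have hu := hmb xc hdx (fun s hs => hb₁ s (lt_of_lt_of_le hs hη1))
  have hv := hmb yc hdy (fun s hs => hb₂ s (lt_of_lt_of_le hs hη2))
  have hw := hmb r hdr (fun s hs => hb₃ s (lt_of_lt_of_le hs hη3))
  rw [← hx'] at hu
  rw [← hy'] at hv
  set dtv := t - t₀ with hdtv
  set u := xc t - xc t₀ with hudef
  set v := yc t - yc t₀ with hvdef
  set ρ := r t - r t₀ with hρdef
  have hdt2 : |dtv|^2 = dtv^2 := sq_abs _
  have hdtv2pos : 0 < dtv^2 := by
    rw [← hdt2]; exact pow_pos hdtpos 2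
  -- abs error bounds
  have huab : |u - x' * dtv| ≤ ε * |dtv| := hu
  have hvab : |v - y' * dtv| ≤ ε * |dtv| := hv
  have hwab : |ρ - deriv r t₀ * dtv| ≤ ε * |dtv| := hw
  -- lower bound on distance between centers
  set Key := x' * u + y' * v with hKeydef
  clear_value x' y' dtv u v ρ Key
  have step1 : |Key - (x'^2 + y'^2) * dtv| ≤ 2*A*ε*|dtv| := by
    have e1 : Key - (x'^2 + y'^2) * dtv = x'*(u - x'*dtv) + y'*(v - y'*dtv) := by
      rw [hKeydef]; ring
    rw [e1]
    calc |x'*(u - x'*dtv) + y'*(v - y'*dtv)|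
        ≤ |x'*(u - x'*dtv)| + |y'*(v - y'*dtv)| := abs_add_le _ _
      _ = |x'| *|u - x'*dtv| + |y'| *|v - y'*dtv| := by rw [abs_mul, abs_mul]
      _ ≤ A*(ε*|dtv|) + A*(ε*|dtv|) :=
          add_le_add (mul_le_mul hxA huab (abs_nonneg _) hApos.le)
            (mul_le_mul hyA hvab (abs_nonneg _) hApos.le)
      _ = 2*A*ε*|dtv| := by ring
  have step2 : A*(A - 2*ε)*|dtv| ≤ |Key| := by
    have e2 : |(x'^2 + y'^2) * dtv| = A^2 * |dtv| := by
      rw [abs_mul, ← hA2, abs_of_nonneg (sq_nonneg A)]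
    have h3 := abs_sub_abs_le_abs_sub ((x'^2 + y'^2) * dtv) Key
    rw [abs_sub_comm, e2] at h3
    have e5 : A*(A - 2*ε)*|dtv| = A^2*|dtv| - 2*A*ε*|dtv| := by ring
    rw [e5]
    linarith [step1, h3]
  have step3 : Key^2 ≤ (x'^2 + y'^2)*(u^2 + v^2) := by
    rw [hKeydef]; exact cs_aux x' y' u v
  have step4 : (A - 2*ε)^2 * dtv^2 ≤ u^2 + v^2 := by
    have hnn : 0 ≤ A*(A - 2*ε)*|dtv| :=
      mul_nonneg (mul_nonneg hApos.le hA2ε.le) (abs_nonneg _)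
    have h4 : (A*(A - 2*ε)*|dtv|)^2 ≤ Key^2 := by
      calc (A*(A - 2*ε)*|dtv|)^2 ≤ |Key|^2 := pow_le_pow_left₀ hnn step2 2
        _ = Key^2 := sq_abs _
    have h5 : A^2*((A - 2*ε)^2*dtv^2) ≤ A^2*(u^2 + v^2) := by
      calc A^2*((A - 2*ε)^2*dtv^2) = (A*(A - 2*ε)*|dtv|)^2 := by
            rw [← hdt2]; ring
        _ ≤ Key^2 := h4
        _ ≤ (x'^2 + y'^2)*(u^2 + v^2) := step3
        _ = A^2*(u^2 + v^2) := by rw [hA2]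
    exact le_of_mul_le_mul_left h5 (pow_pos hApos 2)
  have hDpos : 0 < u^2 + v^2 :=
    lt_of_lt_of_le (mul_pos (pow_pos hA2ε 2) hdtv2pos) step4
  -- radius difference bound
  have hρab : |ρ| ≤ (B + ε) * |dtv| := by
    calc |ρ| = |(ρ - deriv r t₀ * dtv) + deriv r t₀ * dtv| := by ring_nf
      _ ≤ |ρ - deriv r t₀ * dtv| + |deriv r t₀ * dtv| := abs_add_le _ _
      _ ≤ ε*|dtv| + B*|dtv| := by rw [abs_mul]; rw [← hBdef]; linarith [hwab]
      _ = (B + ε) * |dtv| := by ring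
  have h₁ineq : ρ^2 < u^2 + v^2 := by
    have h6 : ρ^2 ≤ ((B + ε)*|dtv|)^2 := by
      calc ρ^2 = |ρ|^2 := (sq_abs _).symm
        _ ≤ ((B + ε)*|dtv|)^2 := pow_le_pow_left₀ (abs_nonneg _) hρab 2
    have h7 : (B + ε)^2 < (A - 2*ε)^2 :=
      sq_lt_sq_aux (by linarith) (by linarith)
    have h7' : (B + ε)^2*dtv^2 < (A - 2*ε)^2*dtv^2 :=
      mul_lt_mul_of_pos_right h7 hdtv2pos
    have e6 : ((B + ε)*|dtv|)^2 = (B + ε)^2*dtv^2 := by rw [← hdt2]; ring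
    linarith [h6, h7', step4, e6.le, e6.ge]
  -- upper bound on distance
  have hMpos : 0 < A + ε := by linarith
  have hδ2 : |dtv| < r t₀ / (2*(A + ε)) :=
    lt_of_lt_of_le hdtδ (min_le_right _ _)
  have hMd : (A + ε)*|dtv| < r t₀ / 2 := by
    have := mul_lt_mul_of_pos_left hδ2 hMpos
    rwa [show (A + ε) * (r t₀ / (2*(A + ε))) = r t₀ / 2 by field_simp] at this
  have huab2 : |u| ≤ (A + ε)*|dtv| := by
    calc |u| = |(u - x'*dtv) + x'*dtv| := by ring_nf
      _ ≤ |u - x'*dtv| + |x'*dtv| := abs_add_le _ _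
      _ ≤ ε*|dtv| + A*|dtv| := by
          rw [abs_mul]
          have := mul_le_mul_of_nonneg_right hxA (abs_nonneg dtv)
          linarith [huab]
      _ = (A + ε)*|dtv| := by ring
  have hvab2 : |v| ≤ (A + ε)*|dtv| := by
    calc |v| = |(v - y'*dtv) + y'*dtv| := by ring_nf
      _ ≤ |v - y'*dtv| + |y'*dtv| := abs_add_le _ _
      _ ≤ ε*|dtv| + A*|dtv| := by
          rw [abs_mul]
          have := mul_le_mul_of_nonneg_right hyA (abs_nonneg dtv)
          linarith [hvab]
      _ = (A + ε)*|dtv| := by ring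
  have h₂ineq : u^2 + v^2 < (r t + r t₀)^2 := by
    have h8 : ((A + ε)*|dtv|)^2 < (r t₀/2)^2 := by
      have h9 : 0 ≤ (A + ε)*|dtv| := mul_nonneg (by linarith) (abs_nonneg _)
      exact sq_lt_sq_aux h9 hMd
    have h10 : u^2 ≤ ((A + ε)*|dtv|)^2 := by
      calc u^2 = |u|^2 := (sq_abs _).symm
        _ ≤ _ := pow_le_pow_left₀ (abs_nonneg _) huab2 2
    have h11 : v^2 ≤ ((A + ε)*|dtv|)^2 := by
      calc v^2 = |v|^2 := (sq_abs _).symm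
        _ ≤ _ := pow_le_pow_left₀ (abs_nonneg _) hvab2 2
    have h12 : r t₀^2 < (r t + r t₀)^2 :=
      sq_lt_sq_aux hrt₀.le (by linarith)
    linarith [h8, h10, h11, h12]
  -- conclude using the geometric lemma
  have e3 : (xc t₀ - xc t)^2 + (yc t₀ - yc t)^2 = u^2 + v^2 := by
    rw [hudef, hvdef]; ring
  have e4 : (r t - r t₀)^2 = ρ^2 := by rw [hρdef]
  obtain ⟨p, q, hpq, hset⟩ := circles_inter_pair (xc t) (yc t) (r t)
    (xc t₀) (yc t₀) (r t₀) (by rw [e3]; exact hDpos)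
    (by rw [e3, e4]; exact h₁ineq) (by rw [e3]; exact h₂ineq)
  exact ⟨p, q, hpq, hset⟩
end

section
/- Fix r ∈ (0,1). The union ⋃_{t ∈ [−1,1]} D_ρ(t, r) of the pseudohyperbolic disks with centers on the real segment [−1, 1] has topological boundary 𝒜₁ ∪ 𝒜₂, where (identifying ℂ with ℝ²) 𝒜₁ = { z ∈ ℂ : |z + i(1 − r²)/(2r)| = (1 + r²)/(2r) and Im z ≥ 0 } and 𝒜₂ = { z ∈ ℂ : |z − i(1 − r²)/(2r)| = (1 + r²)/(2r) and Im z ≤ 0 }. -/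
set_option maxHeartbeats 1000000

/-- The pseudohyperbolic disk with center `β` (in the closed unit disk) and radius `r`. -/
def pseudohyperbolicDisk (β : ℂ) (r : ℝ) : Set ℂ :=
  {z : ℂ | ‖z‖ < 1 ∧
    ‖z - β‖ / ‖1 - (starRingEnd ℂ) β * z‖ < r}

theorem boundary_pseudohyperbolic_disks_on_line (r : ℝ) (hr : r ∈ Set.Ioo (0 : ℝ) 1) :
    frontier (⋃ t ∈ Set.Icc (-1 : ℝ) 1, pseudohyperbolicDisk (t : ℂ) r) =
      {z : ℂ | ‖z + Complex.I * (((1 - r ^ 2) / (2 * r) : ℝ) : ℂ)‖ =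
          (1 + r ^ 2) / (2 * r) ∧ 0 ≤ z.im} ∪
      {z : ℂ | ‖z - Complex.I * (((1 - r ^ 2) / (2 * r) : ℝ) : ℂ)‖ =
          (1 + r ^ 2) / (2 * r) ∧ z.im ≤ 0} := by
  obtain ⟨hr0, hr1⟩ := hr
  have hr2 : 0 < 1 - r ^ 2 := by nlinarith
  -- the lens region and its closure
  set L : Set ℂ := {z : ℂ | (1 - r ^ 2) * |z.im| < r * (1 - (z.re ^ 2 + z.im ^ 2))} with hL
  set K : Set ℂ := {z : ℂ | (1 - r ^ 2) * |z.im| ≤ r * (1 - (z.re ^ 2 + z.im ^ 2))} with hK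
  have hsq : ∀ w : ℂ, (‖w‖) ^ 2 = w.re ^ 2 + w.im ^ 2 := by
    intro w; rw [Complex.sq_norm, Complex.normSq_apply]; ring
  have hUL : (⋃ t ∈ Set.Icc (-1 : ℝ) 1, pseudohyperbolicDisk (t : ℂ) r) = L := by
    ext z
    simp only [Set.mem_iUnion, Set.mem_setOf_eq, pseudohyperbolicDisk, hL, Set.mem_Icc,
      Complex.conj_ofReal, exists_prop]
    constructor
    · rintro ⟨t, ⟨ht1, ht2⟩, hz1, hz2⟩
      have hs1 : z.re ^ 2 + z.im ^ 2 < 1 := by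
        have := hsq z
        nlinarith [norm_nonneg z]
      have ht' : |t| ≤ 1 := abs_le.mpr ⟨ht1, ht2⟩
      have hne : (1 : ℂ) - (t : ℂ) * z ≠ 0 := by
        intro h
        have h1 : (t : ℂ) * z = 1 := by linear_combination -h
        have h2 := congrArg (‖·‖) h1
        rw [norm_mul, Complex.norm_real, Real.norm_eq_abs, norm_one] at h2
        nlinarith [abs_nonneg t, norm_nonneg z]
      have hpos : 0 < ‖1 - (t : ℂ) * z‖ := norm_pos_iff.mpr hne
      have hz2' : ‖z - (t : ℂ)‖ < r * ‖1 - (t : ℂ) * z‖ :=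
        (div_lt_iff₀ hpos).mp hz2
      have h2 : (‖z - (t : ℂ)‖) ^ 2 <
          r ^ 2 * (‖1 - (t : ℂ) * z‖) ^ 2 := by
        nlinarith [norm_nonneg (z - (t : ℂ)), mul_pos hr0 hpos]
      have he1 : (‖z - (t : ℂ)‖) ^ 2 = (z.re - t) ^ 2 + z.im ^ 2 := by
        rw [hsq]; simp [Complex.sub_re, Complex.sub_im]
      have he2 : (‖1 - (t : ℂ) * z‖) ^ 2 = (1 - t * z.re) ^ 2 + (t * z.im) ^ 2 := by
        rw [hsq]; simp [Complex.sub_re, Complex.sub_im, Complex.mul_re, Complex.mul_im]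
      rw [he1, he2] at h2
      have hf : 0 < r ^ 2 * ((1 - t * z.re) ^ 2 + (t * z.im) ^ 2) -
          ((z.re - t) ^ 2 + z.im ^ 2) := by linarith
      have hd : 0 < 1 - r ^ 2 * (z.re ^ 2 + z.im ^ 2) := by nlinarith [sq_nonneg z.re, sq_nonneg z.im]
      have hA : 0 < r ^ 2 * (1 - (z.re ^ 2 + z.im ^ 2)) ^ 2 - (1 - r ^ 2) ^ 2 * z.im ^ 2 := by
        nlinarith [mul_pos hd hf,
          sq_nonneg (z.re * (1 - r ^ 2) + (r ^ 2 * (z.re ^ 2 + z.im ^ 2) - 1) * t)]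
      nlinarith [sq_abs z.im, abs_nonneg z.im, mul_pos hr0 (by linarith : (0:ℝ) < 1 - (z.re ^ 2 + z.im ^ 2))]
    · intro h
      have him : 0 ≤ (1 - r ^ 2) * |z.im| := by positivity
      have hs1 : z.re ^ 2 + z.im ^ 2 < 1 := by nlinarith
      have habs : ‖z‖ < 1 := by
        nlinarith [hsq z, norm_nonneg z]
      set d : ℝ := 1 - r ^ 2 * (z.re ^ 2 + z.im ^ 2) with hdd
      have hd : 0 < d := by nlinarith [sq_nonneg z.re, sq_nonneg z.im]
      set T : ℝ := z.re * (1 - r ^ 2) / d with hT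
      have hw : (‖z‖) ^ 2 = z.re ^ 2 + z.im ^ 2 := hsq z
      have hrezle : |z.re| ≤ ‖z‖ := Complex.abs_re_le_norm z
      have habsnn : 0 ≤ ‖z‖ := norm_nonneg z
      have hT2 : T ≤ 1 := by
        rw [hT, div_le_one hd]
        nlinarith [le_abs_self z.re, mul_nonneg (by linarith : (0:ℝ) ≤ 1 - ‖z‖)
          (by positivity : (0:ℝ) ≤ 1 + r ^ 2 * ‖z‖)]
      have hT1 : -1 ≤ T := by
        rw [hT, le_div_iff₀ hd]
        nlinarith [neg_abs_le z.re, mul_nonneg (by linarith : (0:ℝ) ≤ 1 - ‖z‖)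
          (by positivity : (0:ℝ) ≤ 1 + r ^ 2 * ‖z‖)]
      refine ⟨T, ⟨hT1, hT2⟩, habs, ?_⟩
      have hne : (1 : ℂ) - (T : ℂ) * z ≠ 0 := by
        intro hh
        have h1 : (T : ℂ) * z = 1 := by linear_combination -hh
        have h2 := congrArg (‖·‖) h1
        rw [norm_mul, Complex.norm_real, Real.norm_eq_abs, norm_one] at h2
        have hT' : |T| ≤ 1 := abs_le.mpr ⟨hT1, hT2⟩
        nlinarith [abs_nonneg T]
      have hpos : 0 < ‖1 - (T : ℂ) * z‖ := norm_pos_iff.mpr hne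
      rw [div_lt_iff₀ hpos]
      have hA : 0 < r ^ 2 * (1 - (z.re ^ 2 + z.im ^ 2)) ^ 2 - (1 - r ^ 2) ^ 2 * z.im ^ 2 := by
        nlinarith [sq_abs z.im, abs_nonneg z.im]
      have key : d * (r ^ 2 * ((1 - T * z.re) ^ 2 + (T * z.im) ^ 2) -
          ((z.re - T) ^ 2 + z.im ^ 2)) =
          r ^ 2 * (1 - (z.re ^ 2 + z.im ^ 2)) ^ 2 - (1 - r ^ 2) ^ 2 * z.im ^ 2 := by
        rw [hT]
        field_simp
        ring
      have hf : 0 < r ^ 2 * ((1 - T * z.re) ^ 2 + (T * z.im) ^ 2) -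
          ((z.re - T) ^ 2 + z.im ^ 2) := by
        nlinarith
      have he1 : (‖z - (T : ℂ)‖) ^ 2 = (z.re - T) ^ 2 + z.im ^ 2 := by
        rw [hsq]; simp [Complex.sub_re, Complex.sub_im]
      have he2 : (‖1 - (T : ℂ) * z‖) ^ 2 = (1 - T * z.re) ^ 2 + (T * z.im) ^ 2 := by
        rw [hsq]; simp [Complex.sub_re, Complex.sub_im, Complex.mul_re, Complex.mul_im]
      refine lt_of_pow_lt_pow_left₀ 2 (by positivity) ?_
      rw [mul_pow, he1, he2]
      linarith
  -- continuity facts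
  have hcont1 : Continuous fun z : ℂ => (1 - r ^ 2) * |z.im| :=
    continuous_const.mul Complex.continuous_im.abs
  have hcont2 : Continuous fun z : ℂ => r * (1 - (z.re ^ 2 + z.im ^ 2)) :=
    continuous_const.mul (continuous_const.sub
      ((Complex.continuous_re.pow 2).add (Complex.continuous_im.pow 2)))
  have hLopen : IsOpen L := isOpen_lt hcont1 hcont2
  have hclos : closure L = K := by
    apply Set.Subset.antisymm
    · refine closure_minimal ?_ (isClosed_le hcont1 hcont2)
      intro z hz
      simp only [hK, Set.mem_setOf_eq]
      exact le_of_lt hz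
    · intro z hz
      rw [mem_closure_iff_seq_limit]
      refine ⟨fun n => ((1 - 1 / ((n : ℝ) + 1) : ℝ) : ℂ) * z, ?_, ?_⟩
      · intro n
        have hn1 : 0 < ((n : ℝ) + 1) := by positivity
        have ha0 : 0 ≤ (1 - 1 / ((n : ℝ) + 1)) := by
          rw [sub_nonneg, div_le_one hn1]; linarith
        have ha1 : (1 - 1 / ((n : ℝ) + 1)) < 1 := by
          have : 0 < 1 / ((n : ℝ) + 1) := by positivity
          linarith
        simp only [hL, Set.mem_setOf_eq, Complex.mul_re, Complex.mul_im,
          Complex.ofReal_re, Complex.ofReal_im]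
        set a : ℝ := 1 - 1 / ((n : ℝ) + 1)
        have hKz : (1 - r ^ 2) * |z.im| ≤ r * (1 - (z.re ^ 2 + z.im ^ 2)) := hz
        have habs' : |a * z.im + 0 * z.re| = a * |z.im| := by
          rw [zero_mul, add_zero, abs_mul, abs_of_nonneg ha0]
        rw [habs']
        have hs0 : 0 ≤ z.re ^ 2 + z.im ^ 2 := by positivity
        nlinarith [mul_le_mul_of_nonneg_left hKz ha0, abs_nonneg z.im,
          mul_pos (mul_pos hr0 (by linarith : (0:ℝ) < 1 - a))
            (by nlinarith : (0:ℝ) < 1 + a * (z.re ^ 2 + z.im ^ 2))]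
      · have h1 : Filter.Tendsto (fun n : ℕ => (1 - 1 / ((n : ℝ) + 1))) Filter.atTop (nhds 1) := by
          simpa using (tendsto_const_nhds (x := (1:ℝ))).sub tendsto_one_div_add_atTop_nhds_zero_nat
        have h2 : Filter.Tendsto (fun n : ℕ => ((1 - 1 / ((n : ℝ) + 1) : ℝ) : ℂ))
            Filter.atTop (nhds 1) := by
          have := (Complex.continuous_ofReal.tendsto 1).comp h1
          simpa [Function.comp_def] using this
        simpa using h2.mul_const z
  rw [hUL, frontier, hclos, hLopen.interior_eq]
  set c : ℝ := (1 - r ^ 2) / (2 * r) with hc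
  set R : ℝ := (1 + r ^ 2) / (2 * r) with hR
  have hcR : c ^ 2 + 1 = R ^ 2 := by rw [hc, hR]; field_simp; ring
  have h2rc : 2 * r * c = 1 - r ^ 2 := by rw [hc]; field_simp
  have hRpos : 0 < R := by rw [hR]; positivity
  ext z
  simp only [Set.mem_diff, hK, hL, Set.mem_setOf_eq, Set.mem_union, not_lt]
  have he1 : (‖z + Complex.I * ((c : ℝ) : ℂ)‖) ^ 2 = z.re ^ 2 + (z.im + c) ^ 2 := by
    rw [hsq]
    simp [Complex.add_re, Complex.add_im, Complex.mul_re, Complex.mul_im]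
  have he2 : (‖z - Complex.I * ((c : ℝ) : ℂ)‖) ^ 2 = z.re ^ 2 + (z.im - c) ^ 2 := by
    rw [hsq]
    simp [Complex.sub_re, Complex.sub_im, Complex.mul_re, Complex.mul_im]
  have habs1 : ‖z + Complex.I * ((c : ℝ) : ℂ)‖ = R ↔
      z.re ^ 2 + (z.im + c) ^ 2 = R ^ 2 := by
    rw [← he1]
    exact ⟨fun h => by rw [h], fun h => by
      nlinarith [norm_nonneg (z + Complex.I * ((c : ℝ) : ℂ))]⟩
  have habs2 : ‖z - Complex.I * ((c : ℝ) : ℂ)‖ = R ↔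
      z.re ^ 2 + (z.im - c) ^ 2 = R ^ 2 := by
    rw [← he2]
    exact ⟨fun h => by rw [h], fun h => by
      nlinarith [norm_nonneg (z - Complex.I * ((c : ℝ) : ℂ))]⟩
  rw [habs1, habs2]
  have heq1 : z.re ^ 2 + (z.im + c) ^ 2 = R ^ 2 ↔
      (1 - r ^ 2) * z.im = r * (1 - (z.re ^ 2 + z.im ^ 2)) := by
    constructor
    · intro h
      linear_combination r * h - r * hcR - z.im * h2rc
    · intro h
      have h3 : r * (z.re ^ 2 + (z.im + c) ^ 2) = r * R ^ 2 := by
        linear_combination h + r * hcR + z.im * h2rc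
      exact mul_left_cancel₀ (ne_of_gt hr0) h3
  have heq2 : z.re ^ 2 + (z.im - c) ^ 2 = R ^ 2 ↔
      -((1 - r ^ 2) * z.im) = r * (1 - (z.re ^ 2 + z.im ^ 2)) := by
    constructor
    · intro h
      linear_combination r * h - r * hcR + z.im * h2rc
    · intro h
      have h3 : r * (z.re ^ 2 + (z.im - c) ^ 2) = r * R ^ 2 := by
        linear_combination h + r * hcR - z.im * h2rc
      exact mul_left_cancel₀ (ne_of_gt hr0) h3
  rw [heq1, heq2]
  constructor
  · rintro ⟨hle, hge⟩
    have heq : (1 - r ^ 2) * |z.im| = r * (1 - (z.re ^ 2 + z.im ^ 2)) := le_antisymm hle hge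
    rcases le_or_gt 0 z.im with hy | hy
    · left
      rw [abs_of_nonneg hy] at heq
      exact ⟨heq, hy⟩
    · right
      rw [abs_of_neg hy] at heq
      exact ⟨by linarith [heq], hy.le⟩
  · rintro (⟨h1, hy⟩ | ⟨h1, hy⟩)
    · rw [abs_of_nonneg hy]
      exact ⟨le_of_eq h1, ge_of_eq h1⟩
    · rw [abs_of_nonpos hy]
      constructor <;> nlinarith [h1]
end

section
/- Fix r ∈ (0,1) and k > 0. Set c₁ = (1 − r)/((1 − r) + k(1 + r)), R₁ = k(1 + r)/((1 − r) + k(1 + r)), c₂ = (1 + r)/((1 + r) + k(1 − r)), R₂ = k(1 − r)/((1 + r) + k(1 − r)), and put a = (R₁ + R₂)/2, b = sqrt(R₁·R₂), c = (c₁ + c₂)/2. For α in the open unit disk let c_ρ(α) = (1 − r²)α / (1 − r²|α|²), and set c_ρ(1) = 1. Then the set of Euclidean centers { c_ρ(α) : α ∈ H(1, k) } equals the ellipse { x + iy : x, y ∈ ℝ, (x − c)²/a² + y²/b² = 1 }. -/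
set_option maxHeartbeats 2000000
set_option maxRecDepth 100000
set_option linter.unreachableTactic false
set_option linter.unusedTactic false
set_option linter.unnecessarySeqFocus false

/-- The horocycle internally tangent to the unit circle at `1` with parameter `k`. -/
def horocycle (k : ℝ) : Set ℂ :=
  {a : ℂ | ‖a‖ < 1 ∧ ‖a - 1‖ ^ 2 / (1 - ‖a‖ ^ 2) = k} ∪ {1}

theorem euclidean_centers_form_ellipse (r k c₁ R₁ c₂ R₂ a b c : ℝ)
    (hr : r ∈ Set.Ioo (0 : ℝ) 1) (hk : 0 < k)
    (hc₁ : c₁ = (1 - r) / ((1 - r) + k * (1 + r)))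
    (hR₁ : R₁ = k * (1 + r) / ((1 - r) + k * (1 + r)))
    (hc₂ : c₂ = (1 + r) / ((1 + r) + k * (1 - r)))
    (hR₂ : R₂ = k * (1 - r) / ((1 + r) + k * (1 - r)))
    (ha : a = (R₁ + R₂) / 2) (hb : b = Real.sqrt (R₁ * R₂)) (hc : c = (c₁ + c₂) / 2) :
    (fun α : ℂ =>
        ((1 - r ^ 2 : ℝ) : ℂ) * α / ((1 - r ^ 2 * ‖α‖ ^ 2 : ℝ) : ℂ)) ''
        horocycle k =
      {z : ℂ | (z.re - c) ^ 2 / a ^ 2 + z.im ^ 2 / b ^ 2 = 1} := by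
  obtain ⟨hr0, hr1⟩ := hr
  have hr2 : 0 < 1 - r ^ 2 := by nlinarith
  have hk1 : (0:ℝ) < 1 + k := by linarith
  have hd₁ : 0 < (1 - r) + k * (1 + r) := by nlinarith
  have hd₂ : 0 < (1 + r) + k * (1 - r) := by nlinarith
  have hD0 : 0 < ((1 - r) + k * (1 + r)) * ((1 + r) + k * (1 - r)) := mul_pos hd₁ hd₂
  have hA : 0 < 1 + r ^ 2 + k * (1 - r ^ 2) := by nlinarith
  have hC : 0 < 1 - r ^ 2 + k * (1 + r ^ 2) := by nlinarith
  have hcR₁ : c₁ + R₁ = 1 := by rw [hc₁, hR₁]; field_simp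
  have hcR₂ : c₂ + R₂ = 1 := by rw [hc₂, hR₂]; field_simp
  have hca : c + a = 1 := by rw [ha, hc]; linarith
  have hR₁p : 0 < R₁ := by rw [hR₁]; exact div_pos (by nlinarith) hd₁
  have hR₂p : 0 < R₂ := by rw [hR₂]; exact div_pos (by nlinarith) hd₂
  have hap : 0 < a := by rw [ha]; linarith
  have hb2 : b ^ 2 = R₁ * R₂ := by rw [hb]; exact Real.sq_sqrt (mul_pos hR₁p hR₂p).le
  have hbp : 0 < b := by rw [hb]; exact Real.sqrt_pos.mpr (mul_pos hR₁p hR₂p)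
  have haq : a = k * (1 + r ^ 2 + k * (1 - r ^ 2)) / (((1 - r) + k * (1 + r)) * ((1 + r) + k * (1 - r))) := by
    rw [ha, hR₁, hR₂]; field_simp; ring
  have hcq : c = (1 - r ^ 2 + k * (1 + r ^ 2)) / (((1 - r) + k * (1 + r)) * ((1 + r) + k * (1 - r))) := by
    rw [hc, hc₁, hc₂]; field_simp; ring
  have hbq : b ^ 2 = k ^ 2 * (1 - r ^ 2) / (((1 - r) + k * (1 + r)) * ((1 + r) + k * (1 - r))) := by
    rw [hb2, hR₁, hR₂]; field_simp; ring
  ext z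
  simp only [Set.mem_image, Set.mem_setOf_eq]
  constructor
  · rintro ⟨α, hα, rfl⟩
    beta_reduce
    rcases hα with ⟨h1, h2⟩ | h1
    · -- open horocycle point
      set x := α.re with hxdef
      set y := α.im with hydef
      have habs : ‖α‖ ^ 2 = x ^ 2 + y ^ 2 := by
        rw [Complex.sq_norm, Complex.normSq_apply]; ring
      have hxy1 : x ^ 2 + y ^ 2 < 1 := by
        rw [← habs]; exact pow_lt_one₀ (norm_nonneg α) h1 two_ne_zero
      have hxy0 : 0 ≤ x ^ 2 + y ^ 2 := by positivity
      have hS : 0 < 1 - r ^ 2 * (x ^ 2 + y ^ 2) := by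
        have h5 : r ^ 2 * (x ^ 2 + y ^ 2) ≤ 1 * (x ^ 2 + y ^ 2) :=
          mul_le_mul_of_nonneg_right (by nlinarith : r ^ 2 ≤ 1) hxy0
        linarith
      have hcirc : (1 + k) * (x ^ 2 + y ^ 2) - 2 * x + (1 - k) = 0 := by
        have hden : 0 < 1 - ‖α‖ ^ 2 := by rw [habs]; linarith
        have h3 : ‖α - 1‖ ^ 2 = k * (1 - ‖α‖ ^ 2) := by
          rw [div_eq_iff hden.ne'] at h2; linarith [h2]
        have h4 : ‖α - 1‖ ^ 2 = (x - 1) ^ 2 + y ^ 2 := by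
          rw [Complex.sq_norm, Complex.normSq_apply]; simp; ring
        rw [h4, habs] at h3; linear_combination h3
      have hre : (((1 - r ^ 2 : ℝ) : ℂ) * α / ((1 - r ^ 2 * ‖α‖ ^ 2 : ℝ) : ℂ)).re
          = (1 - r ^ 2) * x / (1 - r ^ 2 * (x ^ 2 + y ^ 2)) := by
        rw [habs]
        rw [Complex.div_ofReal_re]
        simp [Complex.mul_re, ← Complex.ofReal_pow, hxdef]
      have him : (((1 - r ^ 2 : ℝ) : ℂ) * α / ((1 - r ^ 2 * ‖α‖ ^ 2 : ℝ) : ℂ)).im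
          = (1 - r ^ 2) * y / (1 - r ^ 2 * (x ^ 2 + y ^ 2)) := by
        rw [habs]
        rw [Complex.div_ofReal_im]
        simp [Complex.mul_im, ← Complex.ofReal_pow, hydef]
      rw [hre, him, haq, hcq, hbq]
      field_simp
      linear_combination (-k^3*x^2*r^8 + 2*k^3*x^2*r^6 - k^3*x^2*r^4 - k^3*y^2*r^8 + 2*k^3*y^2*r^6 - k^3*y^2*r^4 + k^3*r^4 - 2*k^3*r^2 + k^3 + 3*k^2*x^2*r^8 - 2*k^2*x^2*r^6 - k^2*x^2*r^4 + 2*k^2*x*r^6 - 4*k^2*x*r^4 + 2*k^2*x*r^2 + 3*k^2*y^2*r^8 - 2*k^2*y^2*r^6 - k^2*y^2*r^4 - k^2*r^4 - 2*k^2*r^2 + 3*k^2 - 3*k*x^2*r^8 + 2*k*x^2*r^6 + k*x^2*r^4 - 4*k*x*r^6 + 4*k*x*r^2 - 3*k*y^2*r^8 + 2*k*y^2*r^6 + k*y^2*r^4 - k*r^4 - 2*k*r^2 + 3*k + x^2*r^8 - 2*x^2*r^6 + x^2*r^4 + 2*x*r^6 - 4*x*r^4 + 2*x*r^2 + y^2*r^8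 - 2*y^2*r^6 + y^2*r^4 + r^4 - 2*r^2 + 1) * hcirc
    · -- α = 1
      simp only [Set.mem_singleton_iff] at h1
      subst h1
      simp only [norm_one, one_pow, mul_one]
      rw [div_self (by exact_mod_cast hr2.ne' : ((1 - r ^ 2 : ℝ) : ℂ) ≠ 0)]
      simp only [Complex.one_re, Complex.one_im]
      rw [show (1:ℝ) - c = a by linarith]
      field_simp
      ring
  · intro hz
    have hz' := hz
    rw [haq, hcq, hbq] at hz
    field_simp at hz
    set X := z.re with hXdef
    set Y := z.im with hYdef
    have hXc : (X - c) ^ 2 ≤ a ^ 2 := by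
      have h0 : 0 ≤ Y ^ 2 / b ^ 2 := by positivity
      have h1' : (X - c) ^ 2 / a ^ 2 ≤ 1 := by linarith only [hz', h0]
      have h2' : (X - c) ^ 2 / a ^ 2 * a ^ 2 ≤ 1 * a ^ 2 :=
        mul_le_mul_of_nonneg_right h1' (sq_nonneg a)
      have h3' : (X - c) ^ 2 / a ^ 2 * a ^ 2 = (X - c) ^ 2 := by
        field_simp
      linarith only [h2', h3']
    have hXge : c - a ≤ X := by nlinarith only [hXc, hap]
    have hXle : X ≤ c + a := by nlinarith only [hXc, hap]
    have hcaD : (c - a) * ((1 - r + k * (1 + r)) * (1 + r + k * (1 - r)))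
        = (1 - r ^ 2) * (1 - k ^ 2) := by
      rw [haq, hcq]; field_simp; ring
    have hMpos : 0 < (1 - r ^ 2) * (1 + k) + 2 * r ^ 2 := by
      nlinarith only [mul_pos hr2 hk1, sq_nonneg r]
    have hkey : ((1 - r ^ 2) * (1 + k) + 2 * r ^ 2 * (c - a))
          * ((1 - r + k * (1 + r)) * (1 + r + k * (1 - r)))
        = (1 - r ^ 2) * (1 + k) ^ 2 * ((1 - r ^ 2) * (1 + k) + 2 * r ^ 2) := by
      linear_combination (2 * r ^ 2) * hcaD
    have h6 : 0 < (1 - r ^ 2) * (1 + k) + 2 * r ^ 2 * (c - a) := by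
      nlinarith only [hkey, hD0, mul_pos (mul_pos hr2 (pow_pos hk1 2)) hMpos]
    have hN : 0 < (1 - r ^ 2) * (1 + k) + 2 * r ^ 2 * X := by
      have h7 : 2 * r ^ 2 * (c - a) ≤ 2 * r ^ 2 * X :=
        mul_le_mul_of_nonneg_left hXge (by positivity)
      linarith only [h6, h7]
    by_cases hz1 : z = 1
    · refine ⟨1, Or.inr rfl, ?_⟩
      rw [hz1]
      simp only [norm_one, one_pow, mul_one]
      rw [div_self (by exact_mod_cast hr2.ne' : ((1 - r ^ 2 : ℝ) : ℂ) ≠ 0)]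
    · have hX1 : X < 1 := by
        rcases lt_or_eq_of_le (show X ≤ 1 by linarith only [hXle, hca]) with h | h
        · exact h
        · exfalso
          apply hz1
          have hXa : X - c = a := by linarith only [h, hca]
          have ha2 : (X - c) ^ 2 / a ^ 2 = 1 := by rw [hXa]; field_simp
          have hY : Y ^ 2 / b ^ 2 = 0 := by linarith only [hz', ha2]
          have hY0 : Y = 0 := by
            have := (div_eq_zero_iff.mp hY).resolve_right (by positivity)
            exact pow_eq_zero_iff two_ne_zero |>.mp this
          refine Complex.ext ?_ ?_
          · rw [← hXdef, h]; simp
          · rw [← hYdef, hY0]; simp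
      set M0 : ℝ := (1 - r ^ 2) * (1 + k) + 2 * r ^ 2 with hM0def
      set N : ℝ := (1 - r ^ 2) * (1 + k) + 2 * r ^ 2 * X with hNdef
      have hscale : 0 < ((1 - r + k * (1 + r)) * (1 + r + k * (1 - r))) * k ^ 2
          * (1 + r ^ 2 + k * (1 - r ^ 2)) ^ 2 :=
        mul_pos (mul_pos hD0 (pow_pos hk 2)) (pow_pos hA 2)
      have hI1 : (1 + k) * (M0 ^ 2 * (X ^ 2 + Y ^ 2)) - 2 * (M0 * X) * N + (1 - k) * N ^ 2 = 0 := by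
        have h8 : ((1 - r + k * (1 + r)) * (1 + r + k * (1 - r))) * k ^ 2
            * (1 + r ^ 2 + k * (1 - r ^ 2)) ^ 2
            * ((1 + k) * (M0 ^ 2 * (X ^ 2 + Y ^ 2)) - 2 * (M0 * X) * N + (1 - k) * N ^ 2) = 0 := by
          rw [hM0def, hNdef]
          linear_combination (k^5*r^4 - 2*k^5*r^2 + k^5 - k^4*r^4 - 2*k^4*r^2 + 3*k^4 - k^3*r^4 + 2*k^3*r^2 + 3*k^3 + k^2*r^4 + 2*k^2*r^2 + k^2) * hz
        exact (mul_eq_zero.mp h8).resolve_left hscale.ne'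
      have hxcirc : (1 + k) * ((M0 * X / N) ^ 2 + (M0 * Y / N) ^ 2) - 2 * (M0 * X / N) + (1 - k) = 0 := by
        have h9 : (1 + k) * ((M0 * X / N) ^ 2 + (M0 * Y / N) ^ 2) - 2 * (M0 * X / N) + (1 - k)
            = ((1 + k) * (M0 ^ 2 * (X ^ 2 + Y ^ 2)) - 2 * (M0 * X) * N + (1 - k) * N ^ 2) / N ^ 2 := by
          field_simp
        rw [h9, hI1, zero_div]
      have habsa : ‖((M0 / N : ℝ) : ℂ) * z‖ ^ 2 = (M0 * X / N) ^ 2 + (M0 * Y / N) ^ 2 := by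
        rw [Complex.sq_norm, Complex.normSq_apply]
        simp only [Complex.mul_re, Complex.mul_im, Complex.ofReal_re, Complex.ofReal_im,
          ← hXdef, ← hYdef]
        ring
      have hx1 : M0 * X / N < 1 := by
        rw [div_lt_one hN, hM0def, hNdef]
        nlinarith only [mul_pos (mul_pos hr2 hk1) (show (0:ℝ) < 1 - X by linarith only [hX1])]
      have hxylt : (M0 * X / N) ^ 2 + (M0 * Y / N) ^ 2 < 1 := by
        nlinarith only [hxcirc, hk1, hx1,
          mul_pos hk1 (show (0:ℝ) < 1 - M0 * X / N by linarith only [hx1])]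
      have hablt : ‖((M0 / N : ℝ) : ℂ) * z‖ < 1 := by
        have hab2 : ‖((M0 / N : ℝ) : ℂ) * z‖ ^ 2 < 1 := by
          rw [habsa]; exact hxylt
        nlinarith only [hab2, norm_nonneg (((M0 / N : ℝ) : ℂ) * z)]
      have heq : ‖((M0 / N : ℝ) : ℂ) * z - 1‖ ^ 2
          / (1 - ‖((M0 / N : ℝ) : ℂ) * z‖ ^ 2) = k := by
        have hnum : ‖((M0 / N : ℝ) : ℂ) * z - 1‖ ^ 2
            = (M0 * X / N - 1) ^ 2 + (M0 * Y / N) ^ 2 := by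
          rw [Complex.sq_norm, Complex.normSq_apply]
          simp only [Complex.sub_re, Complex.sub_im, Complex.mul_re, Complex.mul_im,
            Complex.ofReal_re, Complex.ofReal_im, Complex.one_re, Complex.one_im,
            ← hXdef, ← hYdef]
          ring
        rw [hnum, habsa, div_eq_iff (ne_of_gt (show
          (0:ℝ) < 1 - ((M0 * X / N) ^ 2 + (M0 * Y / N) ^ 2) by linarith only [hxylt]))]
        linear_combination hxcirc
      have hfz : ((1 - r ^ 2 : ℝ) : ℂ) * (((M0 / N : ℝ) : ℂ) * z)
          / ((1 - r ^ 2 * ‖((M0 / N : ℝ) : ℂ) * z‖ ^ 2 : ℝ) : ℂ) = z := by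
        have hfa : 1 - r ^ 2 * ‖((M0 / N : ℝ) : ℂ) * z‖ ^ 2 = (1 - r ^ 2) * (M0 / N) := by
          rw [habsa]
          have h9 : (N ^ 2 - r ^ 2 * (M0 ^ 2 * (X ^ 2 + Y ^ 2))) - (1 - r ^ 2) * M0 * N = 0 := by
            have h8 : ((1 - r + k * (1 + r)) * (1 + r + k * (1 - r))) * k ^ 2
                * (1 + r ^ 2 + k * (1 - r ^ 2)) ^ 2
                * ((N ^ 2 - r ^ 2 * (M0 ^ 2 * (X ^ 2 + Y ^ 2))) - (1 - r ^ 2) * M0 * N) = 0 := by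
              rw [hM0def, hNdef]
              linear_combination (-k^4*r^6 + 2*k^4*r^4 - k^4*r^2 + 2*k^3*r^6 - 2*k^3*r^2 - k^2*r^6 - 2*k^2*r^4 - k^2*r^2) * hz
            exact (mul_eq_zero.mp h8).resolve_left hscale.ne'
          have h10 : 1 - r ^ 2 * ((M0 * X / N) ^ 2 + (M0 * Y / N) ^ 2)
              = (N ^ 2 - r ^ 2 * (M0 ^ 2 * (X ^ 2 + Y ^ 2))) / N ^ 2 := by
            field_simp
          rw [h10, show N ^ 2 - r ^ 2 * (M0 ^ 2 * (X ^ 2 + Y ^ 2)) = (1 - r ^ 2) * M0 * N from by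
            linarith only [h9]]
          field_simp
        rw [hfa]
        have hne2 : ((1 - r ^ 2) * (M0 / N) : ℝ) ≠ 0 :=
          (mul_pos hr2 (div_pos hMpos hN)).ne'
        rw [div_eq_iff (Complex.ofReal_ne_zero.mpr hne2)]
        push_cast
        ring
      exact ⟨((M0 / N : ℝ) : ℂ) * z, Set.mem_union_left _ ⟨hablt, heq⟩, hfz⟩
end

section
/- Fix r ∈ (0,1) and k > 0. Set c₁ = (1 − r)/((1 − r) + k(1 + r)), R₁ = k(1 + r)/((1 − r) + k(1 + r)), c₂ = (1 + r)/((1 + r) + k(1 − r)), R₂ = k(1 − r)/((1 + r) + k(1 − r)), a = (R₁ + R₂)/2, b = sqrt(R₁·R₂), c = (c₁ + c₂)/2. For t ∈ [0, 2π] let S_t = { (x, y) ∈ ℝ² : (x − (c + a·cos t))² + (y − b·sin t)² = ((R₁ − R₂)/2)²·(1 − cos t)² }. Then the family of boundary circles of the pseudohyperbolic disks D_ρ(α, r) for α ∈ H(1, k) coincides with the family { S_t : t ∈ [0, 2π] }: for every α ∈ H(1, k) there is a t ∈ [0, 2π] such that the Euclidean circle with center c_ρ(α) and radius R_ρ(α)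 equals S_t, and conversely every S_t with t ∈ [0, 2π] arises this way from some α ∈ H(1, k). -/
/-- The Euclidean center of the pseudohyperbolic disk `D_ρ(α, r)`. -/
noncomputable def euclideanCenter (r : ℝ) (α : ℂ) : ℂ :=
  ((1 - r ^ 2 : ℝ) : ℂ) * α / ((1 - r ^ 2 * ‖α‖ ^ 2 : ℝ) : ℂ)

/-- The Euclidean radius of the pseudohyperbolic disk `D_ρ(α, r)`. -/
noncomputable def euclideanRadius (r : ℝ) (α : ℂ) : ℝ :=
  r * (1 - ‖α‖ ^ 2) / (1 - r ^ 2 * ‖α‖ ^ 2)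

lemma exists_param (T St : ℝ) (h : T^2 + St^2 = 1) :
    ∃ t ∈ Set.Icc (0:ℝ) (2*Real.pi), Real.cos t = T ∧ Real.sin t = St := by
  have hT1 : -1 ≤ T := by nlinarith
  have hT2 : T ≤ 1 := by nlinarith
  have hpi := Real.pi_pos
  have hsq : Real.sqrt (1 - T^2) = |St| := by
    rw [show 1 - T^2 = St^2 by linarith, Real.sqrt_sq_eq_abs]
  by_cases hSt : 0 ≤ St
  · refine ⟨Real.arccos T, ⟨Real.arccos_nonneg T, ?_⟩, Real.cos_arccos hT1 hT2, ?_⟩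
    · linarith [Real.arccos_le_pi T]
    · rw [Real.sin_arccos, hsq, abs_of_nonneg hSt]
  · refine ⟨2*Real.pi - Real.arccos T, ⟨?_, ?_⟩, ?_, ?_⟩
    · linarith [Real.arccos_le_pi T]
    · linarith [Real.arccos_nonneg T]
    · rw [Real.cos_sub, Real.cos_two_pi, Real.sin_two_pi, Real.cos_arccos hT1 hT2]; ring
    · rw [Real.sin_sub, Real.cos_two_pi, Real.sin_two_pi, Real.sin_arccos, hsq,
        abs_of_neg (not_le.mp hSt)]; ring

lemma key (r k c₁ R₁ c₂ R₂ a b c : ℝ)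
    (hr : r ∈ Set.Ioo (0 : ℝ) 1) (hk : 0 < k)
    (hc₁ : c₁ = (1 - r) / ((1 - r) + k * (1 + r)))
    (hR₁ : R₁ = k * (1 + r) / ((1 - r) + k * (1 + r)))
    (hc₂ : c₂ = (1 + r) / ((1 + r) + k * (1 - r)))
    (hR₂ : R₂ = k * (1 - r) / ((1 + r) + k * (1 - r)))
    (ha : a = (R₁ + R₂) / 2)
    (hb : b = Real.sqrt (R₁ * R₂))
    (hc : c = (c₁ + c₂) / 2)
    (s sθ t : ℝ) (α : ℂ) (hs : s ^ 2 + sθ ^ 2 = 1)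
    (hα : α = (((1 + k * s) / (1 + k) : ℝ) : ℂ) + ((k * sθ / (1 + k) : ℝ) : ℂ) * Complex.I)
    (hcos : (1 - Real.cos t) * ((1 + k) ^ 2 - r ^ 2 * (1 + 2 * k * s + k ^ 2)) =
      ((1 - r) + k * (1 + r)) * ((1 + r) + k * (1 - r)) * (1 - s))
    (hsin : Real.sin t * (b * ((1 + k) ^ 2 - r ^ 2 * (1 + 2 * k * s + k ^ 2))) =
      (1 - r ^ 2) * (1 + k) * k * sθ) :
    {z : ℂ | ‖z - euclideanCenter r α‖ = euclideanRadius r α} =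
      {z : ℂ | (z.re - (c + a * Real.cos t)) ^ 2 + (z.im - b * Real.sin t) ^ 2 =
        ((R₁ - R₂) / 2) ^ 2 * (1 - Real.cos t) ^ 2} := by
  obtain ⟨hr0, hr1⟩ := hr
  have hk1 : (0:ℝ) < 1 + k := by linarith
  have hs1 : s ≤ 1 := by linarith [sq_nonneg (s - 1), sq_nonneg sθ]
  have hsm1 : -1 ≤ s := by linarith [sq_nonneg (s + 1), sq_nonneg sθ]
  have hr2 : r ^ 2 < 1 := by
    have : r * r < 1 * 1 := mul_lt_mul' hr1.le hr1 hr0.le one_pos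
    calc r ^ 2 = r * r := sq r
    _ < 1 * 1 := this
    _ = 1 := by norm_num
  have hks : k * s ≤ k * 1 := mul_le_mul_of_nonneg_left hs1 hk.le
  have hup : 1 + 2 * k * s + k ^ 2 ≤ (1 + k) ^ 2 := by
    have : (1 + k) ^ 2 = 1 + 2 * (k * 1) + k ^ 2 := by ring
    linarith
  have hNpos : 0 < (1 + k) ^ 2 - r ^ 2 * (1 + 2 * k * s + k ^ 2) := by
    have h1 : r ^ 2 * (1 + 2 * k * s + k ^ 2) ≤ r ^ 2 * (1 + k) ^ 2 :=
      mul_le_mul_of_nonneg_left hup (sq_nonneg r)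
    have h2 : r ^ 2 * (1 + k) ^ 2 < 1 * (1 + k) ^ 2 :=
      mul_lt_mul_of_pos_right hr2 (by positivity)
    linarith
  set N : ℝ := (1 + k) ^ 2 - r ^ 2 * (1 + 2 * k * s + k ^ 2) with hN
  have hA : (0:ℝ) < (1 - r) + k * (1 + r) := by
    have : 0 < k * (1 + r) := mul_pos hk (by linarith)
    linarith
  have hB : (0:ℝ) < (1 + r) + k * (1 - r) := by
    have : 0 < k * (1 - r) := mul_pos hk (by linarith)
    linarith
  have hbpos : 0 < b := by
    rw [hb]; apply Real.sqrt_pos.mpr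
    rw [hR₁, hR₂]
    exact mul_pos (div_pos (by positivity) hA) (div_pos (mul_pos hk (by linarith)) hB)
  have hare : α.re = (1 + k * s) / (1 + k) := by
    simp only [hα, Complex.add_re, Complex.ofReal_re, Complex.mul_re, Complex.I_re,
      Complex.ofReal_im, Complex.I_im, mul_zero, mul_one, zero_sub, add_neg_cancel_right,
      sub_zero, add_zero, neg_zero]
  have haim : α.im = k * sθ / (1 + k) := by
    simp only [hα, Complex.add_im, Complex.ofReal_im, Complex.mul_im, Complex.I_re,
      Complex.ofReal_re, Complex.I_im, mul_zero, mul_one, zero_add, add_zero, zero_mul]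
  have hm : ‖α‖ ^ 2 = (1 + 2 * k * s + k ^ 2) / (1 + k) ^ 2 := by
    rw [Complex.sq_norm, Complex.normSq_apply, hare, haim]
    field_simp
    linear_combination k ^ 2 * hs
  have hD : (1 - r ^ 2 * ‖α‖ ^ 2) = N / (1 + k) ^ 2 := by
    rw [hm, hN]; field_simp
  have hDpos : 0 < 1 - r ^ 2 * ‖α‖ ^ 2 := by rw [hD]; positivity
  have hcre : (euclideanCenter r α).re = (1 - r ^ 2) * (1 + k * s) * (1 + k) / N := by
    rw [euclideanCenter, Complex.div_ofReal_re]
    simp only [Complex.mul_re, Complex.ofReal_re, Complex.ofReal_im, zero_mul, sub_zero]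
    rw [hare, hD]
    field_simp
  have hcim : (euclideanCenter r α).im = (1 - r ^ 2) * (k * sθ) * (1 + k) / N := by
    rw [euclideanCenter, Complex.div_ofReal_im]
    simp only [Complex.mul_im, Complex.ofReal_re, Complex.ofReal_im, zero_mul, add_zero]
    rw [haim, hD]
    field_simp
  have hrad : euclideanRadius r α = 2 * k * r * (1 - s) / N := by
    rw [euclideanRadius, hD, hm]
    field_simp
    ring
  have hradnn : 0 ≤ euclideanRadius r α := by
    rw [hrad]
    have : 0 ≤ 1 - s := by linarith
    positivity
  have hcost : Real.cos t = 1 - ((1 - r) + k * (1 + r)) * ((1 + r) + k * (1 - r)) * (1 - s) / N := by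
    field_simp
    linarith [hcos]
  have e1 : (euclideanCenter r α).re = c + a * Real.cos t := by
    rw [hcre, hcost, hc, hc₁, hc₂, ha, hR₁, hR₂]
    field_simp
    ring
  have e2 : (euclideanCenter r α).im = b * Real.sin t := by
    rw [hcim, div_eq_iff hNpos.ne']
    linear_combination -hsin
  have e3 : (euclideanRadius r α) ^ 2 = ((R₁ - R₂) / 2) ^ 2 * (1 - Real.cos t) ^ 2 := by
    rw [hrad, hcost, hR₁, hR₂]
    field_simp
    ring
  ext z
  simp only [Set.mem_setOf_eq]
  rw [← e1]
  rw [← e2]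
  rw [← e3]
  constructor
  · intro h
    rw [← h, Complex.sq_norm, Complex.normSq_apply, Complex.sub_re, Complex.sub_im]
    ring
  · intro h
    have h2 : ‖z - euclideanCenter r α‖ ^ 2 = (euclideanRadius r α) ^ 2 := by
      rw [Complex.sq_norm, Complex.normSq_apply, Complex.sub_re, Complex.sub_im]
      linear_combination h
    have h3 := congrArg Real.sqrt h2
    rwa [Real.sqrt_sq (norm_nonneg _), Real.sqrt_sq hradnn] at h3

set_option maxHeartbeats 2000000 in
theorem pseudohyperbolic_circles_eq_euclidean_family (r k c₁ R₁ c₂ R₂ a b c : ℝ)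
    (hr : r ∈ Set.Ioo (0 : ℝ) 1) (hk : 0 < k)
    (hc₁ : c₁ = (1 - r) / ((1 - r) + k * (1 + r)))
    (hR₁ : R₁ = k * (1 + r) / ((1 - r) + k * (1 + r)))
    (hc₂ : c₂ = (1 + r) / ((1 + r) + k * (1 - r)))
    (hR₂ : R₂ = k * (1 - r) / ((1 + r) + k * (1 - r)))
    (ha : a = (R₁ + R₂) / 2) (hb : b = Real.sqrt (R₁ * R₂)) (hc : c = (c₁ + c₂) / 2) :
    (∀ α ∈ horocycle k, ∃ t ∈ Set.Icc (0 : ℝ) (2 * Real.pi),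
        {z : ℂ | ‖z - euclideanCenter r α‖ = euclideanRadius r α} =
          {z : ℂ | (z.re - (c + a * Real.cos t)) ^ 2 + (z.im - b * Real.sin t) ^ 2 =
            ((R₁ - R₂) / 2) ^ 2 * (1 - Real.cos t) ^ 2}) ∧
      (∀ t ∈ Set.Icc (0 : ℝ) (2 * Real.pi), ∃ α ∈ horocycle k,
        {z : ℂ | ‖z - euclideanCenter r α‖ = euclideanRadius r α} =
          {z : ℂ | (z.re - (c + a * Real.cos t)) ^ 2 + (z.im - b * Real.sin t) ^ 2 =
            ((R₁ - R₂) / 2) ^ 2 * (1 - Real.cos t) ^ 2}) := by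
  obtain ⟨hr0, hr1⟩ := hr
  have hk1 : (0:ℝ) < 1 + k := by linarith
  have hr2 : r ^ 2 < 1 := by
    have := pow_lt_one₀ hr0.le hr1 (two_ne_zero)
    linarith
  have hA : (0:ℝ) < (1 - r) + k * (1 + r) := by
    have : 0 < k * (1 + r) := mul_pos hk (by linarith)
    linarith
  have hB : (0:ℝ) < (1 + r) + k * (1 - r) := by
    have : 0 < k * (1 - r) := mul_pos hk (by linarith)
    linarith
  have hbpos : 0 < b := by
    rw [hb]; apply Real.sqrt_pos.mpr
    rw [hR₁, hR₂]
    exact mul_pos (div_pos (by positivity) hA) (div_pos (mul_pos hk (by linarith)) hB)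
  have hb2 : b ^ 2 * (((1 - r) + k * (1 + r)) * ((1 + r) + k * (1 - r))) = k ^ 2 * (1 - r ^ 2) := by
    have h0 : b ^ 2 = R₁ * R₂ := by
      rw [hb]
      refine Real.sq_sqrt ?_
      rw [hR₁, hR₂]
      exact mul_nonneg (div_nonneg (by positivity) hA.le)
        (div_nonneg (mul_nonneg hk.le (by linarith)) hB.le)
    rw [h0, hR₁, hR₂]
    field_simp
    ring
  have hNposgen : ∀ s : ℝ, s ≤ 1 → 0 < (1 + k) ^ 2 - r ^ 2 * (1 + 2 * k * s + k ^ 2) := by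
    intro s hs1
    have hks : k * s ≤ k * 1 := mul_le_mul_of_nonneg_left hs1 hk.le
    have hup : 1 + 2 * k * s + k ^ 2 ≤ (1 + k) ^ 2 := by
      have : (1 + k) ^ 2 = 1 + 2 * (k * 1) + k ^ 2 := by ring
      linarith
    have h1 : r ^ 2 * (1 + 2 * k * s + k ^ 2) ≤ r ^ 2 * (1 + k) ^ 2 :=
      mul_le_mul_of_nonneg_left hup (sq_nonneg r)
    have h2 : r ^ 2 * (1 + k) ^ 2 < 1 * (1 + k) ^ 2 :=
      mul_lt_mul_of_pos_right hr2 (by positivity)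
    linarith
  constructor
  · -- forward direction
    intro α hα
    rcases hα with ⟨hlt, heq⟩ | h1
    · -- generic point of the horocycle
      have h1m : 0 < 1 - ‖α‖ ^ 2 := by
        have := pow_lt_one₀ (norm_nonneg α) hlt (two_ne_zero)
        linarith
      have hrel : ‖α - 1‖ ^ 2 = k * (1 - ‖α‖ ^ 2) :=
        (div_eq_iff h1m.ne').mp heq
      have habs2 : ‖α‖ ^ 2 = α.re ^ 2 + α.im ^ 2 := by
        rw [Complex.sq_norm, Complex.normSq_apply]; ring
      have habs2' : ‖α - 1‖ ^ 2 = (α.re - 1) ^ 2 + α.im ^ 2 := by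
        rw [Complex.sq_norm, Complex.normSq_apply, Complex.sub_re, Complex.sub_im,
          Complex.one_re, Complex.one_im]; ring
      have hxy : (α.re - 1) ^ 2 + α.im ^ 2 = k * (1 - (α.re ^ 2 + α.im ^ 2)) := by
        rw [← habs2', ← habs2]; exact hrel
      obtain ⟨s, hsdef⟩ : ∃ s : ℝ, s = ((1 + k) * α.re - 1) / k := ⟨_, rfl⟩
      obtain ⟨sθ, hsθdef⟩ : ∃ sθ : ℝ, sθ = (1 + k) * α.im / k := ⟨_, rfl⟩
      have hαform : α = (((1 + k * s) / (1 + k) : ℝ) : ℂ) + ((k * sθ / (1 + k) : ℝ) : ℂ) * Complex.I := by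
        apply Complex.ext
        · simp only [Complex.add_re, Complex.ofReal_re, Complex.mul_re, Complex.I_re,
            Complex.ofReal_im, Complex.I_im, mul_zero, mul_one, zero_sub, sub_zero,
            add_zero, neg_zero]
          rw [hsdef]
          field_simp
          ring
        · simp only [Complex.add_im, Complex.ofReal_im, Complex.mul_im, Complex.I_re,
            Complex.ofReal_re, Complex.I_im, mul_zero, mul_one, zero_add, add_zero, zero_mul]
          rw [hsθdef]
          field_simp
      have hs : s ^ 2 + sθ ^ 2 = 1 := by
        rw [hsdef, hsθdef]
        field_simp
        linear_combination (1 + k) * hxy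
      have hs1 : s ≤ 1 := by linarith [sq_nonneg (s - 1), sq_nonneg sθ]
      have hNpos : 0 < (1 + k) ^ 2 - r ^ 2 * (1 + 2 * k * s + k ^ 2) := hNposgen s hs1
      have hsθ2 : sθ ^ 2 = 1 - s ^ 2 := by linarith
      obtain ⟨N, hNdef⟩ : ∃ N : ℝ, N = (1 + k) ^ 2 - r ^ 2 * (1 + 2 * k * s + k ^ 2) := ⟨_, rfl⟩
      rw [← hNdef] at hNpos
      obtain ⟨T, hT⟩ : ∃ T : ℝ,
          T = 1 - ((1 - r) + k * (1 + r)) * ((1 + r) + k * (1 - r)) * (1 - s) / N := ⟨_, rfl⟩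
      obtain ⟨St, hSt⟩ : ∃ St : ℝ, St = (1 - r ^ 2) * (1 + k) * k * sθ / (b * N) := ⟨_, rfl⟩
      have h1T : (1 - T) * N = ((1 - r) + k * (1 + r)) * ((1 + r) + k * (1 - r)) * (1 - s) := by
        rw [hT]
        field_simp
        ring
      have hplusT : (1 + T) * N = (1 - r ^ 2) * (1 + k) ^ 2 * (1 + s) := by
        linear_combination -h1T + 2 * hNdef
      have hStb : St * (b * N) = (1 - r ^ 2) * (1 + k) * k * sθ := by
        rw [hSt]
        field_simp
      have hTS : T ^ 2 + St ^ 2 = 1 := by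
        have hbN : 0 < b ^ 2 * N ^ 2 := by positivity
        have hkey : (T ^ 2 + St ^ 2 - 1) * (b ^ 2 * N ^ 2) = 0 := by
          linear_combination (St * b * N + (1 - r ^ 2) * (1 + k) * k * sθ) * hStb -
            (b ^ 2 * (1 + T) * N) * h1T -
            (b ^ 2 * (((1 - r) + k * (1 + r)) * ((1 + r) + k * (1 - r))) * (1 - s)) * hplusT +
            ((1 - r ^ 2) ^ 2 * (1 + k) ^ 2 * k ^ 2) * hsθ2 -
            ((1 - s ^ 2) * (1 - r ^ 2) * (1 + k) ^ 2) * hb2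
        have := (mul_eq_zero.mp hkey).resolve_right hbN.ne'
        linarith
      obtain ⟨t, htmem, hct, hst⟩ := exists_param T St hTS
      refine ⟨t, htmem, key r k c₁ R₁ c₂ R₂ a b c ⟨hr0, hr1⟩ hk hc₁ hR₁ hc₂ hR₂ ha hb hc
        s sθ t α hs hαform ?_ ?_⟩
      · rw [hct, ← hNdef]
        exact h1T
      · rw [hst, ← hNdef]
        exact hStb
    · -- the point 1
      have hα1 : α = 1 := h1
      refine ⟨0, ⟨le_refl 0, by linarith [Real.pi_pos]⟩,
        key r k c₁ R₁ c₂ R₂ a b c ⟨hr0, hr1⟩ hk hc₁ hR₁ hc₂ hR₂ ha hb hc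
        1 0 0 α (by norm_num) ?_ ?_ ?_⟩
      · rw [hα1]
        have h1' : ((1 + k * 1) / (1 + k) : ℝ) = 1 := by field_simp
        rw [h1']
        simp
      · rw [Real.cos_zero]
        ring
      · rw [Real.sin_zero]
        ring
  · -- reverse direction
    intro t htmem
    have hTle : Real.cos t ≤ 1 := Real.cos_le_one t
    have hTge : -1 ≤ Real.cos t := Real.neg_one_le_cos t
    have hdenpos' : 0 < ((1 - r) + k * (1 + r)) * ((1 + r) + k * (1 - r)) -
        2 * k * r ^ 2 * (1 - Real.cos t) := by
      have h2 : 2 * k * r ^ 2 * (1 - Real.cos t) ≤ 2 * k * r ^ 2 * 2 :=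
        mul_le_mul_of_nonneg_left (by linarith) (by positivity)
      have hid : ((1 - r) + k * (1 + r)) * ((1 + r) + k * (1 - r)) - 2 * k * r ^ 2 * 2 =
          (1 - r ^ 2) * (1 + k) ^ 2 := by ring
      have hpos2 : 0 < (1 - r ^ 2) * (1 + k) ^ 2 := mul_pos (by linarith) (by positivity)
      linarith
    obtain ⟨den, hden⟩ : ∃ den : ℝ, den = ((1 - r) + k * (1 + r)) * ((1 + r) + k * (1 - r)) -
        2 * k * r ^ 2 * (1 - Real.cos t) := ⟨_, rfl⟩
    have hdenpos : 0 < den := hden ▸ hdenpos'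
    obtain ⟨s, hsdef⟩ : ∃ s : ℝ, s = (((1 - r) + k * (1 + r)) * ((1 + r) + k * (1 - r)) * Real.cos t +
        2 * k * r ^ 2 * (1 - Real.cos t)) / den := ⟨_, rfl⟩
    have h1r2 : (0:ℝ) ≤ 1 - r ^ 2 := by linarith
    have h1ms : 1 - s = (1 - Real.cos t) * ((1 - r ^ 2) * (1 + k) ^ 2) / den := by
      rw [hsdef, hden]
      rw [eq_div_iff hdenpos'.ne', sub_mul, div_mul_cancel₀ _ hdenpos'.ne']
      ring
    have h1ps : 1 + s = ((1 - r) + k * (1 + r)) * ((1 + r) + k * (1 - r)) * (1 + Real.cos t) / den := by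
      rw [hsdef, hden]
      rw [eq_div_iff hdenpos'.ne', add_mul, div_mul_cancel₀ _ hdenpos'.ne']
      ring
    have hs1 : s ≤ 1 := by
      have h0 : 0 ≤ (1 - Real.cos t) * ((1 - r ^ 2) * (1 + k) ^ 2) / den :=
        div_nonneg (mul_nonneg (by linarith) (mul_nonneg h1r2 (sq_nonneg _))) hdenpos.le
      rw [← h1ms] at h0
      linarith
    have hsm1 : -1 ≤ s := by
      have h0 : 0 ≤ ((1 - r) + k * (1 + r)) * ((1 + r) + k * (1 - r)) * (1 + Real.cos t) / den :=
        div_nonneg (mul_nonneg (mul_pos hA hB).le (by linarith)) hdenpos.le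
      rw [← h1ps] at h0
      linarith
    have hs2le : s ^ 2 ≤ 1 := by
      have h6 : 0 ≤ (1 - s) * (1 + s) := mul_nonneg (by linarith) (by linarith)
      have h7 : (1 - s) * (1 + s) = 1 - s ^ 2 := by ring
      linarith
    obtain ⟨sθ, hsθdef⟩ : ∃ sθ : ℝ,
        sθ = if 0 ≤ Real.sin t then Real.sqrt (1 - s ^ 2) else -Real.sqrt (1 - s ^ 2) := ⟨_, rfl⟩
    have hsθ2 : sθ ^ 2 = 1 - s ^ 2 := by
      rw [hsθdef]
      split_ifs
      · exact Real.sq_sqrt (by linarith)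
      · rw [neg_sq]
        exact Real.sq_sqrt (by linarith)
    have hs : s ^ 2 + sθ ^ 2 = 1 := by linarith
    obtain ⟨α, hαdef⟩ : ∃ α : ℂ,
        α = (((1 + k * s) / (1 + k) : ℝ) : ℂ) + ((k * sθ / (1 + k) : ℝ) : ℂ) * Complex.I := ⟨_, rfl⟩
    have hare : α.re = (1 + k * s) / (1 + k) := by
      simp only [hαdef, Complex.add_re, Complex.ofReal_re, Complex.mul_re, Complex.I_re,
        Complex.ofReal_im, Complex.I_im, mul_zero, mul_one, zero_sub, sub_zero, add_zero, neg_zero]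
    have haim : α.im = k * sθ / (1 + k) := by
      simp only [hαdef, Complex.add_im, Complex.ofReal_im, Complex.mul_im, Complex.I_re,
        Complex.ofReal_re, Complex.I_im, mul_zero, mul_one, zero_add, add_zero, zero_mul]
    have hm : ‖α‖ ^ 2 = (1 + 2 * k * s + k ^ 2) / (1 + k) ^ 2 := by
      rw [Complex.sq_norm, Complex.normSq_apply, hare, haim]
      field_simp
      linear_combination k ^ 2 * hs
    have hNpos : 0 < (1 + k) ^ 2 - r ^ 2 * (1 + 2 * k * s + k ^ 2) := hNposgen s hs1
    have hmem : α ∈ horocycle k := by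
      by_cases hseq : s = 1
      · right
        have hsθ0 : sθ = 0 := by
          have h0 : sθ ^ 2 = 0 := by rw [hsθ2, hseq]; ring
          exact pow_eq_zero_iff (by norm_num) |>.mp h0
        show α = 1
        rw [hαdef, hseq, hsθ0]
        have h1' : ((1 + k * 1) / (1 + k) : ℝ) = 1 := by field_simp
        rw [h1']
        simp
      · left
        have hslt : s < 1 := lt_of_le_of_ne hs1 hseq
        have h1spos : 0 < 1 - s := by linarith
        have habslt : ‖α‖ < 1 := by
          have h2 : ‖α‖ ^ 2 < 1 := by
            rw [hm, div_lt_one (by positivity)]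
            have h3 : 2 * k * s < 2 * k * 1 := by
              apply mul_lt_mul_of_pos_left hslt (by positivity)
            have h4 : (1 + k) ^ 2 = 1 + 2 * (k * 1) + k ^ 2 := by ring
            linarith
          have h2' : ‖α‖ ^ 2 < 1 ^ 2 := by rw [one_pow]; exact h2
          exact lt_of_pow_lt_pow_left₀ 2 zero_le_one h2'
        refine ⟨habslt, ?_⟩
        have hsub : ‖α - 1‖ ^ 2 = 2 * k ^ 2 * (1 - s) / (1 + k) ^ 2 := by
          rw [Complex.sq_norm, Complex.normSq_apply, Complex.sub_re, Complex.sub_im,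
            Complex.one_re, Complex.one_im, hare, haim]
          field_simp
          linear_combination k ^ 2 * hs
        have h1msq : 1 - ‖α‖ ^ 2 = 2 * k * (1 - s) / (1 + k) ^ 2 := by
          rw [hm]
          field_simp
          ring
        have hYne : 2 * k * (1 - s) / (1 + k) ^ 2 ≠ 0 := by positivity
        rw [hsub, h1msq,
          show 2 * k ^ 2 * (1 - s) / (1 + k) ^ 2 = k * (2 * k * (1 - s) / (1 + k) ^ 2) by ring,
          mul_div_assoc, div_self hYne, mul_one]
    have hcos : (1 - Real.cos t) * ((1 + k) ^ 2 - r ^ 2 * (1 + 2 * k * s + k ^ 2)) =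
        ((1 - r) + k * (1 + r)) * ((1 + r) + k * (1 - r)) * (1 - s) := by
      have hsd : s * den = ((1 - r) + k * (1 + r)) * ((1 + r) + k * (1 - r)) * Real.cos t +
          2 * k * r ^ 2 * (1 - Real.cos t) := by
        rw [hsdef]; exact div_mul_cancel₀ _ hdenpos.ne'
      linear_combination hsd - s * hden
    have hplus : (1 + Real.cos t) * ((1 + k) ^ 2 - r ^ 2 * (1 + 2 * k * s + k ^ 2)) =
        (1 - r ^ 2) * (1 + k) ^ 2 * (1 + s) := by
      linear_combination -hcos
    have hsq : (Real.sin t * (b * ((1 + k) ^ 2 - r ^ 2 * (1 + 2 * k * s + k ^ 2)))) ^ 2 =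
        ((1 - r ^ 2) * (1 + k) * k * sθ) ^ 2 := by
      have hpyth := Real.sin_sq_add_cos_sq t
      calc (Real.sin t * (b * ((1 + k) ^ 2 - r ^ 2 * (1 + 2 * k * s + k ^ 2)))) ^ 2
          = (1 - Real.cos t ^ 2) * b ^ 2 * ((1 + k) ^ 2 - r ^ 2 * (1 + 2 * k * s + k ^ 2)) ^ 2 := by
            linear_combination (b ^ 2 * ((1 + k) ^ 2 - r ^ 2 * (1 + 2 * k * s + k ^ 2)) ^ 2) * hpyth
        _ = ((1 - Real.cos t) * ((1 + k) ^ 2 - r ^ 2 * (1 + 2 * k * s + k ^ 2))) *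
            ((1 + Real.cos t) * ((1 + k) ^ 2 - r ^ 2 * (1 + 2 * k * s + k ^ 2))) * b ^ 2 := by
            ring
        _ = (((1 - r) + k * (1 + r)) * ((1 + r) + k * (1 - r)) * (1 - s)) *
            ((1 - r ^ 2) * (1 + k) ^ 2 * (1 + s)) * b ^ 2 := by rw [hcos, hplus]
        _ = ((1 - r ^ 2) * (1 + k) * k * sθ) ^ 2 := by
            linear_combination ((1 - s ^ 2) * (1 - r ^ 2) * (1 + k) ^ 2) * hb2 -
              ((1 - r ^ 2) ^ 2 * (1 + k) ^ 2 * k ^ 2) * hsθ2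
    have hsin : Real.sin t * (b * ((1 + k) ^ 2 - r ^ 2 * (1 + 2 * k * s + k ^ 2))) =
        (1 - r ^ 2) * (1 + k) * k * sθ := by
      rcases le_or_gt 0 (Real.sin t) with hpos | hneg
      · have hsθnn : 0 ≤ sθ := by
          rw [hsθdef, if_pos hpos]
          exact Real.sqrt_nonneg _
        have hL : 0 ≤ Real.sin t * (b * ((1 + k) ^ 2 - r ^ 2 * (1 + 2 * k * s + k ^ 2))) :=
          mul_nonneg hpos (mul_nonneg hbpos.le hNpos.le)
        have hR : 0 ≤ (1 - r ^ 2) * (1 + k) * k * sθ := by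
          apply mul_nonneg _ hsθnn
          apply mul_nonneg (mul_nonneg h1r2 hk1.le) hk.le
        have h3 := congrArg Real.sqrt hsq
        rwa [Real.sqrt_sq hL, Real.sqrt_sq hR] at h3
      · have hsθnp : sθ ≤ 0 := by
          rw [hsθdef, if_neg (not_le.mpr hneg)]
          simp [Real.sqrt_nonneg]
        have hL : 0 ≤ -(Real.sin t * (b * ((1 + k) ^ 2 - r ^ 2 * (1 + 2 * k * s + k ^ 2)))) := by
          have h5 : 0 ≤ b * ((1 + k) ^ 2 - r ^ 2 * (1 + 2 * k * s + k ^ 2)) :=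
            mul_nonneg hbpos.le hNpos.le
          have h6 : 0 ≤ (-Real.sin t) * (b * ((1 + k) ^ 2 - r ^ 2 * (1 + 2 * k * s + k ^ 2))) :=
            mul_nonneg (by linarith) h5
          have h7 : -(Real.sin t * (b * ((1 + k) ^ 2 - r ^ 2 * (1 + 2 * k * s + k ^ 2)))) =
              (-Real.sin t) * (b * ((1 + k) ^ 2 - r ^ 2 * (1 + 2 * k * s + k ^ 2))) := by ring
          rw [h7]
          exact h6
        have hR : 0 ≤ -((1 - r ^ 2) * (1 + k) * k * sθ) := by
          have h4 : 0 ≤ (1 - r ^ 2) * (1 + k) * k := mul_nonneg (mul_nonneg h1r2 hk1.le) hk.le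
          have h6 : 0 ≤ (1 - r ^ 2) * (1 + k) * k * (-sθ) := mul_nonneg h4 (by linarith)
          have h7 : -((1 - r ^ 2) * (1 + k) * k * sθ) = (1 - r ^ 2) * (1 + k) * k * (-sθ) := by
            ring
          rw [h7]
          exact h6
        have hsq' : (-(Real.sin t * (b * ((1 + k) ^ 2 - r ^ 2 * (1 + 2 * k * s + k ^ 2))))) ^ 2 =
            (-((1 - r ^ 2) * (1 + k) * k * sθ)) ^ 2 := by
          rw [neg_sq, neg_sq]
          exact hsq
        have h3 := congrArg Real.sqrt hsq'
        rw [Real.sqrt_sq hL, Real.sqrt_sq hR] at h3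
        linarith
    exact ⟨α, hmem, key r k c₁ R₁ c₂ R₂ a b c ⟨hr0, hr1⟩ hk hc₁ hR₁ hc₂ hR₂ ha hb hc
      s sθ t α hs hαdef hcos hsin⟩
end

section
/- Fix r ∈ (0,1) and k > 0. Set c₁ = (1 − r)/((1 − r) + k(1 + r)), R₁ = k(1 + r)/((1 − r) + k(1 + r)), c₂ = (1 + r)/((1 + r) + k(1 − r)), R₂ = k(1 − r)/((1 + r) + k(1 − r)). Then the union ⋃_{α ∈ H(1,k)} D_ρ(α, r) of the pseudohyperbolic disks with centers on the horocycle H(1, k) has topological boundary equal to the union of the two circles { z ∈ ℂ : |z − c₁| = R₁ } ∪ { z ∈ ℂ : |z − c₂| = R₂ }. -/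
open Complex Metric Set Filter

lemma normSq_key (z α : ℂ) :
    normSq (1 - (starRingEnd ℂ) α * z) = normSq (z - α) + (1 - normSq z) * (1 - normSq α) := by
  simp [normSq_apply, mul_re, mul_im, sub_re, sub_im, one_re, one_im]
  ring

lemma harnack_id (z α : ℂ) :
    2 * ((z - α) * (starRingEnd ℂ) ((1 - z) * (1 - α))).re
      = (1 - normSq z) * normSq (α - 1) - (1 - normSq α) * normSq (z - 1) := by
  simp [normSq_apply, mul_re, mul_im, sub_re, sub_im, one_re, one_im]
  ring

lemma harnack_sq (z α : ℂ) :
    ((1 - normSq z) * normSq (α - 1) - (1 - normSq α) * normSq (z - 1))^2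
      ≤ 4 * normSq (z - α) * (normSq (z - 1) * normSq (α - 1)) := by
  have h1 := harnack_id z α
  set u := (z - α) * (starRingEnd ℂ) ((1 - z) * (1 - α)) with hu
  have h2 : u.re^2 + u.im^2 = normSq (z - α) * (normSq (z - 1) * normSq (α - 1)) := by
    have : normSq u = normSq (z - α) * (normSq (z-1) * normSq (α-1)) := by
      rw [hu, normSq_mul, normSq_conj, normSq_mul]
      rw [show (1:ℂ) - z = -(z-1) by ring, show (1:ℂ) - α = -(α-1) by ring, normSq_neg, normSq_neg]
    rw [← this]; simp [normSq_apply]; ring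
  rw [← h1]
  nlinarith [sq_nonneg u.im]

set_option maxHeartbeats 2000000 in
lemma union_eq (r k : ℝ) (hr0 : 0 < r) (hr1 : r < 1) (hk : 0 < k) :
    (⋃ α ∈ horocycle k, pseudohyperbolicDisk α r) =
      {z : ℂ | (1-r) * normSq (z-1) < k*(1+r)*(1 - normSq z) ∧
               k*(1-r)*(1 - normSq z) < (1+r) * normSq (z-1)} := by
  ext z
  simp only [Set.mem_iUnion, Set.mem_setOf_eq, exists_prop]
  constructor
  · rintro ⟨α, hα, habsz, hlt⟩
    have hp : 0 < 1 - normSq z := by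
      have := Complex.sq_norm z
      nlinarith [norm_nonneg z]
    have hzne : z ≠ 1 := by
      intro h; rw [h] at hp; simp [normSq_one] at hp
    have hA : 0 < normSq (z - 1) := normSq_pos.2 (sub_ne_zero.2 hzne)
    rcases hα with ⟨hα1, hα2⟩ | hα1
    · -- α on the proper horocycle
      have hq : 0 < 1 - normSq α := by
        have := Complex.sq_norm α
        nlinarith [norm_nonneg α]
      have hB : normSq (α - 1) = k * (1 - normSq α) := by
        have e1 := Complex.sq_norm (α - 1)
        have e2 := Complex.sq_norm α
        rw [div_eq_iff (by nlinarith : 1 - ‖α‖ ^ 2 ≠ 0)] at hα2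
        nlinarith [hα2]
      have hden : 0 < ‖1 - (starRingEnd ℂ) α * z‖ := by
        have h1 : ‖(starRingEnd ℂ) α * z‖ < 1 := by
          rw [norm_mul, Complex.norm_conj]
          nlinarith [norm_nonneg α, norm_nonneg z]
        apply norm_pos_iff.mpr
        intro h0
        have : (starRingEnd ℂ) α * z = 1 := by linear_combination -h0
        rw [this] at h1; simp at h1
      have hlt' : ‖z - α‖ < r * ‖1 - (starRingEnd ℂ) α * z‖ :=
        (div_lt_iff₀ hden).mp hlt
      have key : (1 - r^2) * normSq (z - α) < r^2 * ((1 - normSq z) * (1 - normSq α)) := by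
        have h2 : normSq (z - α) < r^2 * normSq (1 - (starRingEnd ℂ) α * z) := by
          have e1 := Complex.sq_norm (z - α)
          have e2 := Complex.sq_norm (1 - (starRingEnd ℂ) α * z)
          nlinarith [norm_nonneg (z - α), mul_pos hr0 hden]
        rw [normSq_key] at h2
        nlinarith
      have har := harnack_sq z α
      rw [hB] at har
      set A := normSq (z - 1)
      set p := 1 - normSq z
      set q := 1 - normSq α
      set N := normSq (z - α) with hNdef
      clear_value A p q N
      have h1r : (0:ℝ) ≤ 1 - r^2 := by nlinarith
      have step1 : q^2*((k*p-A)^2) ≤ 4*N*A*k*q := by nlinarith [har]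
      have s1 := mul_le_mul_of_nonneg_left step1 h1r
      have s2 := mul_lt_mul_of_pos_left key (show (0:ℝ) < 4*A*k*q by positivity)
      have step4 : (1-r^2)*((k*p-A)^2)*q^2 < (4*A*k*r^2*p)*q^2 := by nlinarith [s1, s2]
      have hmain : (1 - r^2) * (k*p - A)^2 < 4*A*k*r^2*p :=
        lt_of_mul_lt_mul_right step4 (by positivity)
      constructor
      · nlinarith [hmain, mul_pos hr0 hA, mul_pos hr0 (mul_pos hk hp)]
      · nlinarith [hmain, mul_pos hr0 hA, mul_pos hr0 (mul_pos hk hp)]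
    · -- α = 1 : impossible
      exfalso
      simp only [Set.mem_singleton_iff] at hα1
      subst hα1
      rw [show (starRingEnd ℂ) 1 = 1 by simp, one_mul] at hlt
      rw [show (1:ℂ) - z = -(z - 1) by ring, norm_neg] at hlt
      have : ‖z - 1‖ ≠ 0 := norm_ne_zero_iff.mpr (sub_ne_zero.2 hzne)
      rw [div_self this] at hlt
      linarith
  · rintro ⟨h1, h2⟩
    set A := normSq (z - 1) with hAdef
    set p := 1 - normSq z with hpdef
    have hp : 0 < p := by
      nlinarith [normSq_nonneg (z - 1), mul_pos hk (show (0:ℝ) < 1 + r by linarith)]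
    have hA : 0 < A := by nlinarith [mul_pos hk (show (0:ℝ) < 1 - r by linarith)]
    have habsz : ‖z‖ < 1 := by
      have := Complex.sq_norm z
      nlinarith [norm_nonneg z]
    set P : ℂ := (((1-k)*A : ℝ) : ℂ) + (((2*k*z.im : ℝ)) : ℂ) * I with hPdef
    set Q : ℂ := (((1+k)*A : ℝ) : ℂ) + (((2*k*z.im : ℝ)) : ℂ) * I with hQdef
    have hQre : Q.re = (1+k)*A := by simp [hQdef]
    have hQ0 : Q ≠ 0 := by
      intro h
      have := congrArg Complex.re h
      rw [hQre] at this
      simp at this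
      rcases this with h' | h' <;> nlinarith
    have hNQ : normSq Q = (1+k)^2*A^2 + 4*k^2*z.im^2 := by
      simp [hQdef, normSq_apply]; ring
    have hNP : normSq P = (1-k)^2*A^2 + 4*k^2*z.im^2 := by
      simp [hPdef, normSq_apply]; ring
    have hNQpos : 0 < normSq Q := normSq_pos.2 hQ0
    clear_value P Q A p
    refine ⟨P/Q, Or.inl ⟨?_, ?_⟩, habsz, ?_⟩
    · -- abs (P/Q) < 1
      have h1 : normSq (P/Q) < 1 := by
        rw [normSq_div, div_lt_one hNQpos, hNQ, hNP]
        nlinarith [mul_pos hk (mul_pos hA hA)]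
      have h2 : ‖P/Q‖ ^ 2 < 1 ^ 2 := by
        rw [Complex.sq_norm]; simpa using h1
      exact lt_of_pow_lt_pow_left₀ 2 zero_le_one h2
    · -- horocycle value
      have hq : 1 - normSq (P/Q) = 4*k*A^2 / normSq Q := by
        rw [normSq_div, hNQ, hNP]
        field_simp
        ring
      have hsub : P/Q - 1 = ((-2*k*A : ℝ) : ℂ) / Q := by
        field_simp
        rw [hPdef, hQdef]
        push_cast
        ring
      have hB : normSq (P/Q - 1) = 4*k^2*A^2 / normSq Q := by
        rw [hsub, normSq_div, normSq_ofReal]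
        congr 1
        ring
      rw [Complex.sq_norm, Complex.sq_norm, hB, hq]
      rw [div_div_div_cancel_right₀]
      · rw [div_eq_iff (by positivity : (4*k*A^2 : ℝ) ≠ 0)]; ring
      · positivity
    · -- the pseudohyperbolic distance condition
      have hzQP : normSq (z * Q - P) = A * (k*p - A)^2 := by
        rw [hPdef, hQdef, hAdef, hpdef]
        simp [normSq_apply, mul_re, mul_im, sub_re, sub_im, one_re, one_im]
        ring
      have hzα : z - P/Q = (z*Q - P)/Q := by field_simp
      have hNzα : normSq (z - P/Q) = A * (k*p - A)^2 / normSq Q := by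
        rw [hzα, normSq_div, hzQP]
      have hq : 1 - normSq (P/Q) = 4*k*A^2 / normSq Q := by
        rw [normSq_div, hNQ, hNP]
        field_simp
        ring
      have hscalar : (1 - r^2) * (k*p - A)^2 < 4*r^2*k*p*A := by
        have hf := mul_pos (show 0 < (1+r)*A - k*(1-r)*p by linarith)
          (show 0 < k*(1+r)*p - (1-r)*A by linarith)
        nlinarith [hf]
      have key : (1 - r^2) * normSq (z - P/Q) < r^2 * (p * (1 - normSq (P/Q))) := by
        rw [hNzα, hq]
        have expand : (1-r^2) * (A*(k*p-A)^2/normSq Q) = ((1-r^2)*(A*(k*p-A)^2))/normSq Q := by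
          ring
        have expand2 : r^2 * (p*(4*k*A^2/normSq Q)) = (r^2*(p*(4*k*A^2)))/normSq Q := by
          ring
        rw [expand, expand2, div_lt_div_iff₀ hNQpos hNQpos]
        have hXY : (1-r^2)*(A*(k*p-A)^2) < r^2*(p*(4*k*A^2)) := by
          nlinarith [mul_lt_mul_of_pos_left hscalar hA]
        nlinarith [mul_lt_mul_of_pos_right hXY hNQpos]
      have hdenpos : 0 < normSq (1 - (starRingEnd ℂ) (P/Q) * z) := by
        rw [normSq_key]
        have hqpos : 0 < 1 - normSq (P/Q) := by
          rw [hq]; positivity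
        nlinarith [normSq_nonneg (z - P/Q), mul_pos hp hqpos]
      have habsden : 0 < ‖1 - (starRingEnd ℂ) (P/Q) * z‖ := by
        rw [← Complex.sq_norm] at hdenpos
        nlinarith [norm_nonneg (1 - (starRingEnd ℂ) (P/Q) * z)]
      rw [div_lt_iff₀ habsden]
      have hsq : normSq (z - P/Q) < r^2 * normSq (1 - (starRingEnd ℂ) (P/Q) * z) := by
        rw [normSq_key, ← hpdef]
        nlinarith [key, normSq_nonneg (z - P/Q)]
      have e1 := Complex.sq_norm (z - P/Q)
      have e2 := Complex.sq_norm (1 - (starRingEnd ℂ) (P/Q) * z)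
      nlinarith [norm_nonneg (z - P/Q), mul_pos hr0 habsden]


lemma dist_sq_coord (z : ℂ) (c : ℝ) : (dist z (c:ℂ))^2 = (z.re - c)^2 + z.im^2 := by
  rw [Complex.dist_eq, Complex.sq_norm]
  simp [normSq_apply]
  ring

lemma normSq_sub_one_coord (w : ℂ) : normSq (w - 1) = (w.re - 1)^2 + w.im^2 := by
  simp [normSq_apply]
  ring

set_option maxHeartbeats 1000000 in
lemma frontier_eqn (c₁ R₁ c₂ R₂ : ℝ) (hR₁ : 0 < R₁) (hR₂ : 0 < R₂)
    (hc : c₁ < c₂) (h1 : c₁ + R₁ = 1) (h2 : c₂ + R₂ = 1) :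
    frontier (ball ((c₁:ℝ) : ℂ) R₁ ∩ (closedBall ((c₂:ℝ):ℂ) R₂)ᶜ) =
      sphere ((c₁:ℝ):ℂ) R₁ ∪ sphere ((c₂:ℝ):ℂ) R₂ := by
  set S := ball ((c₁:ℝ):ℂ) R₁ ∩ (closedBall ((c₂:ℝ):ℂ) R₂)ᶜ with hS
  have hopen : IsOpen S := isOpen_ball.inter Metric.isClosed_closedBall.isOpen_compl
  -- points of sphere 2 other than 1 are in the closure
  have hsub2 : ∀ w : ℂ, w ∈ sphere ((c₂:ℝ):ℂ) R₂ → w ≠ 1 → w ∈ closure S := by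
    intro w hw hw1
    have hwdist : dist w ((c₂:ℝ):ℂ) = R₂ := hw
    have e2 : (w.re - c₂)^2 + w.im^2 = R₂^2 := by
      rw [← dist_sq_coord, hwdist]
    have hpos : 0 < (w.re - 1)^2 + w.im^2 := by
      rw [← normSq_sub_one_coord]
      exact normSq_pos.2 (sub_ne_zero.2 hw1)
    have hx : w.re < 1 := by nlinarith
    have hball : dist w ((c₁:ℝ):ℂ) < R₁ := by
      have hd2 : (dist w ((c₁:ℝ):ℂ))^2 < R₁^2 := by
        rw [dist_sq_coord]
        nlinarith
      exact lt_of_pow_lt_pow_left₀ 2 hR₁.le hd2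
    have hf : Tendsto (fun t : ℝ => ((c₂:ℝ):ℂ) + t • (w - ((c₂:ℝ):ℂ)))
        (nhdsWithin 1 (Set.Ioi 1)) (nhds w) := by
      have hc : Continuous (fun t : ℝ => ((c₂:ℝ):ℂ) + t • (w - ((c₂:ℝ):ℂ))) := by
        continuity
      have := (hc.tendsto 1).mono_left (nhdsWithin_le_nhds (s := Set.Ioi 1))
      simpa using this
    apply mem_closure_of_tendsto hf
    have hev1 : ∀ᶠ t : ℝ in nhdsWithin 1 (Set.Ioi 1),
        (fun t : ℝ => ((c₂:ℝ):ℂ) + t • (w - ((c₂:ℝ):ℂ))) t ∈ ball ((c₁:ℝ):ℂ) R₁ :=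
      hf.eventually_mem (isOpen_ball.mem_nhds hball)
    have hev2 : ∀ᶠ t : ℝ in nhdsWithin 1 (Set.Ioi 1),
        (fun t : ℝ => ((c₂:ℝ):ℂ) + t • (w - ((c₂:ℝ):ℂ))) t ∈ (closedBall ((c₂:ℝ):ℂ) R₂)ᶜ := by
      filter_upwards [self_mem_nhdsWithin] with t ht
      simp only [Set.mem_compl_iff, mem_closedBall, not_le]
      have : dist (((c₂:ℝ):ℂ) + t • (w - ((c₂:ℝ):ℂ))) ((c₂:ℝ):ℂ) = |t| * R₂ := by
        rw [dist_eq_norm]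
        simp only [add_sub_cancel_left]
        rw [norm_smul, Real.norm_eq_abs, ← dist_eq_norm, hwdist]
      rw [this]
      have ht1 : (1:ℝ) < t := ht
      have : |t| = t := abs_of_pos (by linarith)
      rw [this]
      nlinarith
    filter_upwards [hev1, hev2] with t h1 h2 using ⟨h1, h2⟩
  -- points of sphere 1 other than 1 are in the closure
  have hsub1 : ∀ w : ℂ, w ∈ sphere ((c₁:ℝ):ℂ) R₁ → w ≠ 1 → w ∈ closure S := by
    intro w hw hw1
    have hwdist : dist w ((c₁:ℝ):ℂ) = R₁ := hw
    have e1 : (w.re - c₁)^2 + w.im^2 = R₁^2 := by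
      rw [← dist_sq_coord, hwdist]
    have hpos : 0 < (w.re - 1)^2 + w.im^2 := by
      rw [← normSq_sub_one_coord]
      exact normSq_pos.2 (sub_ne_zero.2 hw1)
    have hx : w.re < 1 := by nlinarith
    have hout : R₂ < dist w ((c₂:ℝ):ℂ) := by
      have hd2 : R₂^2 < (dist w ((c₂:ℝ):ℂ))^2 := by
        rw [dist_sq_coord]
        nlinarith
      nlinarith [dist_nonneg (x := w) (y := ((c₂:ℝ):ℂ))]
    have hf : Tendsto (fun t : ℝ => ((c₁:ℝ):ℂ) + t • (w - ((c₁:ℝ):ℂ)))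
        (nhdsWithin 1 (Set.Iio 1)) (nhds w) := by
      have hc : Continuous (fun t : ℝ => ((c₁:ℝ):ℂ) + t • (w - ((c₁:ℝ):ℂ))) := by
        continuity
      have := (hc.tendsto 1).mono_left (nhdsWithin_le_nhds (s := Set.Iio 1))
      simpa using this
    apply mem_closure_of_tendsto hf
    have hev1 : ∀ᶠ t : ℝ in nhdsWithin 1 (Set.Iio 1),
        (fun t : ℝ => ((c₁:ℝ):ℂ) + t • (w - ((c₁:ℝ):ℂ))) t ∈ (closedBall ((c₂:ℝ):ℂ) R₂)ᶜ :=
      hf.eventually_mem (Metric.isClosed_closedBall.isOpen_compl.mem_nhds (by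
        simp only [Set.mem_compl_iff, mem_closedBall, not_le]; exact hout))
    have hev2 : ∀ᶠ t : ℝ in nhdsWithin 1 (Set.Iio 1),
        (fun t : ℝ => ((c₁:ℝ):ℂ) + t • (w - ((c₁:ℝ):ℂ))) t ∈ ball ((c₁:ℝ):ℂ) R₁ := by
      filter_upwards [Ioo_mem_nhdsLT_of_mem (show (1:ℝ) ∈ Set.Ioc 0 1 by constructor <;> norm_num)]
        with t ht
      simp only [mem_ball]
      have : dist (((c₁:ℝ):ℂ) + t • (w - ((c₁:ℝ):ℂ))) ((c₁:ℝ):ℂ) = |t| * R₁ := by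
        rw [dist_eq_norm]
        simp only [add_sub_cancel_left]
        rw [norm_smul, Real.norm_eq_abs, ← dist_eq_norm, hwdist]
      rw [this, abs_of_pos ht.1]
      nlinarith [ht.2]
    filter_upwards [hev1, hev2] with t h1 h2 using ⟨h2, h1⟩
  -- the tangency point 1 is in the closure
  have hone : (1:ℂ) ∈ closure S := by
    have hg : Tendsto (fun n : ℕ => ((c₂:ℝ):ℂ) + (R₂:ℂ) * Complex.exp ((1/((n:ℝ)+1) : ℝ) * I))
        atTop (nhds 1) := by
      have hcont : Continuous (fun x : ℝ => ((c₂:ℝ):ℂ) + (R₂:ℂ) * Complex.exp ((x:ℂ) * I)) := by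
        continuity
      have h0 : ((c₂:ℝ):ℂ) + (R₂:ℂ) * Complex.exp (((0:ℝ):ℂ) * I) = 1 := by
        rw [Complex.ofReal_zero, zero_mul, Complex.exp_zero, mul_one, ← Complex.ofReal_add, h2,
          Complex.ofReal_one]
      have := (hcont.tendsto 0).comp tendsto_one_div_add_atTop_nhds_zero_nat
      simp only [Function.comp_def] at this
      rw [h0] at this
      exact this
    have hmem : ∀ n : ℕ, ((c₂:ℝ):ℂ) + (R₂:ℂ) * Complex.exp ((1/((n:ℝ)+1) : ℝ) * I) ∈ closure S := by
      intro n
      apply hsub2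
      · simp only [mem_sphere_iff_norm]
        rw [add_sub_cancel_left]
        rw [norm_mul]
        have : ‖Complex.exp (((1/((n:ℝ)+1) : ℝ) : ℂ) * I)‖ = 1 := by
          exact_mod_cast Complex.norm_exp_ofReal_mul_I (1/((n:ℝ)+1))
        rw [this, mul_one, Complex.norm_real, Real.norm_eq_abs, abs_of_pos hR₂]
      · intro hcontra
        have him := congrArg Complex.im hcontra
        simp only [Complex.add_im, Complex.ofReal_im, Complex.mul_im, Complex.ofReal_re,
          Complex.one_im] at him
        have hsin : (Complex.exp (((1/((n:ℝ)+1) : ℝ) : ℂ) * I)).im = Real.sin (1/((n:ℝ)+1)) :=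
          Complex.exp_ofReal_mul_I_im _
        have hnpos : (0:ℝ) < 1/((n:ℝ)+1) := by positivity
        have hlt : (1:ℝ)/((n:ℝ)+1) ≤ 1 := by
          rw [div_le_one (by positivity)]
          simp
        have hsinpos : 0 < Real.sin (1/((n:ℝ)+1)) :=
          Real.sin_pos_of_pos_of_lt_pi hnpos (by nlinarith [Real.pi_gt_three])
        rw [hsin] at him
        nlinarith
    have := mem_closure_of_tendsto hg (Filter.Eventually.of_forall hmem)
    rwa [closure_closure] at this
  -- main argument
  apply Set.Subset.antisymm
  · intro z hz
    have := frontier_inter_subset (ball ((c₁:ℝ):ℂ) R₁) ((closedBall ((c₂:ℝ):ℂ) R₂)ᶜ) hz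
    rcases this with ⟨h, _⟩ | ⟨_, h⟩
    · left; rwa [frontier_ball _ hR₁.ne'] at h
    · right; rwa [frontier_compl, frontier_closedBall _ hR₂.ne'] at h
  · intro z hz
    rw [frontier, hopen.interior_eq]
    constructor
    · by_cases hz1 : z = 1
      · rw [hz1]; exact hone
      · rcases hz with hz | hz
        · exact hsub1 z hz hz1
        · exact hsub2 z hz hz1
    · rcases hz with hz | hz
      · intro hmem
        have : dist z ((c₁:ℝ):ℂ) < R₁ := hmem.1
        have heq : dist z ((c₁:ℝ):ℂ) = R₁ := hz
        linarith [heq ▸ this]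
      · intro hmem
        have : ¬ dist z ((c₂:ℝ):ℂ) ≤ R₂ := hmem.2
        have heq : dist z ((c₂:ℝ):ℂ) = R₂ := hz
        exact this (le_of_eq heq)


lemma normSq_sub_real (z : ℂ) (c : ℝ) : normSq (z - (c:ℂ)) = (z.re - c)^2 + z.im^2 := by
  simp [normSq_apply]
  ring

lemma circle_lt_iff (k u v : ℝ) (hu : 0 < u) (hv : 0 < v) (hk : 0 < k) (z : ℂ) :
    ‖z - ((u/(u + k*v) : ℝ) : ℂ)‖ < k*v/(u + k*v) ↔
      u * normSq (z-1) < k * v * (1 - normSq z) := by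
  have hD : 0 < u + k*v := by positivity
  have hN := normSq_sub_real z (u/(u + k*v))
  have hA : normSq (z - 1) = (z.re - 1)^2 + z.im^2 := by
    simp [normSq_apply]; ring
  have hz : normSq z = z.re^2 + z.im^2 := by simp [normSq_apply]; ring
  have keyid : ((z.re - u/(u + k*v))^2 + z.im^2 - (k*v/(u + k*v))^2) * (u + k*v)
      = u*((z.re - 1)^2 + z.im^2) - k*v*(1 - (z.re^2 + z.im^2)) := by
    field_simp
    ring
  constructor
  · intro h
    have h2 : normSq (z - ((u/(u + k*v) : ℝ) : ℂ)) < (k*v/(u + k*v))^2 := by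
      rw [← Complex.sq_norm]
      nlinarith [norm_nonneg (z - ((u/(u + k*v) : ℝ) : ℂ)), div_pos (mul_pos hk hv) hD]
    rw [hN] at h2
    rw [hA, hz]
    nlinarith [keyid]
  · intro h
    rw [hA, hz] at h
    have h2 : normSq (z - ((u/(u + k*v) : ℝ) : ℂ)) < (k*v/(u + k*v))^2 := by
      rw [hN]
      nlinarith [keyid]
    rw [← Complex.sq_norm] at h2
    exact lt_of_pow_lt_pow_left₀ 2 (by positivity) h2
lemma circle_le_iff (k u v : ℝ) (hu : 0 < u) (hv : 0 < v) (hk : 0 < k) (z : ℂ) :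
    ‖z - ((u/(u + k*v) : ℝ) : ℂ)‖ ≤ k*v/(u + k*v) ↔
      u * normSq (z-1) ≤ k * v * (1 - normSq z) := by
  have hD : 0 < u + k*v := by positivity
  have hN := normSq_sub_real z (u/(u + k*v))
  have hA : normSq (z - 1) = (z.re - 1)^2 + z.im^2 := by
    simp [normSq_apply]; ring
  have hz : normSq z = z.re^2 + z.im^2 := by simp [normSq_apply]; ring
  have keyid : ((z.re - u/(u + k*v))^2 + z.im^2 - (k*v/(u + k*v))^2) * (u + k*v)
      = u*((z.re - 1)^2 + z.im^2) - k*v*(1 - (z.re^2 + z.im^2)) := by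
    field_simp
    ring
  constructor
  · intro h
    have h2 : normSq (z - ((u/(u + k*v) : ℝ) : ℂ)) ≤ (k*v/(u + k*v))^2 := by
      rw [← Complex.sq_norm]
      nlinarith [norm_nonneg (z - ((u/(u + k*v) : ℝ) : ℂ)), div_pos (mul_pos hk hv) hD]
    rw [hN] at h2
    rw [hA, hz]
    nlinarith [keyid]
  · intro h
    rw [hA, hz] at h
    have h2 : normSq (z - ((u/(u + k*v) : ℝ) : ℂ)) ≤ (k*v/(u + k*v))^2 := by
      rw [hN]
      nlinarith [keyid]
    rw [← Complex.sq_norm] at h2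
    have := norm_nonneg (z - ((u/(u + k*v) : ℝ) : ℂ))
    nlinarith [div_pos (mul_pos hk hv) hD]

set_option maxHeartbeats 1000000 in
theorem boundary_pseudohyperbolic_disks_on_horocycle (r k c₁ R₁ c₂ R₂ : ℝ)
    (hr : r ∈ Set.Ioo (0 : ℝ) 1) (hk : 0 < k)
    (hc₁ : c₁ = (1 - r) / ((1 - r) + k * (1 + r)))
    (hR₁ : R₁ = k * (1 + r) / ((1 - r) + k * (1 + r)))
    (hc₂ : c₂ = (1 + r) / ((1 + r) + k * (1 - r)))
    (hR₂ : R₂ = k * (1 - r) / ((1 + r) + k * (1 - r))) :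
    frontier (⋃ α ∈ horocycle k, pseudohyperbolicDisk α r) =
      {z : ℂ | ‖z - (c₁ : ℂ)‖ = R₁} ∪
        {z : ℂ | ‖z - (c₂ : ℂ)‖ = R₂} := by
  obtain ⟨hr0, hr1⟩ := hr
  have hu : (0:ℝ) < 1 - r := by linarith
  have hv : (0:ℝ) < 1 + r := by linarith
  have hD₁ : (0:ℝ) < (1 - r) + k * (1 + r) := by positivity
  have hD₂ : (0:ℝ) < (1 + r) + k * (1 - r) := by positivity
  have hR₁pos : 0 < R₁ := by rw [hR₁]; positivity
  have hR₂pos : 0 < R₂ := by rw [hR₂]; positivity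
  have hclt : c₁ < c₂ := by
    rw [hc₁, hc₂, div_lt_div_iff₀ hD₁ hD₂]
    nlinarith
  have hs1 : c₁ + R₁ = 1 := by
    rw [hc₁, hR₁, ← add_div, div_self hD₁.ne']
  have hs2 : c₂ + R₂ = 1 := by
    rw [hc₂, hR₂, ← add_div, div_self hD₂.ne']
  have hset : {z : ℂ | (1-r) * normSq (z-1) < k*(1+r)*(1 - normSq z) ∧
               k*(1-r)*(1 - normSq z) < (1+r) * normSq (z-1)}
      = ball ((c₁:ℝ):ℂ) R₁ ∩ (closedBall ((c₂:ℝ):ℂ) R₂)ᶜ := by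
    ext z
    simp only [Set.mem_setOf_eq, Set.mem_inter_iff, Metric.mem_ball, Set.mem_compl_iff,
      Metric.mem_closedBall, not_le, Complex.dist_eq]
    rw [hc₁, hR₁, hc₂, hR₂]
    rw [circle_lt_iff k (1-r) (1+r) hu hv hk z]
    constructor
    · rintro ⟨ha, hb⟩
      refine ⟨ha, ?_⟩
      by_contra hcon
      push_neg at hcon
      have := (circle_le_iff k (1+r) (1-r) hv hu hk z).mp hcon
      linarith
    · rintro ⟨ha, hb⟩
      refine ⟨ha, ?_⟩
      by_contra hcon
      push_neg at hcon
      have := (circle_le_iff k (1+r) (1-r) hv hu hk z).mpr (by linarith)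
      linarith
  rw [union_eq r k hr0 hr1 hk, hset, frontier_eqn c₁ R₁ c₂ R₂ hR₁pos hR₂pos hclt hs1 hs2]
  ext z
  simp [Complex.dist_eq]
end
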